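/- arXiv:2102.01716 — 8 statements merged into one kernel-verified Lean document; each statement's English description precedes it below -/
import Mathlib

section
/- Existence of dual optimizers: assume Φ : 𝒳 × 𝒴 → ℝ is upper semicontinuous, bounded from above by ā(x) + b̄(y) with ā P-integrable and b̄ Q-integrable, and bounded from below by a̲(x) + b̲(y) with a̲ P-integrable and b̲ Q-integrable. Then there exists a pair (φ, ψ) of measurable integrable functions with φ(x) + ψ(y) ≥ Φ(x,y) for P-almost every x and Q-almost every y, attaining the infimum of E_P[φ(X)] + E_Q[ψ(Y)] over all such feasible pairs. -/
open MeasureTheory Filter Topology Finset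
open scoped ENNReal

/-!
Call `(φ, ψ)` feasible when `Φ (x, y) ≤ φ x + ψ y` for `P`-a.e. `x` and then `Q`-a.e. `y`, and
let `I` be the infimum of the costs `∫ φ dP + ∫ ψ dQ`. Feasible pairs are closed under
`(φ ⊓ φ', ψ ⊔ ψ')` and `(φ ⊔ φ', ψ ⊓ ψ')`; since `min + max = sum`, the costs of these two
pairs add up to the costs of the original ones, so the excess over `I` of the first is at most
the sum of the two excesses.

Take feasible `(φₖ, ψₖ)` of cost `≤ I + 2⁻ᵏ`, shifted by constants so that all `φₖ`, `ψₖ` lie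
above fixed integrable functions (this uses the lower bound on `Φ`). For each `m` the running
pairs `(φₘ ⊓ ⋯ ⊓ φₘ₊ₙ, ψₘ ⊔ ⋯ ⊔ ψₘ₊ₙ)` are feasible, of cost `≤ I + 2 · 2⁻ᵐ` and monotone in `n`;
by monotone convergence they converge a.e. to a feasible pair `(hₘ, Gₘ)` with the same bound.
As `m` grows, `hₘ` increases and `Gₘ` decreases, and a second monotone limit is a feasible pair
of cost `≤ I`.
-/

section PartialInfs

variable {α : Type*} [SemilatticeInf α]

def partialInfs (f : ℕ → α) : ℕ → α
  | 0 => f 0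
  | n + 1 => partialInfs f n ⊓ f (n + 1)

@[simp]
theorem partialInfs_zero (f : ℕ → α) : partialInfs f 0 = f 0 := rfl

theorem partialInfs_add_one (f : ℕ → α) (n : ℕ) :
    partialInfs f (n + 1) = partialInfs f n ⊓ f (n + 1) := rfl

theorem partialInfs_antitone (f : ℕ → α) : Antitone (partialInfs f) :=
  antitone_nat_of_succ_le fun _ ↦ inf_le_left

theorem partialInfs_le (f : ℕ → α) {i n : ℕ} (h : i ≤ n) : partialInfs f n ≤ f i := by
  induction n with
  | zero => obtain rfl := Nat.le_zero.1 h; exact le_rfl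
  | succ n ih =>
    rcases Nat.of_le_succ h with h | rfl
    · exact inf_le_left.trans (ih h)
    · exact inf_le_right

theorem le_partialInfs {f : ℕ → α} {a : α} {n : ℕ} (h : ∀ i ≤ n, a ≤ f i) :
    a ≤ partialInfs f n := by
  induction n with
  | zero => exact h 0 le_rfl
  | succ n ih => exact le_inf (ih fun i hi ↦ h i (hi.trans n.le_succ)) (h _ le_rfl)

theorem partialInfs_tail_add_one_le (f : ℕ → α) (m n : ℕ) :
    partialInfs (fun k ↦ f (k + m)) (n + 1) ≤ partialInfs (fun k ↦ f (k + (m + 1))) n :=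
  le_partialInfs fun _ hi ↦
    (partialInfs_le _ (Nat.succ_le_succ hi)).trans_eq (congrArg f (by omega))

end PartialInfs

theorem partialSups_tail_le_add_one {α : Type*} [SemilatticeSup α] (f : ℕ → α) (m n : ℕ) :
    partialSups (fun k ↦ f (k + (m + 1))) n ≤ partialSups (fun k ↦ f (k + m)) (n + 1) :=
  partialSups_le _ _ _ fun _ hi ↦
    (le_partialSups_of_le _ (Nat.succ_le_succ hi)).trans_eq' (congrArg f (by omega))

theorem sum_range_one_half_pow_add_le (m n : ℕ) :
    ∑ k ∈ range n, (1 / 2 : ℝ) ^ (k + m) ≤ 2 * (1 / 2) ^ m := by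
  simp_rw [pow_add, ← sum_mul]
  exact mul_le_mul_of_nonneg_right (sum_geometric_two_le n) (by positivity)

theorem le_inf_add_sup {c a a' b b' : ℝ} (h : c ≤ a + b) (h' : c ≤ a' + b') :
    c ≤ a ⊓ a' + b ⊔ b' := by
  rcases le_total a a' with ha | ha
  · rw [inf_of_le_left ha]; linarith [le_sup_left (a := b) (b := b')]
  · rw [inf_of_le_right ha]; linarith [le_sup_right (a := b) (b := b')]

section Integral

variable {α : Type*} [MeasurableSpace α] {μ : Measure α}

theorem exists_ae_tendsto_of_monotone_of_integral_le {f : ℕ → α → ℝ} {C : ℝ}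
    (hf_meas : ∀ n, Measurable (f n)) (hf : ∀ n, Integrable (f n) μ)
    (h_mono : ∀ᵐ x ∂μ, Monotone fun n ↦ f n x)
    (h_le : ∀ n, ∫ x, f n x ∂μ ≤ C) :
    ∃ F : α → ℝ, Measurable F ∧ Integrable F μ ∧
      (∀ᵐ x ∂μ, Tendsto (fun n ↦ f n x) atTop (𝓝 (F x))) ∧
      Tendsto (fun n ↦ ∫ x, f n x ∂μ) atTop (𝓝 (∫ x, F x ∂μ)) := by
  set g : ℕ → α → ℝ≥0∞ := fun n x ↦ ENNReal.ofReal (f n x - f 0 x)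
  have hg_meas : ∀ n, Measurable (g n) := fun n ↦ ((hf_meas n).sub (hf_meas 0)).ennreal_ofReal
  have hg_mono : ∀ᵐ x ∂μ, Monotone fun n ↦ g n x := by
    filter_upwards [h_mono] with x hx n m hnm
    exact ENNReal.ofReal_le_ofReal (sub_le_sub_right (hx hnm) _)
  have hG_meas : Measurable fun x ↦ ⨆ n, g n x := .iSup hg_meas
  have hG_lint : ∫⁻ x, ⨆ n, g n x ∂μ ≠ ⊤ := by
    rw [lintegral_iSup' (fun n ↦ (hg_meas n).aemeasurable) hg_mono]
    refine ne_top_of_le_ne_top (ENNReal.ofReal_ne_top (r := C - ∫ x, f 0 x ∂μ)) (iSup_le fun n ↦ ?_)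
    calc ∫⁻ x, g n x ∂μ = ENNReal.ofReal (∫ x, f n x - f 0 x ∂μ) :=
          (ofReal_integral_eq_lintegral_ofReal ((hf n).sub (hf 0))
            (h_mono.mono fun x hx ↦ sub_nonneg.2 (hx (Nat.zero_le n)))).symm
      _ ≤ _ := ENNReal.ofReal_le_ofReal (by rw [integral_sub (hf n) (hf 0)]; linarith [h_le n])
  have hF : Integrable (fun x ↦ f 0 x + (⨆ n, g n x).toReal) μ :=
    (hf 0).add (integrable_toReal_of_lintegral_ne_top hG_meas.aemeasurable hG_lint)
  have h_tendsto : ∀ᵐ x ∂μ, Tendsto (fun n ↦ f n x) atTop (𝓝 (f 0 x + (⨆ n, g n x).toReal)) := by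
    filter_upwards [h_mono, hg_mono, ae_lt_top hG_meas hG_lint] with x hx hgx hGx
    refine (((ENNReal.tendsto_toReal hGx.ne).comp (tendsto_atTop_iSup hgx)).const_add
      (f 0 x)).congr fun n ↦ ?_
    simp [g, ENNReal.toReal_ofReal (sub_nonneg.2 (hx (Nat.zero_le n)))]
  exact ⟨_, (hf_meas 0).add hG_meas.ennreal_toReal, hF, h_tendsto,
    integral_tendsto_of_tendsto_of_monotone hf hF h_mono h_tendsto⟩

theorem exists_ae_tendsto_of_antitone_of_le_integral {f : ℕ → α → ℝ} {C : ℝ}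
    (hf_meas : ∀ n, Measurable (f n)) (hf : ∀ n, Integrable (f n) μ)
    (h_anti : ∀ᵐ x ∂μ, Antitone fun n ↦ f n x)
    (h_le : ∀ n, C ≤ ∫ x, f n x ∂μ) :
    ∃ F : α → ℝ, Measurable F ∧ Integrable F μ ∧
      (∀ᵐ x ∂μ, Tendsto (fun n ↦ f n x) atTop (𝓝 (F x))) ∧
      Tendsto (fun n ↦ ∫ x, f n x ∂μ) atTop (𝓝 (∫ x, F x ∂μ)) := by
  obtain ⟨F, hF_meas, hF, h_tendsto, h_int⟩ :=
    exists_ae_tendsto_of_monotone_of_integral_le (f := fun n x ↦ -f n x) (C := -C)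
      (fun n ↦ (hf_meas n).neg) (fun n ↦ (hf n).neg)
      (h_anti.mono fun x hx n m hnm ↦ neg_le_neg (hx hnm))
      (fun n ↦ by rw [integral_neg]; linarith [h_le n])
  refine ⟨-F, hF_meas.neg, hF.neg, h_tendsto.mono fun x hx ↦ by simpa using hx.neg, ?_⟩
  simpa [integral_neg] using h_int.neg

theorem integral_inf_add_integral_sup {f g : α → ℝ} (hf : Integrable f μ)
    (hg : Integrable g μ) : ∫ x, (f ⊓ g) x ∂μ + ∫ x, (f ⊔ g) x ∂μ = ∫ x, f x ∂μ + ∫ x, g x ∂μ := by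
  rw [← integral_add' (hf.inf hg) (hf.sup hg), inf_add_sup, integral_add' hf hg]

theorem ae_le_partialInfs {f : ℕ → α → ℝ} {g : α → ℝ} (h : ∀ k, g ≤ᵐ[μ] f k) :
    ∀ n, g ≤ᵐ[μ] partialInfs f n
  | 0 => h 0
  | n + 1 => by
    filter_upwards [ae_le_partialInfs h n, h (n + 1)] with x h₁ h₂ using le_inf h₁ h₂

end Integral

section Dual

variable {X Y : Type*} [MeasurableSpace X] [MeasurableSpace Y] {P : Measure X} {Q : Measure Y}
  {Φ : X × Y → ℝ} {φ φ' : X → ℝ} {ψ ψ' : Y → ℝ} {φs : ℕ → X → ℝ} {ψs : ℕ → Y → ℝ}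

theorem ae_ae_congr {p : X → Y → ℝ → ℝ → Prop} {f f' : X → ℝ} {g g' : Y → ℝ}
    (hf : f =ᵐ[P] f') (hg : g =ᵐ[Q] g') (h : ∀ᵐ x ∂P, ∀ᵐ y ∂Q, p x y (f x) (g y)) :
    ∀ᵐ x ∂P, ∀ᵐ y ∂Q, p x y (f' x) (g' y) := by
  filter_upwards [h, hf] with x hx hfx
  filter_upwards [hx, hg] with y hy hgy
  rwa [← hfx, ← hgy]

theorem ae_le_integral_of_ae_ae_le [IsProbabilityMeasure P] {f : X → ℝ} {g : Y → ℝ}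
    (hf : Integrable f P)
    (h : ∀ᵐ x ∂P, ∀ᵐ y ∂Q, g y ≤ f x) : ∀ᵐ y ∂Q, g y ≤ ∫ x, f x ∂P := by
  obtain ⟨x, hx, hfx⟩ := exists_notMem_null_le_integral hf (ae_iff.1 h)
  exact (not_not.1 hx).mono fun y hy ↦ hy.trans hfx

theorem integral_add_integral_le_of_ae_ae [IsProbabilityMeasure P] [IsProbabilityMeasure Q]
    {f f' : X → ℝ} {g g' : Y → ℝ} (hf : Integrable f P)
    (hf' : Integrable f' P) (hg : Integrable g Q) (hg' : Integrable g' Q)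
    (h : ∀ᵐ x ∂P, ∀ᵐ y ∂Q, f x + g y ≤ f' x + g' y) :
    ∫ x, f x ∂P + ∫ y, g y ∂Q ≤ ∫ x, f' x ∂P + ∫ y, g' y ∂Q := by
  have hx : ∀ᵐ x ∂P, f x + ∫ y, g y ∂Q ≤ f' x + ∫ y, g' y ∂Q := by
    filter_upwards [h] with x hx
    simpa [integral_add (integrable_const _) hg, integral_add (integrable_const _) hg'] using
      integral_mono_ae ((integrable_const (f x)).add hg) ((integrable_const (f' x)).add hg') hx
  simpa [integral_add hf (integrable_const _), integral_add hf' (integrable_const _)] using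
    integral_mono_ae (hf.add (integrable_const _)) (hf'.add (integrable_const _)) hx

variable (P Q Φ) in
structure IsDualFeasible (φ : X → ℝ) (ψ : Y → ℝ) : Prop where
  measurable_left : Measurable φ
  measurable_right : Measurable ψ
  integrable_left : Integrable φ P
  integrable_right : Integrable ψ Q
  ae_ae_le : ∀ᵐ x ∂P, ∀ᵐ y ∂Q, Φ (x, y) ≤ φ x + ψ y

variable (P Q) in
noncomputable def dualCost (φ : X → ℝ) (ψ : Y → ℝ) : ℝ := ∫ x, φ x ∂P + ∫ y, ψ y ∂Q

theorem dualCost_inf_sup_add_dualCost_sup_inf (hφ : Integrable φ P) (hφ' : Integrable φ' P)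
    (hψ : Integrable ψ Q) (hψ' : Integrable ψ' Q) :
    dualCost P Q (φ ⊓ φ') (ψ ⊔ ψ') + dualCost P Q (φ ⊔ φ') (ψ ⊓ ψ') =
      dualCost P Q φ ψ + dualCost P Q φ' ψ' := by
  unfold dualCost
  linarith [integral_inf_add_integral_sup hφ hφ', integral_inf_add_integral_sup hψ hψ']

namespace IsDualFeasible

theorem inf_sup (h : IsDualFeasible P Q Φ φ ψ) (h' : IsDualFeasible P Q Φ φ' ψ') :
    IsDualFeasible P Q Φ (φ ⊓ φ') (ψ ⊔ ψ') where
  measurable_left := h.measurable_left.inf h'.measurable_left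
  measurable_right := h.measurable_right.sup h'.measurable_right
  integrable_left := h.integrable_left.inf h'.integrable_left
  integrable_right := h.integrable_right.sup h'.integrable_right
  ae_ae_le := by
    filter_upwards [h.ae_ae_le, h'.ae_ae_le] with x hx hx'
    filter_upwards [hx, hx'] with y hy hy'
    exact le_inf_add_sup hy hy'

theorem sup_inf (h : IsDualFeasible P Q Φ φ ψ) (h' : IsDualFeasible P Q Φ φ' ψ') :
    IsDualFeasible P Q Φ (φ ⊔ φ') (ψ ⊓ ψ') where
  measurable_left := h.measurable_left.sup h'.measurable_left
  measurable_right := h.measurable_right.inf h'.measurable_right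
  integrable_left := h.integrable_left.sup h'.integrable_left
  integrable_right := h.integrable_right.inf h'.integrable_right
  ae_ae_le := by
    filter_upwards [h.ae_ae_le, h'.ae_ae_le] with x hx hx'
    filter_upwards [hx, hx'] with y hy hy'
    rw [Pi.sup_apply, Pi.inf_apply, add_comm]
    exact le_inf_add_sup (by linarith) (by linarith)

theorem ae_ae_add_le {a : X → ℝ} {b : Y → ℝ} (h : IsDualFeasible P Q Φ φ ψ)
    (hlow : ∀ᵐ x ∂P, ∀ᵐ y ∂Q, a x + b y ≤ Φ (x, y)) :
    ∀ᵐ x ∂P, ∀ᵐ y ∂Q, a x + b y ≤ φ x + ψ y := by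
  filter_upwards [hlow, h.ae_ae_le] with x hx hx'
  filter_upwards [hx, hx'] with y using le_trans

theorem sub_add_const [IsFiniteMeasure P] [IsFiniteMeasure Q] (h : IsDualFeasible P Q Φ φ ψ)
    (c : ℝ) :
    IsDualFeasible P Q Φ (fun x ↦ φ x - c) (fun y ↦ ψ y + c) where
  measurable_left := h.measurable_left.sub_const c
  measurable_right := h.measurable_right.add_const c
  integrable_left := h.integrable_left.sub (integrable_const c)
  integrable_right := h.integrable_right.add (integrable_const c)
  ae_ae_le := h.ae_ae_le.mono fun _ hx ↦ hx.mono fun _ hy ↦ by linarith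

theorem dualCost_sub_add_const [IsProbabilityMeasure P] [IsProbabilityMeasure Q]
    (h : IsDualFeasible P Q Φ φ ψ) (c : ℝ) :
    dualCost P Q (fun x ↦ φ x - c) (fun y ↦ ψ y + c) = dualCost P Q φ ψ := by
  simp [dualCost, integral_sub h.integrable_left (integrable_const c),
    integral_add h.integrable_right (integrable_const c)]

theorem integral_add_integral_le_dualCost [IsProbabilityMeasure P] [IsProbabilityMeasure Q]
    {a : X → ℝ} {b : Y → ℝ} (h : IsDualFeasible P Q Φ φ ψ) (ha : Integrable a P)
    (hb : Integrable b Q) (hlow : ∀ᵐ x ∂P, ∀ᵐ y ∂Q, a x + b y ≤ Φ (x, y)) :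
    ∫ x, a x ∂P + ∫ y, b y ∂Q ≤ dualCost P Q φ ψ :=
  integral_add_integral_le_of_ae_ae ha h.integrable_left hb h.integrable_right
    (h.ae_ae_add_le hlow)

theorem exists_shift_ae_le [IsProbabilityMeasure P] [IsProbabilityMeasure Q] {a : X → ℝ}
    {b : Y → ℝ} (h : IsDualFeasible P Q Φ φ ψ)
    (ha_meas : Measurable a) (hb_meas : Measurable b) (ha : Integrable a P) (hb : Integrable b Q)
    (hlow : ∀ᵐ x ∂P, ∀ᵐ y ∂Q, a x + b y ≤ Φ (x, y)) :
    ∃ φ' ψ', IsDualFeasible P Q Φ φ' ψ' ∧ dualCost P Q φ' ψ' = dualCost P Q φ ψ ∧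
      (∀ᵐ x ∂P, a x - (dualCost P Q φ ψ - ∫ x, a x ∂P - ∫ y, b y ∂Q) ≤ φ' x) ∧ b ≤ᵐ[Q] ψ' := by
  have hab := h.ae_ae_add_le hlow
  have hψ : ∀ᵐ y ∂Q, b y - ψ y ≤ ∫ x, φ x - a x ∂P :=
    ae_le_integral_of_ae_ae_le (h.integrable_left.sub ha) (hab.mono fun x hx ↦ hx.mono
      fun y hy ↦ by linarith)
  have hφ : ∀ᵐ x ∂P, a x - φ x ≤ ∫ y, ψ y - b y ∂Q := by
    refine ae_le_integral_of_ae_ae_le (h.integrable_right.sub hb) ?_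
    refine (Measure.ae_ae_comm (p := fun x y ↦ a x - φ x ≤ ψ y - b y) (measurableSet_le ?_ ?_)).1
      (hab.mono fun x hx ↦ hx.mono fun y hy ↦ by linarith)
    · exact (ha_meas.sub h.measurable_left).comp measurable_fst
    · exact (h.measurable_right.sub hb_meas).comp measurable_snd
  rw [integral_sub h.integrable_left ha] at hψ
  rw [integral_sub h.integrable_right hb] at hφ
  refine ⟨_, _, h.sub_add_const (∫ x, φ x ∂P - ∫ x, a x ∂P),
    h.dualCost_sub_add_const _, ?_, hψ.mono fun y hy ↦ by linarith⟩
  filter_upwards [hφ] with x hx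
  simp only [dualCost]
  linarith

theorem of_tendsto (h : ∀ n, IsDualFeasible P Q Φ (φs n) (ψs n)) (hφ_meas : Measurable φ)
    (hψ_meas : Measurable ψ) (hφ : Integrable φ P) (hψ : Integrable ψ Q)
    (hφ_lim : ∀ᵐ x ∂P, Tendsto (fun n ↦ φs n x) atTop (𝓝 (φ x)))
    (hψ_lim : ∀ᵐ y ∂Q, Tendsto (fun n ↦ ψs n y) atTop (𝓝 (ψ y))) :
    IsDualFeasible P Q Φ φ ψ where
  measurable_left := hφ_meas
  measurable_right := hψ_meas
  integrable_left := hφ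
  integrable_right := hψ
  ae_ae_le := by
    filter_upwards [ae_all_iff.2 fun n ↦ (h n).ae_ae_le, hφ_lim] with x hx hφx
    filter_upwards [ae_all_iff.2 hx, hψ_lim] with y hy hψy
    exact ge_of_tendsto' (hφx.add hψy) hy

theorem dualCost_inf_sup_le {I : ℝ}
    (hI : ∀ φ ψ, IsDualFeasible P Q Φ φ ψ → I ≤ dualCost P Q φ ψ)
    (h : IsDualFeasible P Q Φ φ ψ) (h' : IsDualFeasible P Q Φ φ' ψ') :
    dualCost P Q (φ ⊓ φ') (ψ ⊔ ψ') ≤ dualCost P Q φ ψ + dualCost P Q φ' ψ' - I := by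
  linarith [hI _ _ (h.sup_inf h'), dualCost_inf_sup_add_dualCost_sup_inf h.integrable_left
    h'.integrable_left h.integrable_right h'.integrable_right]

theorem partialInfs_partialSups (h : ∀ k, IsDualFeasible P Q Φ (φs k) (ψs k)) :
    ∀ n, IsDualFeasible P Q Φ (partialInfs φs n) (partialSups ψs n)
  | 0 => by simpa using h 0
  | n + 1 => by
    rw [partialInfs_add_one, partialSups_add_one]
    exact (partialInfs_partialSups h n).inf_sup (h (n + 1))

theorem dualCost_partialInfs_partialSups_le {I : ℝ} {δ : ℕ → ℝ}
    (hI : ∀ φ ψ, IsDualFeasible P Q Φ φ ψ → I ≤ dualCost P Q φ ψ)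
    (h : ∀ k, IsDualFeasible P Q Φ (φs k) (ψs k))
    (hδ : ∀ k, dualCost P Q (φs k) (ψs k) ≤ I + δ k) :
    ∀ n, dualCost P Q (partialInfs φs n) (partialSups ψs n) ≤ I + ∑ k ∈ range (n + 1), δ k
  | 0 => by simpa using hδ 0
  | n + 1 => by
    rw [partialInfs_add_one, partialSups_add_one, sum_range_succ]
    linarith [dualCost_inf_sup_le hI (partialInfs_partialSups h n) (h (n + 1)), hδ (n + 1),
      dualCost_partialInfs_partialSups_le hI h hδ n]

theorem exists_tendsto_partialInfs_partialSups {c : ℝ} {A : X → ℝ}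
    (h : ∀ k, IsDualFeasible P Q Φ (φs k) (ψs k)) (hA : Integrable A P)
    (hAφ : ∀ k, A ≤ᵐ[P] φs k)
    (hc : ∀ n, dualCost P Q (partialInfs φs n) (partialSups ψs n) ≤ c) :
    ∃ φ ψ, IsDualFeasible P Q Φ φ ψ ∧ dualCost P Q φ ψ ≤ c ∧
      (∀ᵐ x ∂P, Tendsto (fun n ↦ partialInfs φs n x) atTop (𝓝 (φ x))) ∧
      ∀ᵐ y ∂Q, Tendsto (fun n ↦ partialSups ψs n y) atTop (𝓝 (ψ y)) := by
  have hrun := partialInfs_partialSups h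
  have hA_le : ∀ n, ∫ x, A x ∂P ≤ ∫ x, partialInfs φs n x ∂P := fun n ↦
    integral_mono_ae hA (hrun n).integrable_left (ae_le_partialInfs hAφ n)
  obtain ⟨φ, hφ_meas, hφ, hφ_lim, hφ_int⟩ := exists_ae_tendsto_of_antitone_of_le_integral
    (fun n ↦ (hrun n).measurable_left) (fun n ↦ (hrun n).integrable_left)
    (ae_of_all _ fun x _ _ hnm ↦ partialInfs_antitone φs hnm x) hA_le
  obtain ⟨ψ, hψ_meas, hψ, hψ_lim, hψ_int⟩ := exists_ae_tendsto_of_monotone_of_integral_le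
    (C := c - ∫ x, A x ∂P) (fun n ↦ (hrun n).measurable_right)
    (fun n ↦ (hrun n).integrable_right)
    (ae_of_all _ fun y _ _ hnm ↦ (partialSups ψs).monotone hnm y)
    fun n ↦ by have := hc n; unfold dualCost at this; linarith [hA_le n]
  exact ⟨φ, ψ, of_tendsto hrun hφ_meas hψ_meas hφ hψ hφ_lim hψ_lim,
    le_of_tendsto' (hφ_int.add hψ_int) hc, hφ_lim, hψ_lim⟩

theorem exists_dualCost_le_of_monotone_of_antitone {I : ℝ} {ε : ℕ → ℝ} {B : Y → ℝ}
    (h : ∀ m, IsDualFeasible P Q Φ (φs m) (ψs m)) (hφ_mono : ∀ᵐ x ∂P, Monotone fun m ↦ φs m x)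
    (hψ_anti : ∀ᵐ y ∂Q, Antitone fun m ↦ ψs m y) (hB : Integrable B Q)
    (hBψ : ∀ m, B ≤ᵐ[Q] ψs m) (hcost : ∀ m, dualCost P Q (φs m) (ψs m) ≤ I + ε m)
    (hε : Tendsto ε atTop (𝓝 0)) :
    ∃ φ ψ, IsDualFeasible P Q Φ φ ψ ∧ dualCost P Q φ ψ ≤ I := by
  obtain ⟨E, hE⟩ := hε.bddAbove_range
  have hB_le : ∀ m, ∫ y, B y ∂Q ≤ ∫ y, ψs m y ∂Q := fun m ↦
    integral_mono_ae hB (h m).integrable_right (hBψ m)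
  obtain ⟨φ, hφ_meas, hφ, hφ_lim, hφ_int⟩ := exists_ae_tendsto_of_monotone_of_integral_le
    (C := I + E - ∫ y, B y ∂Q) (fun m ↦ (h m).measurable_left) (fun m ↦ (h m).integrable_left)
    hφ_mono fun m ↦ by
      have := hcost m; unfold dualCost at this; linarith [hB_le m, hE ⟨m, rfl⟩]
  obtain ⟨ψ, hψ_meas, hψ, hψ_lim, hψ_int⟩ := exists_ae_tendsto_of_antitone_of_le_integral
    (fun m ↦ (h m).measurable_right) (fun m ↦ (h m).integrable_right) hψ_anti hB_le
  refine ⟨φ, ψ, of_tendsto h hφ_meas hψ_meas hφ hψ hφ_lim hψ_lim, ?_⟩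
  exact le_of_tendsto_of_tendsto' (hφ_int.add hψ_int) (by simpa using hε.const_add I) hcost

end IsDualFeasible

theorem exists_isDualFeasible_dualCost_le [IsProbabilityMeasure P] [IsProbabilityMeasure Q]
    {I : ℝ} {a : X → ℝ} {b : Y → ℝ}
    (ha_meas : Measurable a) (hb_meas : Measurable b) (ha : Integrable a P) (hb : Integrable b Q)
    (hlow : ∀ᵐ x ∂P, ∀ᵐ y ∂Q, a x + b y ≤ Φ (x, y))
    (hI : ∀ φ ψ, IsDualFeasible P Q Φ φ ψ → I ≤ dualCost P Q φ ψ)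
    (happrox : ∀ ε > 0, ∃ φ ψ, IsDualFeasible P Q Φ φ ψ ∧ dualCost P Q φ ψ < I + ε) :
    ∃ φ ψ, IsDualFeasible P Q Φ φ ψ ∧ dualCost P Q φ ψ ≤ I := by
  set A : X → ℝ := fun x ↦ a x - (I + 1 - ∫ x, a x ∂P - ∫ y, b y ∂Q)
  have hseq : ∀ n : ℕ, ∃ φ ψ, IsDualFeasible P Q Φ φ ψ ∧ dualCost P Q φ ψ ≤ I + (1 / 2) ^ n ∧
      A ≤ᵐ[P] φ ∧ b ≤ᵐ[Q] ψ := by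
    intro n
    obtain ⟨φ, ψ, h, hlt⟩ := happrox _ (pow_pos one_half_pos n)
    obtain ⟨φ', ψ', h', hcost, hφ', hψ'⟩ := h.exists_shift_ae_le ha_meas hb_meas ha hb hlow
    have : (1 / 2 : ℝ) ^ n ≤ 1 := pow_le_one₀ (by norm_num) (by norm_num)
    exact ⟨φ', ψ', h', by linarith, hφ'.mono fun x hx ↦ by simp only [A]; linarith, hψ'⟩
  choose φs ψs hfeas hcost hAφ hbψ using hseq
  -- the pair built from the tail `k ≥ m` costs at most `I + ∑_{k ≥ m} 2⁻ᵏ`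
  have htail : ∀ m, ∃ φ ψ, IsDualFeasible P Q Φ φ ψ ∧ dualCost P Q φ ψ ≤ I + 2 * (1 / 2) ^ m ∧
      (∀ᵐ x ∂P, Tendsto (fun n ↦ partialInfs (fun k ↦ φs (k + m)) n x) atTop (𝓝 (φ x))) ∧
      ∀ᵐ y ∂Q, Tendsto (fun n ↦ partialSups (fun k ↦ ψs (k + m)) n y) atTop (𝓝 (ψ y)) :=
    fun m ↦ IsDualFeasible.exists_tendsto_partialInfs_partialSups (fun k ↦ hfeas _)
      (ha.sub (integrable_const _)) (fun k ↦ hAφ _) fun n ↦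
      (IsDualFeasible.dualCost_partialInfs_partialSups_le hI (fun k ↦ hfeas _)
        (fun k ↦ hcost _) n).trans (by linarith [sum_range_one_half_pow_add_le m (n + 1)])
  choose φt ψt hfeas_t hcost_t hφt_lim hψt_lim using htail
  have hφt_mono : ∀ᵐ x ∂P, Monotone fun m ↦ φt m x := by
    filter_upwards [ae_all_iff.2 hφt_lim] with x hx
    refine monotone_nat_of_le_succ fun m ↦ le_of_tendsto_of_tendsto'
      ((hx m).comp (tendsto_add_atTop_nat 1)) (hx (m + 1)) fun n ↦
      partialInfs_tail_add_one_le φs m n x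
  have hψt_anti : ∀ᵐ y ∂Q, Antitone fun m ↦ ψt m y := by
    filter_upwards [ae_all_iff.2 hψt_lim] with y hy
    exact antitone_nat_of_succ_le fun m ↦ le_of_tendsto_of_tendsto' (hy (m + 1))
      ((hy m).comp (tendsto_add_atTop_nat 1)) fun n ↦ partialSups_tail_le_add_one ψs m n y
  have hbψt : ∀ m, b ≤ᵐ[Q] ψt m := fun m ↦ by
    filter_upwards [hψt_lim m, hbψ m] with y hy hby
    exact hby.trans (ge_of_tendsto' hy fun n ↦ by
      simpa using le_partialSups_of_le (fun k ↦ ψs (k + m)) (Nat.zero_le n) y)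
  exact IsDualFeasible.exists_dualCost_le_of_monotone_of_antitone hfeas_t hφt_mono hψt_anti hb
    hbψt hcost_t (by simpa using (tendsto_pow_atTop_nhds_zero_of_lt_one (by norm_num)
      (by norm_num : (1 / 2 : ℝ) < 1)).const_mul 2)

theorem exists_isDualFeasible_forall_dualCost_le [IsProbabilityMeasure P] [IsProbabilityMeasure Q]
    {abar a : X → ℝ} {bbar b : Y → ℝ}
    (habar : Integrable abar P) (hbbar : Integrable bbar Q) (ha : Integrable a P)
    (hb : Integrable b Q) (hup : ∀ᵐ x ∂P, ∀ᵐ y ∂Q, Φ (x, y) ≤ abar x + bbar y)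
    (hlow : ∀ᵐ x ∂P, ∀ᵐ y ∂Q, a x + b y ≤ Φ (x, y)) :
    ∃ φ ψ, IsDualFeasible P Q Φ φ ψ ∧
      ∀ φ' ψ', IsDualFeasible P Q Φ φ' ψ' → dualCost P Q φ ψ ≤ dualCost P Q φ' ψ' := by
  set S : Set ℝ := {c | ∃ φ ψ, IsDualFeasible P Q Φ φ ψ ∧ dualCost P Q φ ψ = c}
  have hS : S.Nonempty := ⟨_, _, _, ⟨habar.aemeasurable.measurable_mk,
    hbbar.aemeasurable.measurable_mk, habar.congr habar.aemeasurable.ae_eq_mk,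
    hbbar.congr hbbar.aemeasurable.ae_eq_mk, ae_ae_congr (p := fun x y u v ↦ Φ (x, y) ≤ u + v)
      habar.aemeasurable.ae_eq_mk hbbar.aemeasurable.ae_eq_mk hup⟩, rfl⟩
  have hS_bdd : BddBelow S := ⟨_, by
    rintro _ ⟨φ, ψ, h, rfl⟩
    exact h.integral_add_integral_le_dualCost ha hb hlow⟩
  have hI : ∀ φ ψ, IsDualFeasible P Q Φ φ ψ → sInf S ≤ dualCost P Q φ ψ :=
    fun φ ψ h ↦ csInf_le hS_bdd ⟨φ, ψ, h, rfl⟩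
  obtain ⟨φ, ψ, h, hle⟩ := exists_isDualFeasible_dualCost_le ha.aemeasurable.measurable_mk
    hb.aemeasurable.measurable_mk (ha.congr ha.aemeasurable.ae_eq_mk)
    (hb.congr hb.aemeasurable.ae_eq_mk) (ae_ae_congr (p := fun x y u v ↦ u + v ≤ Φ (x, y))
      ha.aemeasurable.ae_eq_mk hb.aemeasurable.ae_eq_mk hlow) hI fun ε hε ↦ by
    obtain ⟨_, ⟨φ, ψ, h, rfl⟩, hlt⟩ := exists_lt_of_csInf_lt hS (lt_add_of_pos_right _ hε)
    exact ⟨φ, ψ, h, hlt⟩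
  exact ⟨φ, ψ, h, fun φ' ψ' h' ↦ hle.trans (hI φ' ψ' h')⟩

end Dual

theorem mk_dual_attained_general
    {d d' : ℕ} (𝒳 : Set (Fin d → ℝ)) (𝒴 : Set (Fin d' → ℝ))
    (P : Measure (Fin d → ℝ)) (Q : Measure (Fin d' → ℝ))
    [IsProbabilityMeasure P] [IsProbabilityMeasure Q]
    (hP : P 𝒳ᶜ = 0) (hQ : Q 𝒴ᶜ = 0)
    (Φ : (Fin d → ℝ) × (Fin d' → ℝ) → ℝ)
    (abar : (Fin d → ℝ) → ℝ) (bbar : (Fin d' → ℝ) → ℝ)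
    (habar : Integrable abar P) (hbbar : Integrable bbar Q)
    (hbound : ∀ x ∈ 𝒳, ∀ y ∈ 𝒴, Φ (x, y) ≤ abar x + bbar y)
    (alow : (Fin d → ℝ) → ℝ) (blow : (Fin d' → ℝ) → ℝ)
    (halow : Integrable alow P) (hblow : Integrable blow Q)
    (hlbound : ∀ x ∈ 𝒳, ∀ y ∈ 𝒴, alow x + blow y ≤ Φ (x, y)) :
    ∃ (φ : (Fin d → ℝ) → ℝ) (ψ : (Fin d' → ℝ) → ℝ),
      Measurable φ ∧ Measurable ψ ∧ Integrable φ P ∧ Integrable ψ Q ∧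
      (∀ᵐ x ∂P, ∀ᵐ y ∂Q, Φ (x, y) ≤ φ x + ψ y) ∧
      ∀ (φ' : (Fin d → ℝ) → ℝ) (ψ' : (Fin d' → ℝ) → ℝ),
        Measurable φ' → Measurable ψ' → Integrable φ' P → Integrable ψ' Q →
        (∀ᵐ x ∂P, ∀ᵐ y ∂Q, Φ (x, y) ≤ φ' x + ψ' y) →
        ∫ x, φ x ∂P + ∫ y, ψ y ∂Q ≤ ∫ x, φ' x ∂P + ∫ y, ψ' y ∂Q := by
  have h𝒳 : ∀ᵐ x ∂P, x ∈ 𝒳 := mem_ae_iff.2 hP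
  have h𝒴 : ∀ᵐ y ∂Q, y ∈ 𝒴 := mem_ae_iff.2 hQ
  obtain ⟨φ, ψ, h, hmin⟩ := exists_isDualFeasible_forall_dualCost_le habar hbbar halow hblow
    (h𝒳.mono fun x hx ↦ h𝒴.mono fun y hy ↦ hbound x hx y hy)
    (h𝒳.mono fun x hx ↦ h𝒴.mono fun y hy ↦ hlbound x hx y hy)
  exact ⟨φ, ψ, h.1, h.2, h.3, h.4, h.5, fun φ' ψ' h₁ h₂ h₃ h₄ h₅ ↦ hmin φ' ψ' ⟨h₁, h₂, h₃, h₄, h₅⟩⟩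

/-- Existence of dual optimizers: for a real-valued upper semicontinuous surplus `Φ`
bounded above and below by integrable separable functions, there exists a measurable
integrable pair `(φ, ψ)` with `φ(x) + ψ(y) ≥ Φ(x,y)` for `P`-a.e. `x` and `Q`-a.e. `y`
attaining the infimum of `E_P[φ] + E_Q[ψ]` over all such feasible pairs. -/
theorem mk_dual_attained
    {d d' : ℕ} (𝒳 : Set (Fin d → ℝ)) (𝒴 : Set (Fin d' → ℝ))
    (h𝒳 : IsClosed 𝒳) (h𝒴 : IsClosed 𝒴)
    (P : Measure (Fin d → ℝ)) (Q : Measure (Fin d' → ℝ))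
    [IsProbabilityMeasure P] [IsProbabilityMeasure Q]
    (hP : P 𝒳ᶜ = 0) (hQ : Q 𝒴ᶜ = 0)
    (Φ : (Fin d → ℝ) × (Fin d' → ℝ) → ℝ)
    (hΦusc : UpperSemicontinuousOn Φ (𝒳 ×ˢ 𝒴))
    (abar : (Fin d → ℝ) → ℝ) (bbar : (Fin d' → ℝ) → ℝ)
    (habar : Integrable abar P) (hbbar : Integrable bbar Q)
    (hbound : ∀ x ∈ 𝒳, ∀ y ∈ 𝒴, Φ (x, y) ≤ abar x + bbar y)
    (alow : (Fin d → ℝ) → ℝ) (blow : (Fin d' → ℝ) → ℝ)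
    (halow : Integrable alow P) (hblow : Integrable blow Q)
    (hlbound : ∀ x ∈ 𝒳, ∀ y ∈ 𝒴, alow x + blow y ≤ Φ (x, y)) :
    ∃ (φ : (Fin d → ℝ) → ℝ) (ψ : (Fin d' → ℝ) → ℝ),
      Measurable φ ∧ Measurable ψ ∧ Integrable φ P ∧ Integrable ψ Q ∧
      (∀ᵐ x ∂P, ∀ᵐ y ∂Q, Φ (x, y) ≤ φ x + ψ y) ∧
      ∀ (φ' : (Fin d → ℝ) → ℝ) (ψ' : (Fin d' → ℝ) → ℝ),
        Measurable φ' → Measurable ψ' → Integrable φ' P → Integrable ψ' Q →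
        (∀ᵐ x ∂P, ∀ᵐ y ∂Q, Φ (x, y) ≤ φ' x + ψ' y) →
        ∫ x, φ x ∂P + ∫ y, ψ y ∂Q ≤ ∫ x, φ' x ∂P + ∫ y, ψ' y ∂Q :=
  mk_dual_attained_general 𝒳 𝒴 P Q hP hQ Φ abar bbar habar hbbar hbound alow blow halow hblow
    hlbound
end

section
/- Joint optimality criterion via the support condition: assume strong duality holds (the primal supremum equals the dual infimum and both are finite), Φ is continuous, and φ, ψ are continuous functions with φ(x) + ψ(y) ≥ Φ(x,y) for all x, y. Let π ∈ M(P,Q). Then π is an optimal coupling and (φ, ψ) is a dual minimizer if and only if the support of π is contained in the set {(x,y) ∈ 𝒳 × 𝒴 : φ(x) + ψ(y) = Φ(x,y)}. -/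
/-!
Weak duality sandwiches `v` between the value `∫ Φ dπ` of the coupling and the value
`∫ φ dP + ∫ ψ dQ` of the dual pair, so joint optimality says exactly that these two values agree.
Their difference is the `π`-integral of the nonnegative slack `φ x + ψ y - Φ (x, y)`, which
vanishes iff the slack vanishes `π`-a.e. As the contact set is closed and the ambient space is
second countable, having full `π`-measure is the same as containing the support of `π`.
-/

open MeasureTheory

/-- The (topological) support of a measure: the set of points all of whose open
neighborhoods have positive measure; equivalently, the smallest closed set of full
measure (for measures on second-countable spaces). -/
def measureSupport {α : Type*} [TopologicalSpace α] [MeasurableSpace α]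
    (μ : Measure α) : Set α :=
  {z | ∀ U : Set α, IsOpen U → z ∈ U → μ U ≠ 0}

section Support

variable {α : Type*} [TopologicalSpace α] [MeasurableSpace α]

lemma measureSupport_eq_support (μ : Measure α) : measureSupport μ = μ.support := by
  ext z
  simp [measureSupport, Measure.support_eq_forall_isOpen, pos_iff_ne_zero, imp.swap]

lemma measureSupport_subset_iff_ae [HereditarilyLindelofSpace α] {μ : Measure α} {s : Set α}
    (hs : IsClosed s) : measureSupport μ ⊆ s ↔ ∀ᵐ z ∂μ, z ∈ s := by
  rw [measureSupport_eq_support]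
  exact ⟨fun h ↦ Filter.mem_of_superset Measure.support_mem_ae h,
    Measure.support_subset_of_isClosed hs⟩

end Support

section Coupling

variable {X Y E : Type*} [MeasurableSpace X] [MeasurableSpace Y] [NormedAddCommGroup E]
  {P : Measure X} {Q : Measure Y} {π : Measure (X × Y)}

lemma MeasureTheory.Integrable.comp_fst_of_map_fst {f : X → E} (hπ : π.map Prod.fst = P)
    (hf : Integrable f P) : Integrable (fun z ↦ f z.1) π :=
  (hπ ▸ hf).comp_measurable measurable_fst

lemma MeasureTheory.Integrable.comp_snd_of_map_snd {f : Y → E} (hπ : π.map Prod.snd = Q)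
    (hf : Integrable f Q) : Integrable (fun z ↦ f z.2) π :=
  (hπ ▸ hf).comp_measurable measurable_snd

lemma integral_comp_fst_of_map_fst [NormedSpace ℝ E] {f : X → E} (hπ : π.map Prod.fst = P)
    (hf : Integrable f P) : ∫ z, f z.1 ∂π = ∫ x, f x ∂P := by
  subst hπ
  exact (integral_map measurable_fst.aemeasurable hf.aestronglyMeasurable).symm

lemma integral_comp_snd_of_map_snd [NormedSpace ℝ E] {f : Y → E} (hπ : π.map Prod.snd = Q)
    (hf : Integrable f Q) : ∫ z, f z.2 ∂π = ∫ y, f y ∂Q := by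
  subst hπ
  exact (integral_map measurable_snd.aemeasurable hf.aestronglyMeasurable).symm

/-- Complementary slackness: the gap between the two sides is the integral of the nonnegative
slack `φ z.1 + ψ z.2 - Φ z`. -/
lemma integral_eq_integral_add_integral_iff_ae_eq (hπ₁ : π.map Prod.fst = P)
    (hπ₂ : π.map Prod.snd = Q) {Φ : X × Y → ℝ} {φ : X → ℝ} {ψ : Y → ℝ}
    (hΦ : Integrable Φ π) (hφ : Integrable φ P) (hψ : Integrable ψ Q)
    (hle : ∀ᵐ z ∂π, Φ z ≤ φ z.1 + ψ z.2) :
    ∫ z, Φ z ∂π = ∫ x, φ x ∂P + ∫ y, ψ y ∂Q ↔ Φ =ᵐ[π] fun z ↦ φ z.1 + ψ z.2 := by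
  have hφπ := hφ.comp_fst_of_map_fst hπ₁
  have hψπ := hψ.comp_snd_of_map_snd hπ₂
  rw [← integral_comp_fst_of_map_fst hπ₁ hφ, ← integral_comp_snd_of_map_snd hπ₂ hψ,
    ← integral_add hφπ hψπ]
  exact integral_eq_iff_of_ae_le hΦ (hφπ.add hψπ) hle

end Coupling

lemma eq_and_eq_iff_of_le_of_le {α : Type*} [PartialOrder α] {a b v : α} (ha : a ≤ v)
    (hb : v ≤ b) : a = v ∧ b = v ↔ a = b := by
  constructor
  · rintro ⟨rfl, rfl⟩
    rfl
  · rintro rfl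
    exact ⟨le_antisymm ha hb, le_antisymm ha hb⟩

theorem mk_joint_optimality_support_general
    {d d' : ℕ} (𝒳 : Set (Fin d → ℝ)) (𝒴 : Set (Fin d' → ℝ))
    (h𝒳 : IsClosed 𝒳) (h𝒴 : IsClosed 𝒴)
    (P : Measure (Fin d → ℝ)) (Q : Measure (Fin d' → ℝ))
    (hP : P 𝒳ᶜ = 0) (hQ : Q 𝒴ᶜ = 0)
    (Φ : (Fin d → ℝ) × (Fin d' → ℝ) → ℝ) (hΦcont : Continuous Φ)
    (v : ℝ)
    -- strong duality: v is the primal supremum ...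
    (hprimal : IsLUB {w : ℝ | ∃ π' : Measure ((Fin d → ℝ) × (Fin d' → ℝ)),
        IsProbabilityMeasure π' ∧ π'.map Prod.fst = P ∧ π'.map Prod.snd = Q ∧
        Integrable Φ π' ∧ w = ∫ z, Φ z ∂π'} v)
    -- ... and also the dual infimum (both values finite, being the real number v)
    (hdual : IsGLB {w : ℝ | ∃ (φ' : (Fin d → ℝ) → ℝ) (ψ' : (Fin d' → ℝ) → ℝ),
        Measurable φ' ∧ Measurable ψ' ∧ Integrable φ' P ∧ Integrable ψ' Q ∧
        (∀ x ∈ 𝒳, ∀ y ∈ 𝒴, Φ (x, y) ≤ φ' x + ψ' y) ∧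
        w = ∫ x, φ' x ∂P + ∫ y, ψ' y ∂Q} v)
    -- (φ, ψ) is a continuous, integrable, feasible dual pair
    (φ : (Fin d → ℝ) → ℝ) (ψ : (Fin d' → ℝ) → ℝ)
    (hφcont : Continuous φ) (hψcont : Continuous ψ)
    (hφint : Integrable φ P) (hψint : Integrable ψ Q)
    (hfeas : ∀ x ∈ 𝒳, ∀ y ∈ 𝒴, Φ (x, y) ≤ φ x + ψ y)
    -- π is a coupling of P and Q, with Φ π-integrable
    (π : Measure ((Fin d → ℝ) × (Fin d' → ℝ))) [IsProbabilityMeasure π]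
    (hπ₁ : π.map Prod.fst = P) (hπ₂ : π.map Prod.snd = Q) (hΦint : Integrable Φ π) :
    (∫ z, Φ z ∂π = v ∧ ∫ x, φ x ∂P + ∫ y, ψ y ∂Q = v) ↔
      measureSupport π ⊆
        {z : (Fin d → ℝ) × (Fin d' → ℝ) | z.1 ∈ 𝒳 ∧ z.2 ∈ 𝒴 ∧ φ z.1 + ψ z.2 = Φ z} := by
  have hS : IsClosed
      {z : (Fin d → ℝ) × (Fin d' → ℝ) | z.1 ∈ 𝒳 ∧ z.2 ∈ 𝒴 ∧ φ z.1 + ψ z.2 = Φ z} :=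
    (h𝒳.preimage continuous_fst).inter
      ((h𝒴.preimage continuous_snd).inter (isClosed_eq (by fun_prop) hΦcont))
  have h𝒳π : ∀ᵐ z ∂π, z.1 ∈ 𝒳 := ae_of_ae_map measurable_fst.aemeasurable (hπ₁ ▸ ae_iff.2 hP)
  have h𝒴π : ∀ᵐ z ∂π, z.2 ∈ 𝒴 := ae_of_ae_map measurable_snd.aemeasurable (hπ₂ ▸ ae_iff.2 hQ)
  have hfeasπ : ∀ᵐ z ∂π, Φ z ≤ φ z.1 + ψ z.2 := by
    filter_upwards [h𝒳π, h𝒴π] with z hx hy using hfeas _ hx _ hy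
  have hprimal_le : ∫ z, Φ z ∂π ≤ v := hprimal.1 ⟨π, inferInstance, hπ₁, hπ₂, hΦint, rfl⟩
  have hdual_ge : v ≤ ∫ x, φ x ∂P + ∫ y, ψ y ∂Q :=
    hdual.1 ⟨φ, ψ, hφcont.measurable, hψcont.measurable, hφint, hψint, hfeas, rfl⟩
  rw [eq_and_eq_iff_of_le_of_le hprimal_le hdual_ge,
    integral_eq_integral_add_integral_iff_ae_eq hπ₁ hπ₂ hΦint hφint hψint hfeasπ,
    measureSupport_subset_iff_ae hS]
  refine ⟨fun h ↦ ?_, fun h ↦ h.mono fun z hz ↦ hz.2.2.symm⟩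
  filter_upwards [h𝒳π, h𝒴π, h] with z hx hy hz using ⟨hx, hy, hz.symm⟩

/-- Joint optimality criterion via the support condition: assuming strong duality
(common finite value `v` of primal supremum and dual infimum), with `Φ`, `φ`, `ψ`
continuous and `(φ, ψ)` dual-feasible, a coupling `π` is primal-optimal and `(φ, ψ)`
is dual-optimal if and only if the support of `π` is contained in
`{(x,y) ∈ 𝒳 × 𝒴 : φ(x) + ψ(y) = Φ(x,y)}`. -/
theorem mk_joint_optimality_support
    {d d' : ℕ} (𝒳 : Set (Fin d → ℝ)) (𝒴 : Set (Fin d' → ℝ))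
    (h𝒳 : IsClosed 𝒳) (h𝒴 : IsClosed 𝒴)
    (P : Measure (Fin d → ℝ)) (Q : Measure (Fin d' → ℝ))
    [IsProbabilityMeasure P] [IsProbabilityMeasure Q]
    (hP : P 𝒳ᶜ = 0) (hQ : Q 𝒴ᶜ = 0)
    (Φ : (Fin d → ℝ) × (Fin d' → ℝ) → ℝ) (hΦcont : Continuous Φ)
    (v : ℝ)
    -- strong duality: v is the primal supremum ...
    (hprimal : IsLUB {w : ℝ | ∃ π' : Measure ((Fin d → ℝ) × (Fin d' → ℝ)),
        IsProbabilityMeasure π' ∧ π'.map Prod.fst = P ∧ π'.map Prod.snd = Q ∧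
        Integrable Φ π' ∧ w = ∫ z, Φ z ∂π'} v)
    -- ... and also the dual infimum (both values finite, being the real number v)
    (hdual : IsGLB {w : ℝ | ∃ (φ' : (Fin d → ℝ) → ℝ) (ψ' : (Fin d' → ℝ) → ℝ),
        Measurable φ' ∧ Measurable ψ' ∧ Integrable φ' P ∧ Integrable ψ' Q ∧
        (∀ x ∈ 𝒳, ∀ y ∈ 𝒴, Φ (x, y) ≤ φ' x + ψ' y) ∧
        w = ∫ x, φ' x ∂P + ∫ y, ψ' y ∂Q} v)
    -- (φ, ψ) is a continuous, integrable, feasible dual pair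
    (φ : (Fin d → ℝ) → ℝ) (ψ : (Fin d' → ℝ) → ℝ)
    (hφcont : Continuous φ) (hψcont : Continuous ψ)
    (hφint : Integrable φ P) (hψint : Integrable ψ Q)
    (hfeas : ∀ x ∈ 𝒳, ∀ y ∈ 𝒴, Φ (x, y) ≤ φ x + ψ y)
    -- π is a coupling of P and Q, with Φ π-integrable
    (π : Measure ((Fin d → ℝ) × (Fin d' → ℝ))) [IsProbabilityMeasure π]
    (hπ₁ : π.map Prod.fst = P) (hπ₂ : π.map Prod.snd = Q) (hΦint : Integrable Φ π) :
    (∫ z, Φ z ∂π = v ∧ ∫ x, φ x ∂P + ∫ y, ψ y ∂Q = v) ↔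
      measureSupport π ⊆
        {z : (Fin d → ℝ) × (Fin d' → ℝ) | z.1 ∈ 𝒳 ∧ z.2 ∈ 𝒴 ∧ φ z.1 + ψ z.2 = Φ z} :=
  mk_joint_optimality_support_general 𝒳 𝒴 h𝒳 h𝒴 P Q hP hQ Φ hΦcont v hprimal hdual φ ψ hφcont hψcont
    hφint hψint hfeas π hπ₁ hπ₂ hΦint
end

section
/- Dual minimizers satisfy the conjugacy relations: let Φ : 𝒳 × 𝒴 → ℝ be continuous and bounded, and suppose (φ, ψ) is a minimizer of the dual Monge–Kantorovich problem. Then φ(x) = sup_{y ∈ 𝒴} {Φ(x,y) − ψ(y)} for P-almost every x ∈ 𝒳, and ψ(y) = sup_{x ∈ 𝒳} {Φ(x,y) − φ(x)} for Q-almost every y ∈ 𝒴. -/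
/-!
If `(φ, ψ)` is feasible, then `φ` dominates the conjugate `φᶜ x = sup_{y ∈ 𝒴} (Φ(x,y) − ψ(y))`
on `𝒳`, and `(φᶜ, ψ)` is again feasible. Since `Φ` is bounded, feasibility at a single point
`x₀ ∈ 𝒳` bounds `−ψ` from above on `𝒴`, so `φᶜ` is a bounded supremum of continuous functions:
lower semicontinuous, hence measurable and integrable. Minimality of `φ` then gives
`∫ φ ≤ ∫ φᶜ ≤ ∫ φ`, which forces `φ = φᶜ` almost everywhere. The same argument with the roles of
the two marginals exchanged gives the relation for `ψ`.
-/

open MeasureTheory Set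

section CTransform

variable {X Y : Type*} (Φ : X → Y → ℝ) (s : Set Y) (ψ : Y → ℝ)

noncomputable def cTransform (x : X) : ℝ :=
  sSup ((fun y => Φ x y - ψ y) '' s)

variable {Φ s ψ}

theorem cTransform_le {x : X} {a : ℝ} (hs : s.Nonempty) (h : ∀ y ∈ s, Φ x y ≤ a + ψ y) :
    cTransform Φ s ψ x ≤ a :=
  csSup_le (hs.image _) <| by
    rintro _ ⟨y, hy, rfl⟩
    linarith [h y hy]

theorem sub_le_cTransform {x : X} {y : Y} (hbdd : BddAbove ((fun y => Φ x y - ψ y) '' s))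
    (hy : y ∈ s) : Φ x y - ψ y ≤ cTransform Φ s ψ x :=
  le_csSup hbdd ⟨y, hy, rfl⟩

theorem le_two_mul_add_add_of_abs_le {C a : ℝ} (hC : ∀ x y, |Φ x y| ≤ C) {x₀ : X}
    (h₀ : ∀ y ∈ s, Φ x₀ y ≤ a + ψ y) (x : X) {y : Y} (hy : y ∈ s) :
    Φ x y ≤ 2 * C + a + ψ y := by
  linarith [h₀ y hy, (abs_le.1 (hC x y)).2, (abs_le.1 (hC x₀ y)).1]

theorem bddAbove_image_sub_of_abs_le {C a : ℝ} (hC : ∀ x y, |Φ x y| ≤ C) {x₀ : X}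
    (h₀ : ∀ y ∈ s, Φ x₀ y ≤ a + ψ y) (x : X) :
    BddAbove ((fun y => Φ x y - ψ y) '' s) := by
  refine ⟨2 * C + a, ?_⟩
  rintro _ ⟨y, hy, rfl⟩
  linarith [le_two_mul_add_add_of_abs_le hC h₀ x hy]

theorem abs_cTransform_le {C a : ℝ} (hC : ∀ x y, |Φ x y| ≤ C) {x₀ : X}
    (h₀ : ∀ y ∈ s, Φ x₀ y ≤ a + ψ y) {y₀ : Y} (hy₀ : y₀ ∈ s) (x : X) :
    |cTransform Φ s ψ x| ≤ 2 * C + |a| + |ψ y₀| := by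
  have hC₀ : 0 ≤ C := (abs_nonneg _).trans (hC x y₀)
  have hlow := sub_le_cTransform (bddAbove_image_sub_of_abs_le hC h₀ x) hy₀
  have hup := cTransform_le ⟨y₀, hy₀⟩ fun _ => le_two_mul_add_add_of_abs_le hC h₀ x
  rw [abs_le]
  constructor <;>
    linarith [(abs_le.1 (hC x y₀)).1, le_abs_self a, le_abs_self (ψ y₀),
      abs_nonneg a, abs_nonneg (ψ y₀)]

theorem measurable_cTransform [TopologicalSpace X] [MeasurableSpace X] [OpensMeasurableSpace X]
    (hΦ : ∀ y, Continuous (Φ · y)) (hbdd : ∀ x, BddAbove ((fun y => Φ x y - ψ y) '' s)) :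
    Measurable (cTransform Φ s ψ) := by
  have hsup : cTransform Φ s ψ = fun x => ⨆ y : s, Φ x y - ψ y :=
    funext fun x => sSup_image'
  rw [hsup]
  refine LowerSemicontinuous.measurable (lowerSemicontinuous_ciSup (fun x => ?_) fun y =>
    ((hΦ y).sub continuous_const).lowerSemicontinuous)
  simpa only [image_eq_range] using hbdd x

end CTransform

theorem ae_eq_cTransform_of_forall_integral_le {X Y : Type*} [TopologicalSpace X]
    [MeasurableSpace X] [OpensMeasurableSpace X] {P : Measure X} [IsFiniteMeasure P] [NeZero P]
    {t : Set X} {s : Set Y} (ht : ∀ᵐ x ∂P, x ∈ t) (hs : s.Nonempty)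
    {Φ : X → Y → ℝ} (hΦ : ∀ y, Continuous (Φ · y)) {C : ℝ} (hC : ∀ x y, |Φ x y| ≤ C)
    {φ : X → ℝ} {ψ : Y → ℝ} (hφ : Integrable φ P)
    (hfeas : ∀ x ∈ t, ∀ y ∈ s, Φ x y ≤ φ x + ψ y)
    (hmin : ∀ φ' : X → ℝ, Measurable φ' → Integrable φ' P →
      (∀ x ∈ t, ∀ y ∈ s, Φ x y ≤ φ' x + ψ y) → ∫ x, φ x ∂P ≤ ∫ x, φ' x ∂P) :
    φ =ᵐ[P] cTransform Φ s ψ := by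
  obtain ⟨x₀, hx₀⟩ := ht.exists
  obtain ⟨y₀, hy₀⟩ := hs
  have hbdd := bddAbove_image_sub_of_abs_le hC (hfeas x₀ hx₀)
  have hmeas : Measurable (cTransform Φ s ψ) := measurable_cTransform hΦ hbdd
  have hint : Integrable (cTransform Φ s ψ) P :=
    .of_bound hmeas.aestronglyMeasurable _ <| .of_forall fun x =>
      abs_cTransform_le hC (hfeas x₀ hx₀) hy₀ x
  have hfeas' : ∀ x ∈ t, ∀ y ∈ s, Φ x y ≤ cTransform Φ s ψ x + ψ y := fun x _ y hy => by
    linarith [sub_le_cTransform (hbdd x) hy]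
  have hle : cTransform Φ s ψ ≤ᵐ[P] φ :=
    ht.mono fun x hx => cTransform_le ⟨y₀, hy₀⟩ (hfeas x hx)
  exact ((integral_eq_iff_of_ae_le hint hφ hle).1
    (le_antisymm (integral_mono_ae hint hφ hle) (hmin _ hmeas hint hfeas'))).symm

theorem mk_dual_conjugacy_general
    {d d' : ℕ} (𝒳 : Set (Fin d → ℝ)) (𝒴 : Set (Fin d' → ℝ))
    (P : Measure (Fin d → ℝ)) (Q : Measure (Fin d' → ℝ))
    [IsProbabilityMeasure P] [IsProbabilityMeasure Q]
    (hP : P 𝒳ᶜ = 0) (hQ : Q 𝒴ᶜ = 0)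
    (Φ : (Fin d → ℝ) × (Fin d' → ℝ) → ℝ)
    (hΦcont : Continuous Φ) (hΦbdd : ∃ C : ℝ, ∀ z, |Φ z| ≤ C)
    (φ : (Fin d → ℝ) → ℝ) (ψ : (Fin d' → ℝ) → ℝ)
    (hφmeas : Measurable φ) (hψmeas : Measurable ψ)
    (hφint : Integrable φ P) (hψint : Integrable ψ Q)
    (hfeas : ∀ x ∈ 𝒳, ∀ y ∈ 𝒴, Φ (x, y) ≤ φ x + ψ y)
    (hmin : ∀ (φ' : (Fin d → ℝ) → ℝ) (ψ' : (Fin d' → ℝ) → ℝ),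
      Measurable φ' → Measurable ψ' → Integrable φ' P → Integrable ψ' Q →
      (∀ x ∈ 𝒳, ∀ y ∈ 𝒴, Φ (x, y) ≤ φ' x + ψ' y) →
      ∫ x, φ x ∂P + ∫ y, ψ y ∂Q ≤ ∫ x, φ' x ∂P + ∫ y, ψ' y ∂Q) :
    (∀ᵐ x ∂P, φ x = sSup ((fun y => Φ (x, y) - ψ y) '' 𝒴)) ∧
    (∀ᵐ y ∂Q, ψ y = sSup ((fun x => Φ (x, y) - φ x) '' 𝒳)) := by
  obtain ⟨C, hC⟩ := hΦbdd
  have h𝒳 : ∀ᵐ x ∂P, x ∈ 𝒳 := ae_iff.2 hP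
  have h𝒴 : ∀ᵐ y ∂Q, y ∈ 𝒴 := ae_iff.2 hQ
  constructor
  · refine ae_eq_cTransform_of_forall_integral_le h𝒳 h𝒴.exists (fun y => by fun_prop)
      (fun x y => hC (x, y)) hφint hfeas fun φ' hφ'meas hφ'int hφ'feas => ?_
    linarith [hmin φ' ψ hφ'meas hψmeas hφ'int hψint hφ'feas]
  · refine ae_eq_cTransform_of_forall_integral_le (Φ := fun y x => Φ (x, y)) h𝒴 h𝒳.exists
      (fun x => by fun_prop) (fun y x => hC (x, y)) hψint
      (fun y hy x hx => by linarith [hfeas x hx y hy]) fun ψ' hψ'meas hψ'int hψ'feas => ?_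
    linarith [hmin φ ψ' hφmeas hψ'meas hφint hψ'int fun x hx y hy => by
      linarith [hψ'feas y hy x hx]]

/-- Dual minimizers satisfy the conjugacy relations: if `Φ` is continuous and bounded and
`(φ, ψ)` minimizes the dual Monge–Kantorovich problem, then
`φ(x) = sup_{y ∈ 𝒴} {Φ(x,y) − ψ(y)}` for `P`-a.e. `x`, and
`ψ(y) = sup_{x ∈ 𝒳} {Φ(x,y) − φ(x)}` for `Q`-a.e. `y`. -/
theorem mk_dual_conjugacy
    {d d' : ℕ} (𝒳 : Set (Fin d → ℝ)) (𝒴 : Set (Fin d' → ℝ))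
    (h𝒳 : IsClosed 𝒳) (h𝒴 : IsClosed 𝒴)
    (P : Measure (Fin d → ℝ)) (Q : Measure (Fin d' → ℝ))
    [IsProbabilityMeasure P] [IsProbabilityMeasure Q]
    (hP : P 𝒳ᶜ = 0) (hQ : Q 𝒴ᶜ = 0)
    (Φ : (Fin d → ℝ) × (Fin d' → ℝ) → ℝ)
    (hΦcont : Continuous Φ) (hΦbdd : ∃ C : ℝ, ∀ z, |Φ z| ≤ C)
    (φ : (Fin d → ℝ) → ℝ) (ψ : (Fin d' → ℝ) → ℝ)
    (hφmeas : Measurable φ) (hψmeas : Measurable ψ)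
    (hφint : Integrable φ P) (hψint : Integrable ψ Q)
    (hfeas : ∀ x ∈ 𝒳, ∀ y ∈ 𝒴, Φ (x, y) ≤ φ x + ψ y)
    (hmin : ∀ (φ' : (Fin d → ℝ) → ℝ) (ψ' : (Fin d' → ℝ) → ℝ),
      Measurable φ' → Measurable ψ' → Integrable φ' P → Integrable ψ' Q →
      (∀ x ∈ 𝒳, ∀ y ∈ 𝒴, Φ (x, y) ≤ φ' x + ψ' y) →
      ∫ x, φ x ∂P + ∫ y, ψ y ∂Q ≤ ∫ x, φ' x ∂P + ∫ y, ψ' y ∂Q) :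
    (∀ᵐ x ∂P, φ x = sSup ((fun y => Φ (x, y) - ψ y) '' 𝒴)) ∧
    (∀ᵐ y ∂Q, ψ y = sSup ((fun x => Φ (x, y) - φ x) '' 𝒳)) :=
  mk_dual_conjugacy_general 𝒳 𝒴 P Q hP hQ Φ hΦcont hΦbdd φ ψ hφmeas hψmeas hφint hψint hfeas hmin
end

section
/- Conjugate structure of dual solutions for the scalar product surplus: let P and Q be Borel probability measures on ℝ^d with finite second moments and let Φ(x,y) = x⊤y. Then there exists a minimizer (φ, ψ) of the dual Monge–Kantorovich problem in which φ : ℝ^d → ℝ ∪ {+∞} is a proper lower semicontinuous convex function and ψ = φ* is its Legendre–Fenchel conjugate, i.e. ψ(y) = sup_{x ∈ ℝ^d} {x⊤y − φ(x)}, and moreover φ = ψ*, i.e. φ(x) = sup_{y ∈ ℝ^d} {x⊤y − ψ(y)}. -/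
/-!
The dual infimum `D` is attained by a lattice argument. If `(f, g)` and `(f', g')` are feasible,
so are `(f ⊔ f', g ⊓ g')` and `(f ⊓ f', g ⊔ g')`, with the same total value; as the second pair is
worth at least `D`, the windows `(f_m ⊔ ⋯ ⊔ f_{m+n}, g_m ⊓ ⋯ ⊓ g_{m+n})` of a minimizing sequence
of values `D + ε_k` exceed `D` by at most `∑_{k ≥ m} ε_k`. Monotone convergence in `n` and then
in `m` gives the feasible pair `(limsup f_k, liminf g_k)`, of value `D`.

An optimal pair `(f, g)` is then replaced by a conjugate one. The essential conjugate
`φ₁ x = ess sup_y (⟪x, y⟫ - g y)` lies below `f` almost everywhere by feasibility. Restricted to a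
ball of radius `R`, the functions `x ↦ ⟪x, y⟫ - g y` are uniformly `R`-Lipschitz, so their
essential supremum is continuous and, by separability, bounds `⟪x, y⟫ - g y` for almost every `y`
simultaneously for all `x`; that is, `φ₁* ≤ g` almost everywhere. Hence `φ = φ₁**` satisfies
`φ** = φ`, `φ ≤ f` and `φ* ≤ g`; by Fenchel–Young `(φ, φ*)` is feasible, with integrable affine
minorants, and its value is at most that of `(f, g)`.
-/

open MeasureTheory
open scoped RealInnerProductSpace

/-- Convexity for an `ℝ ∪ {+∞}`-valued (i.e. `EReal`-valued, never `⊥`) function: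
whenever the values at two points are bounded by reals `a` and `b`, the value at a convex
combination is bounded by the corresponding convex combination of `a` and `b`. -/
def IsConvexEReal {E : Type*} [AddCommMonoid E] [Module ℝ E] (φ : E → EReal) : Prop :=
  ∀ (x y : E) (t a b : ℝ), 0 ≤ t → t ≤ 1 → φ x ≤ (a : EReal) → φ y ≤ (b : EReal) →
    φ (t • x + (1 - t) • y) ≤ ((t * a + (1 - t) * b : ℝ) : EReal)

open Filter Topology

theorem EReal.coe_sub_le_comm {a : ℝ} {b c : EReal} :
    (a : EReal) - b ≤ c ↔ (a : EReal) - c ≤ b := by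
  induction b <;> induction c <;> simp [← EReal.coe_sub, add_comm]

theorem EReal.toReal_le_of_le_coe {x : EReal} {r : ℝ} (h : x ≤ r) (hx : x ≠ ⊥) : x.toReal ≤ r := by
  simpa using EReal.toReal_le_toReal h hx (EReal.coe_ne_top r)

theorem EReal.le_toReal_of_coe_le {x : EReal} {r : ℝ} (h : (r : EReal) ≤ x) (hx : x ≠ ⊤) :
    r ≤ x.toReal := by
  simpa using EReal.toReal_le_toReal h (EReal.coe_ne_bot r) hx

section FenchelConj

variable {E : Type*} [NormedAddCommGroup E] [InnerProductSpace ℝ E]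

noncomputable def fenchelConj (f : E → EReal) (y : E) : EReal :=
  ⨆ x, ((⟪x, y⟫ : ℝ) : EReal) - f x

theorem inner_sub_le_fenchelConj (f : E → EReal) (x y : E) :
    ((⟪x, y⟫ : ℝ) : EReal) - f x ≤ fenchelConj f y :=
  le_iSup (fun x => ((⟪x, y⟫ : ℝ) : EReal) - f x) x

theorem fenchelConj_le_iff {f : E → EReal} {y : E} {c : EReal} :
    fenchelConj f y ≤ c ↔ ∀ x, ((⟪x, y⟫ : ℝ) : EReal) - f x ≤ c :=
  iSup_le_iff

theorem antitone_fenchelConj : Antitone (fenchelConj (E := E)) := fun _ _ h _ =>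
  iSup_mono fun _ => EReal.sub_le_sub le_rfl (h _)

theorem fenchelConj_fenchelConj_le (f : E → EReal) : fenchelConj (fenchelConj f) ≤ f :=
  fun x => fenchelConj_le_iff.2 fun y => by
    rw [real_inner_comm, EReal.coe_sub_le_comm]
    exact inner_sub_le_fenchelConj f x y

theorem fenchelConj_fenchelConj_fenchelConj (f : E → EReal) :
    fenchelConj (fenchelConj (fenchelConj f)) = fenchelConj f :=
  le_antisymm (fenchelConj_fenchelConj_le _) (antitone_fenchelConj (fenchelConj_fenchelConj_le f))

theorem lowerSemicontinuous_fenchelConj (f : E → EReal) : LowerSemicontinuous (fenchelConj f) :=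
  lowerSemicontinuous_iSup fun x => by
    simp_rw [sub_eq_add_neg]
    exact EReal.lowerSemicontinuous_add.comp
      ((continuous_coe_real_ereal.comp (continuous_const.inner continuous_id)).prodMk
        continuous_const)

theorem isConvexEReal_fenchelConj (f : E → EReal) : IsConvexEReal (fenchelConj f) := by
  intro y₁ y₂ t a b ht₀ ht₁ ha hb
  refine fenchelConj_le_iff.2 fun x => ?_
  have h₁ := (inner_sub_le_fenchelConj f x y₁).trans ha
  have h₂ := (inner_sub_le_fenchelConj f x y₂).trans hb
  generalize f x = s at h₁ h₂ ⊢
  induction s with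
  | bot => simp at h₁
  | top => simp
  | coe s =>
    rw [← EReal.coe_sub, EReal.coe_le_coe_iff] at h₁ h₂ ⊢
    rw [inner_add_right, real_inner_smul_right, real_inner_smul_right]
    nlinarith

theorem fenchelConj_ne_bot {f : E → EReal} (h : ∃ x, f x ≠ ⊤) (y : E) : fenchelConj f y ≠ ⊥ := by
  obtain ⟨x, hx⟩ := h
  refine ne_bot_of_le_ne_bot ?_ (inner_sub_le_fenchelConj f x y)
  generalize f x = s at hx
  induction s <;> simp_all [← EReal.coe_sub]

theorem coe_inner_sub_toReal_le_fenchelConj {f : E → EReal} {x : E} (htop : f x ≠ ⊤)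
    (hbot : f x ≠ ⊥) (y : E) : ((⟪x, y⟫ - (f x).toReal : ℝ) : EReal) ≤ fenchelConj f y := by
  rw [EReal.coe_sub, EReal.coe_toReal htop hbot]
  exact inner_sub_le_fenchelConj f x y

theorem fenchelConj_apply' (f : E → EReal) (x : E) :
    fenchelConj f x = ⨆ y, ((⟪x, y⟫ : ℝ) : EReal) - f y := by
  simp_rw [fenchelConj, real_inner_comm x]

end FenchelConj

section MonotoneLimit

variable {α : Type*} [MeasurableSpace α] {μ : Measure α}

theorem exists_tendsto_of_monotone_of_integral_le {h : ℕ → α → ℝ} (hm : ∀ n, Measurable (h n))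
    (hi : ∀ n, Integrable (h n) μ) (hmono : ∀ᵐ x ∂μ, Monotone fun n => h n x) {C : ℝ}
    (hC : ∀ n, ∫ x, h n x ∂μ ≤ C) :
    ∃ H : α → ℝ, Measurable H ∧ Integrable H μ ∧
      ∀ᵐ x ∂μ, Tendsto (fun n => h n x) atTop (𝓝 (H x)) := by
  set δ : ℕ → α → ENNReal := fun n x => ENNReal.ofReal (h n x - h 0 x)
  have hδm : ∀ n, Measurable (δ n) := fun n => ((hm n).sub (hm 0)).ennreal_ofReal
  have hδmono : ∀ᵐ x ∂μ, Monotone fun n => δ n x := by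
    filter_upwards [hmono] with x hx i j hij
    exact ENNReal.ofReal_le_ofReal (sub_le_sub_right (hx hij) _)
  have hδ_int : ∀ n, ∫⁻ x, δ n x ∂μ ≤ ENNReal.ofReal (C - ∫ x, h 0 x ∂μ) := fun n => by
    have := ofReal_integral_eq_lintegral_ofReal ((hi n).sub (hi 0))
      (hmono.mono fun x hx => sub_nonneg.2 (hx (Nat.zero_le n)))
    simp only [Pi.sub_apply, integral_sub (hi n) (hi 0)] at this
    exact this ▸ ENNReal.ofReal_le_ofReal (sub_le_sub_right (hC n) _)
  have hΔ : ∫⁻ x, ⨆ n, δ n x ∂μ ≠ ⊤ := by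
    rw [lintegral_iSup' (fun n => (hδm n).aemeasurable) hδmono]
    exact ne_top_of_le_ne_top ENNReal.ofReal_ne_top (iSup_le hδ_int)
  have hΔm : Measurable fun x => ⨆ n, δ n x := Measurable.iSup hδm
  refine ⟨fun x => h 0 x + (⨆ n, δ n x).toReal, (hm 0).add hΔm.ennreal_toReal,
    (hi 0).add (integrable_toReal_of_lintegral_ne_top hΔm.aemeasurable hΔ), ?_⟩
  filter_upwards [hmono, hδmono, ae_lt_top' hΔm.aemeasurable hΔ] with x hx hδx hfin
  have hlim := ((ENNReal.tendsto_toReal hfin.ne).comp (tendsto_atTop_iSup hδx)).const_add (h 0 x)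
  refine hlim.congr fun n => ?_
  simp [δ, ENNReal.toReal_ofReal (sub_nonneg.2 (hx (Nat.zero_le n)))]

theorem exists_tendsto_of_antitone_of_le_integral {h : ℕ → α → ℝ} (hm : ∀ n, Measurable (h n))
    (hi : ∀ n, Integrable (h n) μ) (hanti : ∀ᵐ x ∂μ, Antitone fun n => h n x) {C : ℝ}
    (hC : ∀ n, C ≤ ∫ x, h n x ∂μ) :
    ∃ H : α → ℝ, Measurable H ∧ Integrable H μ ∧
      ∀ᵐ x ∂μ, Tendsto (fun n => h n x) atTop (𝓝 (H x)) := by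
  obtain ⟨H, hHm, hHi, hH⟩ := exists_tendsto_of_monotone_of_integral_le (fun n => (hm n).neg)
    (fun n => (hi n).neg) (hanti.mono fun x hx => hx.neg) (C := -C)
    (fun n => by simpa [integral_neg] using hC n)
  refine ⟨-H, hHm.neg, hHi.neg, hH.mono fun x hx => by simpa using hx.neg⟩

end MonotoneLimit

section Tails

variable {γ : Type*}

def tailSup [SemilatticeSup γ] (u : ℕ → γ) (m : ℕ) : ℕ → γ
  | 0 => u m
  | n + 1 => tailSup u m n ⊔ u (m + n + 1)

def tailInf [SemilatticeInf γ] (u : ℕ → γ) (m : ℕ) : ℕ → γ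
  | 0 => u m
  | n + 1 => tailInf u m n ⊓ u (m + n + 1)

theorem monotone_tailSup [SemilatticeSup γ] (u : ℕ → γ) (m : ℕ) : Monotone (tailSup u m) :=
  monotone_nat_of_le_succ fun _ => le_sup_left

theorem antitone_tailInf [SemilatticeInf γ] (u : ℕ → γ) (m : ℕ) : Antitone (tailInf u m) :=
  antitone_nat_of_succ_le fun _ => inf_le_left

theorem tailSup_succ_le_tailSup [SemilatticeSup γ] (u : ℕ → γ) (m n : ℕ) :
    tailSup u (m + 1) n ≤ tailSup u m (n + 1) := by
  induction n with
  | zero => exact le_sup_right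
  | succ n ih => exact sup_le_sup ih (congrArg u (by omega)).le

theorem tailInf_le_tailInf_succ [SemilatticeInf γ] (u : ℕ → γ) (m n : ℕ) :
    tailInf u m (n + 1) ≤ tailInf u (m + 1) n := by
  induction n with
  | zero => exact inf_le_right
  | succ n ih => exact inf_le_inf ih (congrArg u (by omega)).le

theorem tailSup_apply {α : Type*} [SemilatticeSup γ] (u : ℕ → α → γ) (m n : ℕ) (x : α) :
    tailSup u m n x = tailSup (u · x) m n := by
  induction n with
  | zero => rfl
  | succ n ih => simp [tailSup, ih]

theorem tailInf_apply {α : Type*} [SemilatticeInf γ] (u : ℕ → α → γ) (m n : ℕ) (x : α) :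
    tailInf u m n x = tailInf (u · x) m n := by
  induction n with
  | zero => rfl
  | succ n ih => simp [tailInf, ih]

end Tails

theorem antitone_of_tendsto_tailSup {γ : Type*} [SemilatticeSup γ] [TopologicalSpace γ]
    [OrderClosedTopology γ] {u : ℕ → γ} {a : ℕ → γ}
    (h : ∀ m, Tendsto (tailSup u m) atTop (𝓝 (a m))) : Antitone a :=
  antitone_nat_of_succ_le fun m =>
    le_of_tendsto_of_tendsto' (h (m + 1)) ((h m).comp (tendsto_add_atTop_nat 1))
      (tailSup_succ_le_tailSup u m)

theorem monotone_of_tendsto_tailInf {γ : Type*} [SemilatticeInf γ] [TopologicalSpace γ]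
    [OrderClosedTopology γ] {u : ℕ → γ} {a : ℕ → γ}
    (h : ∀ m, Tendsto (tailInf u m) atTop (𝓝 (a m))) : Monotone a :=
  monotone_nat_of_le_succ fun m =>
    le_of_tendsto_of_tendsto' ((h m).comp (tendsto_add_atTop_nat 1)) (h (m + 1))
      (tailInf_le_tailInf_succ u m)

section DualFeasible

variable {α β : Type*} [MeasurableSpace α] [MeasurableSpace β] {μ : Measure α} {ν : Measure β}
  {c : α → β → ℝ} {f f' : α → ℝ} {g g' : β → ℝ}

structure DualFeasible (μ : Measure α) (ν : Measure β) (c : α → β → ℝ) (f : α → ℝ) (g : β → ℝ) :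
    Prop where
  measurable_left : Measurable f
  measurable_right : Measurable g
  integrable_left : Integrable f μ
  integrable_right : Integrable g ν
  ae_le : ∀ᵐ x ∂μ, ∀ᵐ y ∂ν, c x y ≤ f x + g y

noncomputable def dualValue (μ : Measure α) (ν : Measure β) (f : α → ℝ) (g : β → ℝ) : ℝ :=
  ∫ x, f x ∂μ + ∫ y, g y ∂ν

theorem le_max_add_min {a a' b b' c : ℝ} (h : c ≤ a + b) (h' : c ≤ a' + b') :
    c ≤ max a a' + min b b' := by
  rcases le_total b b' with hb | hb
  · linarith [min_eq_left hb, le_max_left a a']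
  · linarith [min_eq_right hb, le_max_right a a']

theorem DualFeasible.sup_inf (h : DualFeasible μ ν c f g) (h' : DualFeasible μ ν c f' g') :
    DualFeasible μ ν c (f ⊔ f') (g ⊓ g') where
  measurable_left := h.measurable_left.sup h'.measurable_left
  measurable_right := h.measurable_right.inf h'.measurable_right
  integrable_left := h.integrable_left.sup h'.integrable_left
  integrable_right := h.integrable_right.inf h'.integrable_right
  ae_le := by
    filter_upwards [h.ae_le, h'.ae_le] with x hx hx'
    filter_upwards [hx, hx'] with y hy hy'
    exact le_max_add_min hy hy'

theorem DualFeasible.inf_sup (h : DualFeasible μ ν c f g) (h' : DualFeasible μ ν c f' g') :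
    DualFeasible μ ν c (f ⊓ f') (g ⊔ g') where
  measurable_left := h.measurable_left.inf h'.measurable_left
  measurable_right := h.measurable_right.sup h'.measurable_right
  integrable_left := h.integrable_left.inf h'.integrable_left
  integrable_right := h.integrable_right.sup h'.integrable_right
  ae_le := by
    filter_upwards [h.ae_le, h'.ae_le] with x hx hx'
    filter_upwards [hx, hx'] with y hy hy'
    show c x y ≤ min (f x) (f' x) + max (g y) (g' y)
    rw [add_comm]
    exact le_max_add_min (by linarith) (by linarith)

theorem integral_sup_add_integral_inf {u v : α → ℝ} (hu : Integrable u μ) (hv : Integrable v μ) :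
    ∫ x, (u ⊔ v) x ∂μ + ∫ x, (u ⊓ v) x ∂μ = ∫ x, u x ∂μ + ∫ x, v x ∂μ := by
  rw [← integral_add (hu.sup hv) (hu.inf hv), ← integral_add hu hv]
  exact integral_congr_ae (Eventually.of_forall fun x => max_add_min (u x) (v x))

theorem DualFeasible.dualValue_sup_inf_le {D : ℝ}
    (hD : ∀ f g, DualFeasible μ ν c f g → D ≤ dualValue μ ν f g)
    (h : DualFeasible μ ν c f g) (h' : DualFeasible μ ν c f' g') :
    dualValue μ ν (f ⊔ f') (g ⊓ g') ≤ dualValue μ ν f g + dualValue μ ν f' g' - D := by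
  have hinf := hD _ _ (h.inf_sup h')
  have hf := integral_sup_add_integral_inf h.integrable_left h'.integrable_left
  have hg := integral_sup_add_integral_inf h.integrable_right h'.integrable_right
  simp only [dualValue] at *
  linarith

theorem DualFeasible.tailSup_tailInf {f : ℕ → α → ℝ} {g : ℕ → β → ℝ}
    (h : ∀ k, DualFeasible μ ν c (f k) (g k)) (m n : ℕ) :
    DualFeasible μ ν c (tailSup f m n) (tailInf g m n) := by
  induction n with
  | zero => exact h m
  | succ n ih => exact ih.sup_inf (h _)

theorem dualValue_tail_le {D : ℝ} (hD : ∀ f g, DualFeasible μ ν c f g → D ≤ dualValue μ ν f g)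
    {f : ℕ → α → ℝ} {g : ℕ → β → ℝ} (h : ∀ k, DualFeasible μ ν c (f k) (g k)) {ε : ℕ → ℝ}
    (hval : ∀ k, dualValue μ ν (f k) (g k) ≤ D + ε k) (m n : ℕ) :
    dualValue μ ν (tailSup f m n) (tailInf g m n) ≤
      D + ∑ k ∈ Finset.range (n + 1), ε (k + m) := by
  induction n with
  | zero => simpa [tailSup, tailInf] using hval m
  | succ n ih =>
    show dualValue μ ν (tailSup f m n ⊔ f (m + n + 1)) (tailInf g m n ⊓ g (m + n + 1)) ≤ _
    have := (DualFeasible.tailSup_tailInf h m n).dualValue_sup_inf_le hD (h (m + n + 1))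
    rw [Finset.sum_range_succ, show n + 1 + m = m + n + 1 by omega]
    linarith [hval (m + n + 1)]

theorem DualFeasible.of_tendsto {f : ℕ → α → ℝ} {g : ℕ → β → ℝ} {F : α → ℝ} {G : β → ℝ}
    (h : ∀ n, DualFeasible μ ν c (f n) (g n)) (hFm : Measurable F) (hGm : Measurable G)
    (hFi : Integrable F μ) (hGi : Integrable G ν)
    (hfF : ∀ᵐ x ∂μ, Tendsto (f · x) atTop (𝓝 (F x)))
    (hgG : ∀ᵐ y ∂ν, Tendsto (g · y) atTop (𝓝 (G y))) : DualFeasible μ ν c F G where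
  measurable_left := hFm
  measurable_right := hGm
  integrable_left := hFi
  integrable_right := hGi
  ae_le := by
    filter_upwards [ae_all_iff.2 fun n => (h n).ae_le, hfF] with x hx hxF
    filter_upwards [ae_all_iff.2 hx, hgG] with y hy hyG
    exact ge_of_tendsto' (hxF.add hyG) hy

theorem DualFeasible.add_sub (h : DualFeasible μ ν c f g) (a : ℝ) [IsFiniteMeasure μ]
    [IsFiniteMeasure ν] : DualFeasible μ ν c (fun x => f x + a) (fun y => g y - a) where
  measurable_left := h.measurable_left.add_const a
  measurable_right := h.measurable_right.sub_const a
  integrable_left := h.integrable_left.add (integrable_const a)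
  integrable_right := h.integrable_right.sub (integrable_const a)
  ae_le := h.ae_le.mono fun x hx => hx.mono fun y hy => by linarith

theorem dualValue_add_sub [IsProbabilityMeasure μ] [IsProbabilityMeasure ν] (hf : Integrable f μ)
    (hg : Integrable g ν) (a : ℝ) :
    dualValue μ ν (fun x => f x + a) (fun y => g y - a) = dualValue μ ν f g := by
  simp only [dualValue, integral_add hf (integrable_const a), integral_sub hg (integrable_const a),
    integral_const, probReal_univ, one_smul]
  ring

end DualFeasible

section Attainment

variable {α β : Type*} [MeasurableSpace α] [MeasurableSpace β] {μ : Measure α} {ν : Measure β}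
  {c : α → β → ℝ} {f : ℕ → α → ℝ} {g : ℕ → β → ℝ}

theorem DualFeasible.exists_limit_of_monotone (h : ∀ n, DualFeasible μ ν c (f n) (g n))
    (hf : ∀ᵐ x ∂μ, Monotone (f · x)) (hg : ∀ᵐ y ∂ν, Antitone (g · y)) {C C' : ℝ}
    (hfC : ∀ n, ∫ x, f n x ∂μ ≤ C) (hgC : ∀ n, C' ≤ ∫ y, g n y ∂ν) :
    ∃ F G, DualFeasible μ ν c F G ∧ (∀ᵐ x ∂μ, Tendsto (f · x) atTop (𝓝 (F x))) ∧
      (∀ᵐ y ∂ν, Tendsto (g · y) atTop (𝓝 (G y))) ∧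
      Tendsto (fun n => dualValue μ ν (f n) (g n)) atTop (𝓝 (dualValue μ ν F G)) := by
  obtain ⟨F, hFm, hFi, hfF⟩ := exists_tendsto_of_monotone_of_integral_le
    (fun n => (h n).measurable_left) (fun n => (h n).integrable_left) hf hfC
  obtain ⟨G, hGm, hGi, hgG⟩ := exists_tendsto_of_antitone_of_le_integral
    (fun n => (h n).measurable_right) (fun n => (h n).integrable_right) hg hgC
  exact ⟨F, G, .of_tendsto h hFm hGm hFi hGi hfF hgG, hfF, hgG,
    (integral_tendsto_of_tendsto_of_monotone (fun n => (h n).integrable_left) hFi hf hfF).add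
      (integral_tendsto_of_tendsto_of_antitone (fun n => (h n).integrable_right) hGi hg hgG)⟩

theorem DualFeasible.exists_limit_of_antitone (h : ∀ n, DualFeasible μ ν c (f n) (g n))
    (hf : ∀ᵐ x ∂μ, Antitone (f · x)) (hg : ∀ᵐ y ∂ν, Monotone (g · y)) {C C' : ℝ}
    (hfC : ∀ n, C ≤ ∫ x, f n x ∂μ) (hgC : ∀ n, ∫ y, g n y ∂ν ≤ C') :
    ∃ F G, DualFeasible μ ν c F G ∧
      Tendsto (fun n => dualValue μ ν (f n) (g n)) atTop (𝓝 (dualValue μ ν F G)) := by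
  obtain ⟨F, hFm, hFi, hfF⟩ := exists_tendsto_of_antitone_of_le_integral
    (fun n => (h n).measurable_left) (fun n => (h n).integrable_left) hf hfC
  obtain ⟨G, hGm, hGi, hgG⟩ := exists_tendsto_of_monotone_of_integral_le
    (fun n => (h n).measurable_right) (fun n => (h n).integrable_right) hg hgC
  exact ⟨F, G, .of_tendsto h hFm hGm hFi hGi hfF hgG,
    (integral_tendsto_of_tendsto_of_antitone (fun n => (h n).integrable_left) hFi hf hfF).add
      (integral_tendsto_of_tendsto_of_monotone (fun n => (h n).integrable_right) hGi hg hgG)⟩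

theorem DualFeasible.exists_tailSup_tailInf_limit (h : ∀ k, DualFeasible μ ν c (f k) (g k))
    (m : ℕ) {K : ℝ}
    (hK : ∀ n, dualValue μ ν (tailSup f m n) (tailInf g m n) ≤ K) {ℓ : β → ℝ}
    (hℓ : Integrable ℓ ν) (hgℓ : ∀ k, ℓ ≤ᵐ[ν] g k) :
    ∃ A B, DualFeasible μ ν c A B ∧ dualValue μ ν A B ≤ K ∧
      (∀ᵐ x ∂μ, Tendsto (fun n => tailSup f m n x) atTop (𝓝 (A x))) ∧
      (∀ᵐ y ∂ν, Tendsto (fun n => tailInf g m n y) atTop (𝓝 (B y))) := by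
  have hgC : ∀ n, ∫ y, ℓ y ∂ν ≤ ∫ y, tailInf g m n y ∂ν := fun n => by
    refine integral_mono_ae hℓ (DualFeasible.tailSup_tailInf h m n).integrable_right ?_
    induction n with
    | zero => exact hgℓ m
    | succ n ih => exact ih.le_inf (hgℓ _)
  have hfC : ∀ n, ∫ x, tailSup f m n x ∂μ ≤ K - ∫ y, ℓ y ∂ν := fun n => by
    have := hK n
    rw [dualValue] at this
    linarith [hgC n]
  obtain ⟨A, B, hAB, hfA, hgB, hV⟩ :=
    DualFeasible.exists_limit_of_monotone (DualFeasible.tailSup_tailInf h m)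
      (Eventually.of_forall fun x _ _ hij => monotone_tailSup f m hij x)
      (Eventually.of_forall fun y _ _ hij => antitone_tailInf g m hij y) hfC hgC
  exact ⟨A, B, hAB, le_of_tendsto' hV hK, hfA, hgB⟩

theorem exists_dualFeasible_dualValue_le {D : ℝ}
    (hD : ∀ f g, DualFeasible μ ν c f g → D ≤ dualValue μ ν f g)
    (h : ∀ k, DualFeasible μ ν c (f k) (g k)) {ε : ℕ → ℝ} (hε₀ : ∀ k, 0 ≤ ε k)
    (hε : Summable ε) (hval : ∀ k, dualValue μ ν (f k) (g k) ≤ D + ε k)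
    {ℓ : α → ℝ} {ℓ' : β → ℝ} (hℓ : Integrable ℓ μ) (hℓ' : Integrable ℓ' ν)
    (hfℓ : ∀ k, ℓ ≤ᵐ[μ] f k) (hgℓ : ∀ k, ℓ' ≤ᵐ[ν] g k) :
    ∃ F G, DualFeasible μ ν c F G ∧ dualValue μ ν F G ≤ D := by
  have hW : ∀ m n, dualValue μ ν (tailSup f m n) (tailInf g m n) ≤ D + ∑' k, ε (k + m) :=
    fun m n => (dualValue_tail_le hD h hval m n).trans <| by
      gcongr
      exact ((summable_nat_add_iff m).2 hε).sum_le_tsum _ fun k _ => hε₀ _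
  choose A B hAB hV hfA hgB using
    fun m => DualFeasible.exists_tailSup_tailInf_limit h m (hW m) hℓ' hgℓ
  have hA : ∀ᵐ x ∂μ, Antitone (A · x) := by
    filter_upwards [ae_all_iff.2 hfA] with x hx
    exact antitone_of_tendsto_tailSup fun m => by simpa only [tailSup_apply] using hx m
  have hB : ∀ᵐ y ∂ν, Monotone (B · y) := by
    filter_upwards [ae_all_iff.2 hgB] with y hy
    exact monotone_of_tendsto_tailInf fun m => by simpa only [tailInf_apply] using hy m
  have hAℓ : ∀ m, ∫ x, ℓ x ∂μ ≤ ∫ x, A m x ∂μ := fun m => by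
    refine integral_mono_ae hℓ (hAB m).integrable_left ?_
    filter_upwards [hfA m, ae_all_iff.2 hfℓ] with x hx hxℓ
    exact ge_of_tendsto' hx fun n => (hxℓ m).trans (monotone_tailSup f m n.zero_le x)
  obtain ⟨T, hT⟩ := (tendsto_sum_nat_add ε).bddAbove_range
  have hBT : ∀ m, ∫ y, B m y ∂ν ≤ D + T - ∫ x, ℓ x ∂μ := fun m => by
    have hτT : ∑' k, ε (k + m) ≤ T := hT ⟨m, rfl⟩
    have := hV m
    rw [dualValue] at this
    linarith [hAℓ m]
  obtain ⟨F, G, hFG, hVFG⟩ := DualFeasible.exists_limit_of_antitone hAB hA hB hAℓ hBT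
  refine ⟨F, G, hFG, le_of_tendsto_of_tendsto' hVFG ?_ hV⟩
  simpa using (tendsto_sum_nat_add ε).const_add D

end Attainment

theorem integrable_of_integrable_norm_sq {E : Type*} [NormedAddCommGroup E] [MeasurableSpace E]
    [OpensMeasurableSpace E] [SecondCountableTopology E] {μ : Measure E} [IsFiniteMeasure μ]
    (h : Integrable (fun x => ‖x‖ ^ 2) μ) : Integrable (fun x => x) μ :=
  ((memLp_two_iff_integrable_sq_norm aestronglyMeasurable_id).2 h).integrable one_le_two

section InnerCost

variable {E : Type*} [NormedAddCommGroup E] [InnerProductSpace ℝ E] [CompleteSpace E]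
  [MeasurableSpace E] {μ ν : Measure E} {f g : E → ℝ}

theorem ae_inner_integral_le [IsProbabilityMeasure ν] (hν : Integrable (fun x => x) ν)
    (hg : Integrable g ν) (h : ∀ᵐ x ∂μ, ∀ᵐ y ∂ν, ⟪x, y⟫ ≤ f x + g y) :
    ∀ᵐ x ∂μ, ⟪x, ∫ y, y ∂ν⟫ ≤ f x + ∫ y, g y ∂ν := by
  filter_upwards [h] with x hx
  have := integral_mono_ae (g := fun y => f x + g y) (hν.const_inner x)
    ((integrable_const (f x)).add hg) hx
  rwa [integral_inner hν, integral_add (integrable_const _) hg, integral_const, probReal_univ,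
    one_smul] at this

theorem DualFeasible.ae_inner_integral_sub_le_left [IsProbabilityMeasure ν]
    (hν : Integrable (fun x => x) ν) (h : DualFeasible μ ν (fun x y => ⟪x, y⟫) f g) :
    ∀ᵐ x ∂μ, ⟪x, ∫ y, y ∂ν⟫ - ∫ y, g y ∂ν ≤ f x :=
  (ae_inner_integral_le hν h.integrable_right h.ae_le).mono fun x hx => by linarith

theorem DualFeasible.ae_inner_integral_sub_le_right [OpensMeasurableSpace E]
    [SecondCountableTopology E] [IsProbabilityMeasure μ] [IsProbabilityMeasure ν]
    (hμ : Integrable (fun x => x) μ) (h : DualFeasible μ ν (fun x y => ⟪x, y⟫) f g) :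
    ∀ᵐ y ∂ν, ⟪∫ x, x ∂μ, y⟫ - ∫ x, f x ∂μ ≤ g y := by
  have hmeas : MeasurableSet {p : E × E | ⟪p.1, p.2⟫ ≤ f p.1 + g p.2} :=
    measurableSet_le (measurable_fst.inner measurable_snd)
      ((h.measurable_left.comp measurable_fst).add (h.measurable_right.comp measurable_snd))
  have hswap : ∀ᵐ y ∂ν, ∀ᵐ x ∂μ, ⟪y, x⟫ ≤ g y + f x :=
    ((Measure.ae_ae_comm hmeas).1 h.ae_le).mono fun y hy => hy.mono fun x hx => by
      rwa [real_inner_comm, add_comm]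
  filter_upwards [ae_inner_integral_le hμ h.integrable_left hswap] with y hy
  rw [real_inner_comm]
  linarith

theorem DualFeasible.inner_integral_le_dualValue [IsProbabilityMeasure μ] [IsProbabilityMeasure ν]
    (hμ : Integrable (fun x => x) μ) (hν : Integrable (fun x => x) ν)
    (h : DualFeasible μ ν (fun x y => ⟪x, y⟫) f g) :
    ⟪∫ x, x ∂μ, ∫ y, y ∂ν⟫ ≤ dualValue μ ν f g := by
  have := integral_mono_ae (g := fun x => f x + ∫ y, g y ∂ν) (hμ.inner_const _)
    (h.integrable_left.add (integrable_const _))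
    (ae_inner_integral_le hν h.integrable_right h.ae_le)
  rw [integral_add h.integrable_left (integrable_const _), integral_const, probReal_univ,
    one_smul] at this
  rw [real_inner_comm, ← integral_inner hμ]
  simp_rw [real_inner_comm _ (∫ y, y ∂ν)]
  exact this

end InnerCost

theorem dualFeasible_half_sq_norm {E : Type*} [NormedAddCommGroup E] [InnerProductSpace ℝ E]
    [MeasurableSpace E] [OpensMeasurableSpace E] {μ ν : Measure E}
    (hμ : Integrable (fun x => ‖x‖ ^ 2) μ) (hν : Integrable (fun y => ‖y‖ ^ 2) ν) :
    DualFeasible μ ν (fun x y => ⟪x, y⟫) (fun x => ‖x‖ ^ 2 / 2) (fun y => ‖y‖ ^ 2 / 2) where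
  measurable_left := (measurable_norm.pow_const 2).div_const 2
  measurable_right := (measurable_norm.pow_const 2).div_const 2
  integrable_left := hμ.div_const 2
  integrable_right := hν.div_const 2
  ae_le := .of_forall fun x => .of_forall fun y => by
    nlinarith [real_inner_le_norm x y, two_mul_le_add_sq ‖x‖ ‖y‖]

section Minimizer

variable {E : Type*} [NormedAddCommGroup E] [InnerProductSpace ℝ E] [CompleteSpace E]
  [MeasurableSpace E] [OpensMeasurableSpace E] [SecondCountableTopology E]
  {μ ν : Measure E} [IsProbabilityMeasure μ] [IsProbabilityMeasure ν]

theorem exists_dualFeasible_inner_minimizer (hμ : Integrable (fun x => ‖x‖ ^ 2) μ)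
    (hν : Integrable (fun y => ‖y‖ ^ 2) ν) :
    ∃ f g, DualFeasible μ ν (fun x y => ⟪x, y⟫) f g ∧
      ∀ f' g', DualFeasible μ ν (fun x y => ⟪x, y⟫) f' g' →
        dualValue μ ν f g ≤ dualValue μ ν f' g' := by
  have hμ₁ := integrable_of_integrable_norm_sq hμ
  have hν₁ := integrable_of_integrable_norm_sq hν
  set S := {v | ∃ f g, DualFeasible μ ν (fun x y => ⟪x, y⟫) f g ∧ dualValue μ ν f g = v}
  have hS : IsGLB S (sInf S) := isGLB_csInf ⟨_, _, _, dualFeasible_half_sq_norm hμ hν, rfl⟩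
    ⟨_, by rintro _ ⟨f, g, hfg, rfl⟩; exact hfg.inner_integral_le_dualValue hμ₁ hν₁⟩
  set D := sInf S
  have hD : ∀ f g, DualFeasible μ ν (fun x y => ⟪x, y⟫) f g → D ≤ dualValue μ ν f g :=
    fun f g hfg => hS.1 ⟨f, g, hfg, rfl⟩
  -- normalizing `∫ g = 0` makes the affine minorants of `f k` and `g k` below uniform in `k`
  have hseq : ∀ k : ℕ, ∃ f g, DualFeasible μ ν (fun x y => ⟪x, y⟫) f g ∧
      dualValue μ ν f g ≤ D + (1 / 2) ^ k ∧ ∫ y, g y ∂ν = 0 := fun k => by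
    obtain ⟨_, ⟨f, g, hfg, rfl⟩, -, hlt⟩ :=
      hS.exists_between (lt_add_of_pos_right D (pow_pos one_half_pos k))
    refine ⟨_, _, hfg.add_sub (∫ y, g y ∂ν), ?_, ?_⟩
    · rw [dualValue_add_sub hfg.integrable_left hfg.integrable_right]
      exact hlt.le
    · simp [integral_sub hfg.integrable_right (integrable_const _)]
  choose f g hfg hval hg using hseq
  have hf : ∀ k, ∫ x, f k x ∂μ ≤ D + 1 := fun k => by
    have := hval k
    rw [dualValue, hg k] at this
    linarith [pow_le_one₀ (by norm_num : (0 : ℝ) ≤ 1 / 2) (by norm_num) (n := k)]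
  obtain ⟨F, G, hFG, hV⟩ := exists_dualFeasible_dualValue_le hD hfg (fun k => by positivity)
    summable_geometric_two hval (hμ₁.inner_const (∫ y, y ∂ν))
    ((hν₁.const_inner (∫ x, x ∂μ)).sub (integrable_const (D + 1)))
    (fun k => ((hfg k).ae_inner_integral_sub_le_left hν₁).mono fun x hx => by
      simpa [hg k] using hx)
    (fun k => ((hfg k).ae_inner_integral_sub_le_right hμ₁).mono fun y hy => by
      show ⟪∫ x, x ∂μ, y⟫ - (D + 1) ≤ g k y
      linarith [hf k])
  exact ⟨F, G, hFG, fun f' g' h' => hV.trans (hD f' g' h')⟩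

end Minimizer

theorem ae_forall_le_of_continuous {X α γ : Type*} [TopologicalSpace X]
    [TopologicalSpace.SeparableSpace X] [MeasurableSpace α] {μ : Measure α} [TopologicalSpace γ]
    [Preorder γ] [OrderClosedTopology γ] {F G : X → α → γ} (hF : ∀ y, Continuous (F · y))
    (hG : ∀ y, Continuous (G · y)) (h : ∀ x, ∀ᵐ y ∂μ, F x y ≤ G x y) :
    ∀ᵐ y ∂μ, ∀ x, F x y ≤ G x y := by
  obtain ⟨s, hs, hsd⟩ := TopologicalSpace.exists_countable_dense X
  filter_upwards [(ae_ball_iff hs).2 fun x _ => h x] with y hy x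
  exact (isClosed_le (hF y) (hG y)).closure_subset_iff.2 hy (hsd.closure_eq ▸ Set.mem_univ x)

theorem ae_forall_le_essSup_of_lipschitz {X α : Type*} [PseudoMetricSpace X]
    [TopologicalSpace.SeparableSpace X] [MeasurableSpace α] {μ : Measure α} {F : X → α → ℝ}
    {K : ℝ} (hF : ∀ y, Continuous (F · y))
    (hK : ∀ x x', ∀ᵐ y ∂μ, F x y ≤ F x' y + K * dist x x')
    (hfin : ∀ x, essSup (fun y => (F x y : EReal)) μ ≠ ⊤) :
    ∀ᵐ y ∂μ, ∀ x, (F x y : EReal) ≤ essSup (fun y => (F x y : EReal)) μ := by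
  rcases eq_zero_or_neZero μ with rfl | hμ
  · simp
  set u : X → EReal := fun x => essSup (fun y => (F x y : EReal)) μ
  have hu : ∀ x, ∀ᵐ y ∂μ, (F x y : EReal) ≤ u x := fun x => ae_le_essSup
  have hu_bot : ∀ x, u x ≠ ⊥ := fun x hx => by
    obtain ⟨y, hy⟩ := (hu x).exists
    exact EReal.coe_ne_bot _ (le_bot_iff.1 (hx ▸ hy))
  have hu_coe : ∀ x, ((u x).toReal : EReal) = u x := fun x => EReal.coe_toReal (hfin x) (hu_bot x)
  have hlip : ∀ x x', (u x).toReal ≤ (u x').toReal + K * dist x x' := fun x x' => by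
    refine EReal.coe_le_coe_iff.1 ((hu_coe x).trans_le (essSup_le_of_ae_le _ ?_))
    filter_upwards [hK x x', hu x'] with y hy hy'
    rw [← hu_coe x'] at hy'
    exact EReal.coe_le_coe_iff.2 (by linarith [EReal.coe_le_coe_iff.1 hy'])
  have hcont : Continuous u := by
    rw [show u = fun x => ((u x).toReal : EReal) from funext fun x => (hu_coe x).symm]
    exact continuous_coe_real_ereal.comp (LipschitzWith.of_le_add_mul' K hlip).continuous
  exact ae_forall_le_of_continuous (fun y => continuous_coe_real_ereal.comp (hF y))
    (fun _ => hcont) hu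

theorem inner_sub_inner_le {E : Type*} [NormedAddCommGroup E] [InnerProductSpace ℝ E]
    {x x' y : E} {R : ℝ} (hy : ‖y‖ ≤ R) : ⟪x, y⟫ - ⟪x', y⟫ ≤ R * ‖x - x'‖ := by
  rw [← inner_sub_left, mul_comm]
  exact (real_inner_le_norm _ _).trans (mul_le_mul_of_nonneg_left hy (norm_nonneg _))

section EssConj

variable {E : Type*} [NormedAddCommGroup E] [InnerProductSpace ℝ E] [MeasurableSpace E]

noncomputable def essConj (ν : Measure E) (g : E → ℝ) (x : E) : EReal :=
  essSup (fun y => ((⟪x, y⟫ - g y : ℝ) : EReal)) ν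

theorem ae_forall_inner_sub_le_essConj [OpensMeasurableSpace E] [SecondCountableTopology E]
    {ν : Measure E} {g : E → ℝ} {z : E} {c : ℝ} (hg : ∀ᵐ y ∂ν, ⟪z, y⟫ - c ≤ g y) :
    ∀ᵐ y ∂ν, ∀ x, ((⟪x, y⟫ - g y : ℝ) : EReal) ≤ essConj ν g x := by
  have hball : ∀ n : ℕ, ∀ᵐ y ∂ν.restrict (Metric.closedBall 0 n),
      ∀ x, ((⟪x, y⟫ - g y : ℝ) : EReal) ≤ essConj ν g x := fun n => by
    have hn : ∀ᵐ y ∂ν.restrict (Metric.closedBall 0 n), ‖y‖ ≤ n :=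
      (ae_restrict_mem Metric.isClosed_closedBall.measurableSet).mono fun y hy =>
        mem_closedBall_zero_iff.1 hy
    have hfin : ∀ x, essConj (ν.restrict (Metric.closedBall 0 n)) g x ≠ ⊤ := fun x =>
      ne_top_of_le_ne_top (EReal.coe_ne_top (n * ‖x - z‖ + c)) <| essSup_le_of_ae_le _ <| by
        filter_upwards [hn, ae_restrict_of_ae hg] with y hy hgy
        exact EReal.coe_le_coe_iff.2 (by linarith [inner_sub_inner_le (x := x) (x' := z) hy])
    filter_upwards [ae_forall_le_essSup_of_lipschitz (F := fun x y => ⟪x, y⟫ - g y) (K := n)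
      (fun y => (continuous_id.inner continuous_const).sub continuous_const)
      (fun x x' => hn.mono fun y hy => by
        rw [dist_eq_norm]
        linarith [inner_sub_inner_le (x := x) (x' := x') hy]) hfin] with y hy x
    exact (hy x).trans (essSup_mono_measure' Measure.restrict_le_self)
  have := (ae_restrict_iUnion_iff _ _).2 hball
  rwa [Metric.iUnion_closedBall_nat, Measure.restrict_univ] at this

theorem ae_fenchelConj_essConj_le [OpensMeasurableSpace E] [SecondCountableTopology E]
    {ν : Measure E} {g : E → ℝ} {z : E} {c : ℝ} (hg : ∀ᵐ y ∂ν, ⟪z, y⟫ - c ≤ g y) :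
    ∀ᵐ y ∂ν, fenchelConj (essConj ν g) y ≤ g y := by
  filter_upwards [ae_forall_inner_sub_le_essConj hg] with y hy
  refine fenchelConj_le_iff.2 fun x => ?_
  rw [EReal.coe_sub_le_comm, ← EReal.coe_sub]
  exact hy x

theorem ae_essConj_le {μ ν : Measure E} {f g : E → ℝ}
    (h : ∀ᵐ x ∂μ, ∀ᵐ y ∂ν, ⟪x, y⟫ ≤ f x + g y) : ∀ᵐ x ∂μ, essConj ν g x ≤ f x :=
  h.mono fun x hx => essSup_le_of_ae_le _ <| hx.mono fun y hy =>
    EReal.coe_le_coe_iff.2 (by linarith)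

end EssConj

theorem integrable_toReal_of_coe_le_of_le_coe {α : Type*} [MeasurableSpace α] {μ : Measure α}
    {φ : α → EReal} (hφ : Measurable φ) {ℓ u : α → ℝ} (hℓ : Integrable ℓ μ) (hu : Integrable u μ)
    (hℓφ : ∀ᵐ x ∂μ, (ℓ x : EReal) ≤ φ x) (hφu : ∀ᵐ x ∂μ, φ x ≤ u x) :
    Integrable (fun x => (φ x).toReal) μ := by
  refine integrable_of_le_of_le hφ.ereal_toReal.aestronglyMeasurable ?_ ?_ hℓ hu
  · filter_upwards [hℓφ, hφu] with x h₁ h₂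
    exact EReal.le_toReal_of_coe_le h₁ (ne_top_of_le_ne_top (EReal.coe_ne_top _) h₂)
  · filter_upwards [hℓφ, hφu] with x h₁ h₂
    exact EReal.toReal_le_of_le_coe h₂ (ne_bot_of_le_ne_bot (EReal.coe_ne_bot _) h₁)

section ConjugatePair

variable {E : Type*} [NormedAddCommGroup E] [InnerProductSpace ℝ E] [MeasurableSpace E]
  [OpensMeasurableSpace E] {μ ν : Measure E} [IsProbabilityMeasure μ] [IsProbabilityMeasure ν]
  {f g : E → ℝ}

theorem DualFeasible.exists_biconj_le [CompleteSpace E] [SecondCountableTopology E]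
    (hμ : Integrable (fun x => x) μ) (h : DualFeasible μ ν (fun x y => ⟪x, y⟫) f g) :
    ∃ φ : E → EReal, fenchelConj (fenchelConj φ) = φ ∧ (∀ᵐ x ∂μ, φ x ≤ f x) ∧
      ∀ᵐ y ∂ν, fenchelConj φ y ≤ g y := by
  set ψ := fenchelConj (essConj ν g)
  refine ⟨fenchelConj ψ, fenchelConj_fenchelConj_fenchelConj _, ?_, ?_⟩
  · exact (ae_essConj_le h.ae_le).mono fun x hx => (fenchelConj_fenchelConj_le _ x).trans hx
  · exact (ae_fenchelConj_essConj_le (h.ae_inner_integral_sub_le_right hμ)).mono fun y hy =>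
      (fenchelConj_fenchelConj_le ψ y).trans hy

theorem DualFeasible.toReal_fenchelConj (hμ : Integrable (fun x => x) μ)
    (hν : Integrable (fun x => x) ν) (h : DualFeasible μ ν (fun x y => ⟪x, y⟫) f g)
    {φ : E → EReal} (hφ : fenchelConj (fenchelConj φ) = φ) (hφf : ∀ᵐ x ∂μ, φ x ≤ f x)
    (hψg : ∀ᵐ y ∂ν, fenchelConj φ y ≤ g y) :
    DualFeasible μ ν (fun x y => ⟪x, y⟫) (fun x => (φ x).toReal)
        (fun y => (fenchelConj φ y).toReal) ∧
      dualValue μ ν (fun x => (φ x).toReal) (fun y => (fenchelConj φ y).toReal) ≤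
        dualValue μ ν f g := by
  have hφ_top : ∀ᵐ x ∂μ, φ x ≠ ⊤ := hφf.mono fun _ => ne_top_of_le_ne_top (EReal.coe_ne_top _)
  have hψ_top : ∀ᵐ y ∂ν, fenchelConj φ y ≠ ⊤ :=
    hψg.mono fun _ => ne_top_of_le_ne_top (EReal.coe_ne_top _)
  obtain ⟨x₀, hx₀⟩ := hφ_top.exists
  obtain ⟨y₀, hy₀⟩ := hψ_top.exists
  have hφ_bot : ∀ x, φ x ≠ ⊥ := hφ ▸ fenchelConj_ne_bot ⟨y₀, hy₀⟩
  have hψ_bot : ∀ y, fenchelConj φ y ≠ ⊥ := fenchelConj_ne_bot ⟨x₀, hx₀⟩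
  have hφm : Measurable φ := hφ ▸ (lowerSemicontinuous_fenchelConj _).measurable
  have hψm := (lowerSemicontinuous_fenchelConj φ).measurable
  have hφi := integrable_toReal_of_coe_le_of_le_coe hφm
    ((hμ.const_inner y₀).sub (integrable_const _)) h.integrable_left
    (.of_forall fun x => hφ ▸ coe_inner_sub_toReal_le_fenchelConj hy₀ (hψ_bot y₀) x) hφf
  have hψi := integrable_toReal_of_coe_le_of_le_coe hψm
    ((hν.const_inner x₀).sub (integrable_const _)) h.integrable_right
    (.of_forall fun y => coe_inner_sub_toReal_le_fenchelConj hx₀ (hφ_bot x₀) y) hψg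
  refine ⟨⟨hφm.ereal_toReal, hψm.ereal_toReal, hφi, hψi, ?_⟩, add_le_add
    (integral_mono_ae hφi h.integrable_left
      (hφf.mono fun x hx => EReal.toReal_le_of_le_coe hx (hφ_bot x)))
    (integral_mono_ae hψi h.integrable_right
      (hψg.mono fun y hy => EReal.toReal_le_of_le_coe hy (hψ_bot y)))⟩
  filter_upwards [hφ_top] with x hx
  filter_upwards [hψ_top] with y hy
  linarith [EReal.le_toReal_of_coe_le (coe_inner_sub_toReal_le_fenchelConj hx (hφ_bot x) y) hy]

end ConjugatePair

/-- Conjugate structure of dual solutions for the scalar product surplus: for `P`, `Q`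
Borel probability measures on `ℝ^d` with finite second moments and `Φ(x,y) = ⟪x,y⟫`,
there is a dual minimizer `(φ, ψ)` with `φ` proper, lower semicontinuous and convex,
`ψ = φ*` its Legendre–Fenchel conjugate, and `φ = ψ*`. -/
theorem mk_scalar_product_conjugate_dual
    {d : ℕ} (P Q : Measure (EuclideanSpace ℝ (Fin d)))
    [IsProbabilityMeasure P] [IsProbabilityMeasure Q]
    (hP2 : Integrable (fun x => ‖x‖ ^ 2) P) (hQ2 : Integrable (fun y => ‖y‖ ^ 2) Q) :
    ∃ (φ ψ : EuclideanSpace ℝ (Fin d) → EReal),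
      -- φ is proper: nowhere −∞ and somewhere finite
      (∀ x, φ x ≠ ⊥) ∧ (∃ x, φ x ≠ ⊤) ∧
      -- φ is lower semicontinuous and convex
      LowerSemicontinuous φ ∧ IsConvexEReal φ ∧
      -- ψ = φ* and φ = ψ* (Legendre–Fenchel conjugation)
      (∀ y, ψ y = ⨆ x, ((⟪x, y⟫ : ℝ) : EReal) - φ x) ∧
      (∀ x, φ x = ⨆ y, ((⟪x, y⟫ : ℝ) : EReal) - ψ y) ∧
      -- φ and ψ are a.e. finite, with integrable real versions ...
      (∀ᵐ x ∂P, φ x ≠ ⊤) ∧ (∀ᵐ y ∂Q, ψ y ≠ ⊤) ∧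
      Integrable (fun x => (φ x).toReal) P ∧ Integrable (fun y => (ψ y).toReal) Q ∧
      -- ... which form a feasible pair for the dual problem ...
      (∀ᵐ x ∂P, ∀ᵐ y ∂Q, ⟪x, y⟫ ≤ (φ x).toReal + (ψ y).toReal) ∧
      -- ... that minimizes the dual objective among all feasible pairs
      (∀ (φ' : EuclideanSpace ℝ (Fin d) → ℝ) (ψ' : EuclideanSpace ℝ (Fin d) → ℝ),
        Measurable φ' → Measurable ψ' → Integrable φ' P → Integrable ψ' Q →
        (∀ᵐ x ∂P, ∀ᵐ y ∂Q, ⟪x, y⟫ ≤ φ' x + ψ' y) →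
        ∫ x, (φ x).toReal ∂P + ∫ y, (ψ y).toReal ∂Q ≤
          ∫ x, φ' x ∂P + ∫ y, ψ' y ∂Q) := by
  have hP := integrable_of_integrable_norm_sq hP2
  have hQ := integrable_of_integrable_norm_sq hQ2
  obtain ⟨f, g, hfg, hmin⟩ := exists_dualFeasible_inner_minimizer hP2 hQ2
  obtain ⟨φ, hφ, hφf, hψg⟩ := hfg.exists_biconj_le hP
  obtain ⟨hreal, hval⟩ := hfg.toReal_fenchelConj hP hQ hφ hφf hψg
  have hφ_top : ∀ᵐ x ∂P, φ x ≠ ⊤ := hφf.mono fun _ => ne_top_of_le_ne_top (EReal.coe_ne_top _)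
  have hψ_top : ∀ᵐ y ∂Q, fenchelConj φ y ≠ ⊤ :=
    hψg.mono fun _ => ne_top_of_le_ne_top (EReal.coe_ne_top _)
  refine ⟨φ, fenchelConj φ, hφ ▸ fenchelConj_ne_bot hψ_top.exists, hφ_top.exists,
    hφ ▸ lowerSemicontinuous_fenchelConj _, hφ ▸ isConvexEReal_fenchelConj _, fun y => rfl,
    fun x => by rw [← fenchelConj_apply', hφ], hφ_top, hψ_top, hreal.integrable_left,
    hreal.integrable_right, hreal.ae_le, fun φ' ψ' hφ' hψ' hφ'i hψ'i h' =>
      hval.trans (hmin φ' ψ' ⟨hφ', hψ', hφ'i, hψ'i, h'⟩)⟩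
end

section
/- Brenier representation of optimal couplings for the scalar product surplus: let P and Q be Borel probability measures on ℝ^d with finite second moments, with P absolutely continuous with respect to Lebesgue measure, and let Φ(x,y) = x⊤y. If π ∈ M(P,Q) is an optimal coupling for the Monge–Kantorovich problem, then there exists a convex function φ : ℝ^d → ℝ ∪ {+∞}, differentiable P-almost everywhere, such that Y = ∇φ(X) holds π-almost surely; equivalently, π is the image of P under the map x ↦ (x, ∇φ(x)), and in particular ∇φ pushes P forward to Q. -/
/-!
The support of an optimal coupling is cyclically monotone: if a cycle `(xᵢ, yᵢ)` of support points
had `∑ ⟪xᵢ₊₁, yᵢ⟫ > ∑ ⟪xᵢ, yᵢ⟫`, then removing a little mass near each `(xᵢ, yᵢ)` and re-coupling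
the `x`-part near `xᵢ₊₁` with the `y`-part near `yᵢ` would keep both marginals and increase the
surplus. Rockafellar's construction turns this into a convex potential: `φ x` is the supremum,
over chains `z₀ → z₁ → ⋯ → zₙ` of support points, of `∑ ⟪yₖ, xₖ₊₁ - xₖ⟫ + ⟪yₙ, x - xₙ⟫`, and every
support point `(x, y)` has `y` as a subgradient of `φ` at `x`. The domain of `φ` is convex, so its
boundary is Lebesgue-null and `P`-almost every point is interior to it; there `φ` is locally
Lipschitz, hence differentiable `P`-a.e. by Rademacher's theorem, and at a point of
differentiability the only subgradient is `∇φ x`.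
-/

open MeasureTheory
open scoped RealInnerProductSpace

open Filter Topology ProbabilityTheory
open scoped ENNReal Gradient

section Coupling

variable {α β : Type*} [MeasurableSpace α] [MeasurableSpace β]

lemma map_sub_add_of_map_eq {π ν ρ : Measure α} [IsFiniteMeasure ν] (hνπ : ν ≤ π)
    {f : α → β} (hf : Measurable f) (hρ : ρ.map f = ν.map f) :
    (π - ν + ρ).map f = π.map f := by
  rw [Measure.map_add _ _ hf, hρ, ← Measure.map_add _ _ hf, Measure.sub_add_cancel_of_le hνπ]

lemma integral_sub_add_of_le {π ν ρ : Measure α} [IsFiniteMeasure ν] (hνπ : ν ≤ π)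
    {c : α → ℝ} (hπ : Integrable c π) (hρ : Integrable c ρ) :
    ∫ x, c x ∂(π - ν + ρ) = ∫ x, c x ∂π - ∫ x, c x ∂ν + ∫ x, c x ∂ρ := by
  have hπν : Integrable c (π - ν) := hπ.mono_measure Measure.sub_le
  have hν : Integrable c ν := hπ.mono_measure hνπ
  conv_rhs => rw [← Measure.sub_add_cancel_of_le hνπ, integral_add_measure hπν hν]
  rw [integral_add_measure hπν hρ]
  ring

lemma exists_smul_sum_cond_le {ι : Type*} [Fintype ι] (π : Measure α)
    {s : ι → Set α} (hs : ∀ i, π (s i) ≠ 0) :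
    ∃ t : ℝ≥0∞, t ≠ 0 ∧ t ≠ ∞ ∧ t • ∑ i, π[|s i] ≤ π := by
  set M := ∑ i, (π (s i))⁻¹
  have hM : M ≠ ∞ := ENNReal.sum_ne_top.2 fun i _ => ENNReal.inv_ne_top.2 (hs i)
  -- `M + 1`, not `M`: for empty `ι`, `M = 0` and `M⁻¹ = ∞`
  refine ⟨(M + 1)⁻¹, by simpa using hM, by simp, ?_⟩
  have hcond : ∑ i, π[|s i] ≤ M • π := by
    rw [Finset.sum_smul]
    gcongr with i
    show (π (s i))⁻¹ • π.restrict (s i) ≤ _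
    gcongr
    exact Measure.restrict_le_self
  calc (M + 1)⁻¹ • ∑ i, π[|s i] ≤ (M + 1)⁻¹ • M • π := by gcongr
    _ ≤ π := by
      rw [smul_smul]
      calc ((M + 1)⁻¹ * M) • π ≤ (1 : ℝ≥0∞) • π := by
            gcongr
            rw [mul_comm, ← div_eq_mul_inv]
            exact ENNReal.div_le_of_le_mul (by rw [one_mul]; exact le_self_add)
        _ = π := one_smul _ _

lemma integrable_of_ae_abs_sub_le {μ : Measure α} [IsFiniteMeasure μ] {f : α → ℝ}
    (hf : AEStronglyMeasurable f μ) {a ε : ℝ} (h : ∀ᵐ x ∂μ, |f x - a| ≤ ε) : Integrable f μ :=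
  Integrable.of_bound hf (|a| + ε) <| h.mono fun x hx => by
    rw [Real.norm_eq_abs]
    linarith [abs_sub_abs_le_abs_sub (f x) a]

lemma abs_integral_sub_le_of_ae {μ : Measure α} [IsProbabilityMeasure μ] {f : α → ℝ}
    (hf : Integrable f μ) {a ε : ℝ} (h : ∀ᵐ x ∂μ, |f x - a| ≤ ε) :
    |∫ x, f x ∂μ - a| ≤ ε := by
  have := norm_integral_le_of_norm_le_const (μ := μ) (f := fun x => f x - a) h
  rwa [integral_sub hf (integrable_const a), integral_const, probReal_univ, one_smul,
    mul_one] at this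

variable {X Y : Type*} [MeasurableSpace X] [MeasurableSpace Y]

lemma ae_mem_prod_map_fst_map_snd {μ ν : Measure (X × Y)} {U : Set X} {V : Set Y}
    (hU : MeasurableSet U) (hV : MeasurableSet V) (hμ : ∀ᵐ p ∂μ, p.1 ∈ U)
    (hν : ∀ᵐ p ∂ν, p.2 ∈ V) : ∀ᵐ p ∂(μ.map Prod.fst).prod (ν.map Prod.snd), p.1 ∈ U ∧ p.2 ∈ V :=
  (Measure.quasiMeasurePreserving_fst.ae ((ae_map_iff measurable_fst.aemeasurable hU).2 hμ)).and
    (Measure.quasiMeasurePreserving_snd.ae ((ae_map_iff measurable_snd.aemeasurable hV).2 hν))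

noncomputable def cycleSwap {n : ℕ} (μ : Fin (n + 1) → Measure (X × Y)) : Measure (X × Y) :=
  ∑ i, ((μ (i + 1)).map Prod.fst).prod ((μ i).map Prod.snd)

variable {n : ℕ} {μ : Fin (n + 1) → Measure (X × Y)} [∀ i, IsProbabilityMeasure (μ i)]

lemma map_fst_cycleSwap : (cycleSwap μ).map Prod.fst = (∑ i, μ i).map Prod.fst := by
  simp only [cycleSwap, Measure.map_finset_sum measurable_fst.aemeasurable, Measure.map_fst_prod,
    Measure.map_apply measurable_snd MeasurableSet.univ, Set.preimage_univ, measure_univ, one_smul]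
  exact Fintype.sum_equiv (Equiv.addRight 1) _ _ fun _ => rfl

lemma map_snd_cycleSwap : (cycleSwap μ).map Prod.snd = (∑ i, μ i).map Prod.snd := by
  simp only [cycleSwap, Measure.map_finset_sum measurable_snd.aemeasurable, Measure.map_snd_prod,
    Measure.map_apply measurable_fst MeasurableSet.univ, Set.preimage_univ, measure_univ, one_smul]

lemma exists_map_eq_integral_lt_of_cycleSwap {π : Measure (X × Y)} [IsFiniteMeasure π]
    {t : ℝ≥0∞} (ht₀ : t ≠ 0) (ht : t ≠ ∞) (hle : t • ∑ i, μ i ≤ π) {c : X × Y → ℝ}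
    (hπ : Integrable c π) (hswap : Integrable c (cycleSwap μ))
    (hgain : ∫ p, c p ∂(∑ i, μ i) < ∫ p, c p ∂(cycleSwap μ)) :
    ∃ π' : Measure (X × Y), π'.map Prod.fst = π.map Prod.fst ∧
      π'.map Prod.snd = π.map Prod.snd ∧ ∫ p, c p ∂π < ∫ p, c p ∂π' := by
  have : IsFiniteMeasure (t • ∑ i, μ i) := isFiniteMeasure_of_le π hle
  refine ⟨π - t • ∑ i, μ i + t • cycleSwap μ, ?_, ?_, ?_⟩
  · exact map_sub_add_of_map_eq hle measurable_fst
      (by simp only [Measure.map_smul, map_fst_cycleSwap])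
  · exact map_sub_add_of_map_eq hle measurable_snd
      (by simp only [Measure.map_smul, map_snd_cycleSwap])
  · rw [integral_sub_add_of_le hle hπ (hswap.smul_measure ht), integral_smul_measure,
      integral_smul_measure, smul_eq_mul, smul_eq_mul]
    have : 0 < t.toReal := ENNReal.toReal_pos ht₀ ht
    nlinarith

end Coupling

def IsCyclicallyMonotone {X Y : Type*} (c : X × Y → ℝ) (S : Set (X × Y)) : Prop :=
  ∀ (n : ℕ) (z : Fin (n + 1) → X × Y), (∀ i, z i ∈ S) →
    ∑ i, c ((z (i + 1)).1, (z i).2) ≤ ∑ i, c (z i)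

section CyclicalMonotonicity

variable {X Y : Type*} [TopologicalSpace X] [TopologicalSpace Y]

lemma exists_open_forall_abs_sub_lt {c : X × Y → ℝ} (hc : Continuous c) {ι : Type*} [Finite ι]
    (x : ι → X) (y : ι → Y) {ε : ℝ} (hε : 0 < ε) :
    ∃ (U : ι → Set X) (V : ι → Set Y), (∀ i, IsOpen (U i) ∧ x i ∈ U i) ∧
      (∀ j, IsOpen (V j) ∧ y j ∈ V j) ∧
      ∀ i j, ∀ u ∈ U i, ∀ v ∈ V j, |c (u, v) - c (x i, y j)| < ε := by
  have h : ∀ i j, ∀ᶠ p in 𝓝 (x i) ×ˢ 𝓝 (y j), |c p - c (x i, y j)| < ε := fun i j => by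
    rw [← nhds_prod_eq]
    exact (hc.tendsto _).eventually (Metric.ball_mem_nhds _ hε)
  choose pa hpa pb hpb hp using fun i j => eventually_prod_iff.1 (h i j)
  refine ⟨fun i => interior {u | ∀ j, pa i j u}, fun j => interior {v | ∀ i, pb i j v},
    fun i => ⟨isOpen_interior, mem_interior_iff_mem_nhds.2 (eventually_all.2 (hpa i))⟩,
    fun j => ⟨isOpen_interior, mem_interior_iff_mem_nhds.2 (eventually_all.2 fun i => hpb i j)⟩,
    fun i j u hu v hv => hp i j (interior_subset hu j) (interior_subset hv i)⟩

variable [MeasurableSpace X] [OpensMeasurableSpace X] [MeasurableSpace Y] [OpensMeasurableSpace Y]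
  [SecondCountableTopologyEither X Y]

lemma exists_cond_integral_near {π : Measure (X × Y)} [IsFiniteMeasure π] {c : X × Y → ℝ}
    (hc : Continuous c) {n : ℕ} {z : Fin (n + 1) → X × Y} (hz : ∀ i, z i ∈ π.support) {ε : ℝ}
    (hε : 0 < ε) :
    ∃ W : Fin (n + 1) → Set (X × Y), (∀ i, π (W i) ≠ 0) ∧
      (∀ i, Integrable c π[|W i] ∧ |∫ p, c p ∂π[|W i] - c (z i)| ≤ ε) ∧
      ∀ i, Integrable c (((π[|W (i + 1)]).map Prod.fst).prod ((π[|W i]).map Prod.snd)) ∧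
        |∫ p, c p ∂((π[|W (i + 1)]).map Prod.fst).prod ((π[|W i]).map Prod.snd) -
          c ((z (i + 1)).1, (z i).2)| ≤ ε := by
  obtain ⟨U, V, hU, hV, hnear⟩ :=
    exists_open_forall_abs_sub_lt hc (fun i => (z i).1) (fun i => (z i).2) hε
  have hW (i : Fin (n + 1)) : π (U i ×ˢ V i) ≠ 0 := ((Measure.mem_support_iff_forall _).1 (hz i) _
    (((hU i).1.prod (hV i).1).mem_nhds ⟨(hU i).2, (hV i).2⟩)).ne'
  have hWmeas (i : Fin (n + 1)) : MeasurableSet (U i ×ˢ V i) :=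
    ((hU i).1.prod (hV i).1).measurableSet
  have (i : Fin (n + 1)) : IsProbabilityMeasure π[|U i ×ˢ V i] := cond_isProbabilityMeasure (hW i)
  have (i : Fin (n + 1)) : IsProbabilityMeasure ((π[|U i ×ˢ V i]).map Prod.fst) :=
    Measure.isProbabilityMeasure_map measurable_fst.aemeasurable
  have (i : Fin (n + 1)) : IsProbabilityMeasure ((π[|U i ×ˢ V i]).map Prod.snd) :=
    Measure.isProbabilityMeasure_map measurable_snd.aemeasurable
  refine ⟨fun i => U i ×ˢ V i, hW, fun i => ?_, fun i => ?_⟩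
  · have h : ∀ᵐ p ∂π[|U i ×ˢ V i], |c p - c (z i)| ≤ ε :=
      (ae_cond_mem (hWmeas i)).mono fun p hp => (hnear i i p.1 hp.1 p.2 hp.2).le
    have hint := integrable_of_ae_abs_sub_le hc.aestronglyMeasurable h
    exact ⟨hint, abs_integral_sub_le_of_ae hint h⟩
  · have h : ∀ᵐ p ∂((π[|U (i + 1) ×ˢ V (i + 1)]).map Prod.fst).prod
        ((π[|U i ×ˢ V i]).map Prod.snd), |c p - c ((z (i + 1)).1, (z i).2)| ≤ ε := by
      filter_upwards [ae_mem_prod_map_fst_map_snd (hU (i + 1)).1.measurableSet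
        (hV i).1.measurableSet ((ae_cond_mem (hWmeas (i + 1))).mono fun p hp => hp.1)
        ((ae_cond_mem (hWmeas i)).mono fun p hp => hp.2)] with p hp
      exact (hnear (i + 1) i p.1 hp.1 p.2 hp.2).le
    have hint := integrable_of_ae_abs_sub_le hc.aestronglyMeasurable h
    exact ⟨hint, abs_integral_sub_le_of_ae hint h⟩

theorem isCyclicallyMonotone_support {π : Measure (X × Y)} [IsFiniteMeasure π]
    {c : X × Y → ℝ} (hc : Continuous c) (hπ : Integrable c π)
    (hopt : ∀ π' : Measure (X × Y), π'.map Prod.fst = π.map Prod.fst →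
      π'.map Prod.snd = π.map Prod.snd → ∫ p, c p ∂π' ≤ ∫ p, c p ∂π) :
    IsCyclicallyMonotone c π.support := by
  intro n z hz
  by_contra! hgap
  set gap := ∑ i, c ((z (i + 1)).1, (z i).2) - ∑ i, c (z i)
  set ε := gap / (4 * (n + 1))
  have hε : 0 < ε := div_pos (sub_pos.2 hgap) (by positivity)
  obtain ⟨W, hW, hμ, hρ⟩ := exists_cond_integral_near hc hz hε
  have (i : Fin (n + 1)) : IsProbabilityMeasure π[|W i] := cond_isProbabilityMeasure (hW i)
  obtain ⟨t, ht₀, ht, hle⟩ := exists_smul_sum_cond_le π hW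
  have hgain : ∫ p, c p ∂(∑ i, π[|W i]) < ∫ p, c p ∂(cycleSwap fun i => π[|W i]) := by
    rw [integral_finsetSum_measure fun i _ => (hμ i).1, cycleSwap,
      integral_finsetSum_measure fun i _ => (hρ i).1, ← sub_pos, ← Finset.sum_sub_distrib]
    have h2ε : ((n + 1 : ℕ) : ℝ) * (2 * ε) = gap / 2 := by
      simp only [ε]; push_cast; field_simp; ring
    calc 0 < ∑ i : Fin (n + 1), (c ((z (i + 1)).1, (z i).2) - c (z i) - 2 * ε) := by
          simp only [Finset.sum_sub_distrib, Finset.sum_const, Finset.card_univ,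
            Fintype.card_fin, nsmul_eq_mul, h2ε]
          linarith
      _ ≤ _ := Finset.sum_le_sum fun i _ => by
          linarith [abs_le.1 (hμ i).2, abs_le.1 (hρ i).2]
  obtain ⟨π', h₁, h₂, hlt⟩ := exists_map_eq_integral_lt_of_cycleSwap ht₀ ht hle hπ
    (integrable_finsetSum_measure.2 fun i _ => (hρ i).1) hgain
  exact (hopt π' h₁ h₂).not_gt hlt

end CyclicalMonotonicity

section Rockafellar

def rockafellarChains {α : Type*} (S : Set α) (z₀ : α) : Set (Σ n : ℕ, Fin (n + 1) → α) :=
  {p | p.2 0 = z₀ ∧ ∀ i, p.2 i ∈ S}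

lemma snoc_mem_rockafellarChains {α : Type*} {S : Set α} {z₀ : α}
    {p : Σ n : ℕ, Fin (n + 1) → α} (hp : p ∈ rockafellarChains S z₀) {q : α} (hq : q ∈ S) :
    (⟨p.1 + 1, Fin.snoc p.2 q⟩ : Σ n : ℕ, Fin (n + 1) → α) ∈ rockafellarChains S z₀ := by
  refine ⟨?_, Fin.lastCases ?_ fun i => ?_⟩
  · dsimp only
    rw [← Fin.castSucc_zero, Fin.snoc_castSucc]
    exact hp.1
  · simpa only [Fin.snoc_last] using hq
  · simpa only [Fin.snoc_castSucc] using hp.2 i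

variable {E : Type*} [NormedAddCommGroup E] [InnerProductSpace ℝ E]

noncomputable def chainSum {n : ℕ} (z : Fin (n + 1) → E × E) (x : E) : ℝ :=
  ∑ i : Fin n, ⟪(z i.castSucc).2, (z i.succ).1 - (z i.castSucc).1⟫ +
    ⟪(z (Fin.last n)).2, x - (z (Fin.last n)).1⟫

lemma chainSum_snoc {n : ℕ} (z : Fin (n + 1) → E × E) (q : E × E) (x : E) :
    chainSum (Fin.snoc z q) x = chainSum z q.1 + ⟪q.2, x - q.1⟫ := by
  simp only [chainSum, Fin.sum_univ_castSucc, Fin.snoc_castSucc, Fin.snoc_last,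
    Fin.succ_castSucc, Fin.succ_last]

lemma chainSum_lineMap {n : ℕ} (z : Fin (n + 1) → E × E) (t : ℝ) (x y : E) :
    chainSum z (t • x + (1 - t) • y) = t * chainSum z x + (1 - t) * chainSum z y := by
  simp only [chainSum, inner_sub_right, inner_add_right, real_inner_smul_right]
  ring

lemma IsCyclicallyMonotone.chainSum_nonpos {S : Set (E × E)}
    (hS : IsCyclicallyMonotone (fun p => ⟪p.1, p.2⟫) S) {n : ℕ} {z : Fin (n + 1) → E × E}
    (hz : ∀ i, z i ∈ S) : chainSum z (z 0).1 ≤ 0 := by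
  have hcycle : chainSum z (z 0).1 = ∑ i, ⟪(z i).2, (z (i + 1)).1 - (z i).1⟫ := by
    rw [Fin.sum_univ_castSucc]
    simp only [chainSum, Fin.coeSucc_eq_succ, Fin.last_add_one]
  rw [hcycle]
  simp only [inner_sub_right, Finset.sum_sub_distrib, sub_nonpos]
  convert hS n z hz using 2 <;> simp only [real_inner_comm]

noncomputable def rockafellarPotential (S : Set (E × E)) (z₀ : E × E) (x : E) : EReal :=
  ⨆ p ∈ rockafellarChains S z₀, (chainSum p.2 x : EReal)

variable {S : Set (E × E)} {z₀ : E × E}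

lemma chainSum_le_rockafellarPotential {p : Σ n : ℕ, Fin (n + 1) → E × E}
    (hp : p ∈ rockafellarChains S z₀) (x : E) :
    (chainSum p.2 x : EReal) ≤ rockafellarPotential S z₀ x :=
  le_iSup₂ (f := fun p _ => (chainSum p.2 x : EReal)) p hp

lemma rockafellarPotential_ne_bot (hz₀ : z₀ ∈ S) (x : E) : rockafellarPotential S z₀ x ≠ ⊥ :=
  ne_bot_of_le_ne_bot (EReal.coe_ne_bot _)
    (chainSum_le_rockafellarPotential (p := ⟨0, fun _ => z₀⟩) ⟨rfl, fun _ => hz₀⟩ x)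

lemma rockafellarPotential_add_inner_le {q : E × E} (hq : q ∈ S) (x : E) :
    rockafellarPotential S z₀ q.1 + (⟪q.2, x - q.1⟫ : EReal) ≤ rockafellarPotential S z₀ x := by
  rw [← EReal.le_sub_iff_add_le (.inl (EReal.coe_ne_bot _)) (.inl (EReal.coe_ne_top _))]
  refine iSup₂_le fun p hp => ?_
  rw [EReal.le_sub_iff_add_le (.inl (EReal.coe_ne_bot _)) (.inl (EReal.coe_ne_top _)),
    ← EReal.coe_add, ← chainSum_snoc]
  exact chainSum_le_rockafellarPotential (snoc_mem_rockafellarChains hp hq) x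

lemma rockafellarPotential_ne_top (hS : IsCyclicallyMonotone (fun p => ⟪p.1, p.2⟫) S)
    {q : E × E} (hq : q ∈ S) : rockafellarPotential S z₀ q.1 ≠ ⊤ := by
  refine ne_top_of_le_ne_top (EReal.coe_ne_top ⟪q.2, q.1 - z₀.1⟫) (iSup₂_le fun p hp => ?_)
  obtain ⟨h₀, hmem⟩ := snoc_mem_rockafellarChains hp hq
  have h := hS.chainSum_nonpos hmem
  dsimp only at h₀ h
  rw [h₀, chainSum_snoc] at h
  have : ⟪q.2, z₀.1 - q.1⟫ = -⟪q.2, q.1 - z₀.1⟫ := by rw [← inner_neg_right, neg_sub]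
  rw [EReal.coe_le_coe_iff]
  linarith

lemma isConvexEReal_rockafellarPotential : IsConvexEReal (rockafellarPotential S z₀) := by
  intro x y t a b ht₀ ht₁ hxa hyb
  refine iSup₂_le fun p hp => ?_
  have hx := EReal.coe_le_coe_iff.1 ((chainSum_le_rockafellarPotential hp x).trans hxa)
  have hy := EReal.coe_le_coe_iff.1 ((chainSum_le_rockafellarPotential hp y).trans hyb)
  rw [chainSum_lineMap, EReal.coe_le_coe_iff]
  nlinarith

end Rockafellar

section ConvexAnalysis

lemma IsConvexEReal.convexOn_toReal {E : Type*} [AddCommGroup E] [Module ℝ E] {φ : E → EReal}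
    (hφ : IsConvexEReal φ) (hbot : ∀ x, φ x ≠ ⊥) :
    ConvexOn ℝ {x | φ x ≠ ⊤} (fun x => (φ x).toReal) := by
  have key : ∀ x, φ x ≠ ⊤ → ∀ y, φ y ≠ ⊤ → ∀ a b : ℝ, 0 ≤ a → 0 ≤ b → a + b = 1 →
      φ (a • x + b • y) ≤ ((a * (φ x).toReal + b * (φ y).toReal : ℝ) : EReal) := by
    intro x hx y hy a b ha hb hab
    obtain rfl : b = 1 - a := by linarith
    exact hφ x y a _ _ ha (by linarith) (EReal.coe_toReal hx (hbot x)).ge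
      (EReal.coe_toReal hy (hbot y)).ge
  refine ⟨fun x hx y hy a b ha hb hab => ne_top_of_le_ne_top (EReal.coe_ne_top _)
    (key x hx y hy a b ha hb hab), fun x hx y hy a b ha hb hab => ?_⟩
  have := EReal.toReal_le_toReal (key x hx y hy a b ha hb hab) (hbot _) (EReal.coe_ne_top _)
  rwa [EReal.toReal_coe] at this

variable {E : Type*} [NormedAddCommGroup E] [NormedSpace ℝ E] [FiniteDimensional ℝ E]
  [MeasurableSpace E] [BorelSpace E] {μ : Measure E} [μ.IsAddHaarMeasure]

lemma Convex.ae_mem_interior_of_ae_mem_closure {P : Measure E} (hP : P ≪ μ) {s : Set E}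
    (hs : Convex ℝ s) (h : ∀ᵐ x ∂P, x ∈ closure s) : ∀ᵐ x ∂P, x ∈ interior s := by
  have hfr : ∀ᵐ x ∂P, x ∉ frontier s :=
    hP.ae_le (measure_eq_zero_iff_ae_notMem.1 (hs.addHaar_frontier μ))
  filter_upwards [h, hfr] with x hcl hx
  by_contra hint
  exact hx ⟨hcl, hint⟩

lemma LocallyLipschitzOn.ae_differentiableAt_of_mem {F : Type*} [NormedAddCommGroup F]
    [NormedSpace ℝ F] [FiniteDimensional ℝ F] {s : Set E} (hs : IsOpen s) {f : E → F}
    (hf : LocallyLipschitzOn s f) : ∀ᵐ x ∂μ, x ∈ s → DifferentiableAt ℝ f x := by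
  rw [ae_iff]
  refine measure_null_of_locally_null _ fun x hx => ?_
  have hxs : x ∈ s := by by_contra hxs; exact hx fun h => absurd h hxs
  obtain ⟨K, t, ht, hK⟩ := hf hxs
  rw [hs.nhdsWithin_eq hxs] at ht
  refine ⟨_, inter_mem_nhdsWithin _ (interior_mem_nhds.2 ht), measure_mono_null ?_
    (ae_iff.1 hK.ae_differentiableWithinAt_of_mem)⟩
  rintro y ⟨hy, hyt⟩ hdiff
  exact hy fun _ => (hdiff (interior_subset hyt)).differentiableAt
    (mem_interior_iff_mem_nhds.1 hyt)

theorem IsConvexEReal.ae_differentiableAt {φ : E → EReal} (hφ : IsConvexEReal φ)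
    (hbot : ∀ x, φ x ≠ ⊥) {P : Measure E} (hP : P ≪ μ)
    (hdom : ∀ᵐ x ∂P, x ∈ closure {x | φ x ≠ ⊤}) :
    ∀ᵐ x ∂P, x ∈ interior {x | φ x ≠ ⊤} ∧ DifferentiableAt ℝ (fun x => (φ x).toReal) x := by
  have hconv := hφ.convexOn_toReal hbot
  filter_upwards [hconv.1.ae_mem_interior_of_ae_mem_closure hP hdom,
    hP.ae_le (hconv.locallyLipschitzOn_interior.ae_differentiableAt_of_mem isOpen_interior)]
    with x hx hd
  exact ⟨hx, hd hx⟩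

end ConvexAnalysis

section Gradient

variable {F : Type*} [NormedAddCommGroup F] [InnerProductSpace ℝ F] [CompleteSpace F]

lemma HasGradientAt.eq_of_eventually_le {f : F → ℝ} {g x y : F} (hf : HasGradientAt f g x)
    (h : ∀ᶠ w in 𝓝 x, f x + ⟪y, w - x⟫ ≤ f w) : g = y := by
  have hmin : IsLocalMin (fun w => f w - ⟪y, w⟫) x := h.mono fun w hw => by
    rw [inner_sub_right] at hw
    linarith
  have hd := (hasGradientAt_iff_hasFDerivAt.1 hf).sub
    (InnerProductSpace.toDual ℝ F y : F →L[ℝ] ℝ).hasFDerivAt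
  rw [← map_sub] at hd
  rw [← sub_eq_zero, ← (InnerProductSpace.toDual ℝ F).map_eq_zero_iff]
  exact hmin.hasFDerivAt_eq_zero hd

lemma measurable_gradient [MeasurableSpace F] [BorelSpace F] (f : F → ℝ) :
    Measurable (∇ f) :=
  (InnerProductSpace.toDual ℝ F).symm.continuous.measurable.comp (measurable_fderiv ℝ f)

end Gradient

section Graph

variable {α β : Type*} [MeasurableSpace α] [MeasurableSpace β] {π : Measure (α × β)}
  {T : α → β}

lemma eq_map_graph_of_ae_eq (hT : Measurable T) (h : ∀ᵐ z ∂π, z.2 = T z.1) :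
    π = (π.map Prod.fst).map fun x => (x, T x) := by
  rw [Measure.map_map (measurable_id'.prodMk hT) measurable_fst]
  conv_lhs => rw [← Measure.map_id (μ := π)]
  exact Measure.map_congr (h.mono fun z hz => Prod.ext rfl hz)

lemma map_snd_eq_of_ae_eq (hT : Measurable T) (h : ∀ᵐ z ∂π, z.2 = T z.1) :
    π.map Prod.snd = (π.map Prod.fst).map T := by
  conv_lhs => rw [eq_map_graph_of_ae_eq hT h, Measure.map_map measurable_snd
    (measurable_id'.prodMk hT)]
  rfl

end Graph

lemma integrable_inner_of_integrable_sq {E : Type*} [NormedAddCommGroup E] [InnerProductSpace ℝ E]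
    [MeasurableSpace E] [OpensMeasurableSpace E] [SecondCountableTopology E] {π : Measure (E × E)}
    (h₁ : Integrable (fun x => ‖x‖ ^ 2) (π.map Prod.fst))
    (h₂ : Integrable (fun y => ‖y‖ ^ 2) (π.map Prod.snd)) :
    Integrable (fun z : E × E => ⟪z.1, z.2⟫) π := by
  have h₁' := (integrable_map_measure h₁.aestronglyMeasurable measurable_fst.aemeasurable).1 h₁
  have h₂' := (integrable_map_measure h₂.aestronglyMeasurable measurable_snd.aemeasurable).1 h₂
  refine ((h₁'.add h₂').div_const 2).mono'
    (continuous_fst.inner continuous_snd).aestronglyMeasurable (ae_of_all _ fun z => ?_)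
  rw [Real.norm_eq_abs]
  refine (abs_real_inner_le_norm z.1 z.2).trans ?_
  dsimp only [Function.comp_apply, Pi.add_apply]
  nlinarith [sq_nonneg (‖z.1‖ - ‖z.2‖)]

section Brenier

variable {E : Type*} [NormedAddCommGroup E] [InnerProductSpace ℝ E] [FiniteDimensional ℝ E]
  [MeasurableSpace E] [BorelSpace E] {μ : Measure E} [μ.IsAddHaarMeasure]

theorem ae_eq_gradient_of_subgradient {φ : E → EReal} (hφ : IsConvexEReal φ)
    (hbot : ∀ x, φ x ≠ ⊥) {π : Measure (E × E)} (hπ : π.map Prod.fst ≪ μ)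
    (hsub : ∀ z ∈ π.support, φ z.1 ≠ ⊤ ∧ ∀ w, φ z.1 + (⟪z.2, w - z.1⟫ : EReal) ≤ φ w) :
    (∀ᵐ x ∂π.map Prod.fst, x ∈ interior {x | φ x ≠ ⊤} ∧
      DifferentiableAt ℝ (fun x => (φ x).toReal) x) ∧
    ∀ᵐ z ∂π, z.2 = ∇ (fun x => (φ x).toReal) z.1 := by
  have hsupp : ∀ᵐ z ∂π, z ∈ π.support := Measure.support_mem_ae
  have hdiff := hφ.ae_differentiableAt hbot hπ <|
    (ae_map_iff (p := (· ∈ closure _)) measurable_fst.aemeasurable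
      isClosed_closure.measurableSet).2 (hsupp.mono fun z hz => subset_closure (hsub z hz).1)
  refine ⟨hdiff, ?_⟩
  filter_upwards [hsupp, ae_of_ae_map measurable_fst.aemeasurable hdiff]
    with z hz ⟨hint, hd⟩
  refine (hd.hasGradientAt.eq_of_eventually_le
    (eventually_of_mem (isOpen_interior.mem_nhds hint) fun w hw => ?_)).symm
  have h := (hsub z hz).2 w
  rwa [← EReal.coe_toReal (hsub z hz).1 (hbot _), ← EReal.coe_toReal (interior_subset hw) (hbot w),
    ← EReal.coe_add, EReal.coe_le_coe_iff] at h

end Brenier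

theorem mk_brenier_representation_general
    {d : ℕ} (P Q : Measure (EuclideanSpace ℝ (Fin d)))
    (hP2 : Integrable (fun x => ‖x‖ ^ 2) P) (hQ2 : Integrable (fun y => ‖y‖ ^ 2) Q)
    (hPac : P ≪ (volume : Measure (EuclideanSpace ℝ (Fin d))))
    (π : Measure (EuclideanSpace ℝ (Fin d) × EuclideanSpace ℝ (Fin d)))
    [IsProbabilityMeasure π]
    (hπ₁ : π.map Prod.fst = P) (hπ₂ : π.map Prod.snd = Q)
    -- π is an optimal coupling for the scalar product surplus
    (hopt : ∀ π' : Measure (EuclideanSpace ℝ (Fin d) × EuclideanSpace ℝ (Fin d)),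
      IsProbabilityMeasure π' → π'.map Prod.fst = P → π'.map Prod.snd = Q →
      ∫ z, ⟪z.1, z.2⟫ ∂π' ≤ ∫ z, ⟪z.1, z.2⟫ ∂π) :
    ∃ (φ : EuclideanSpace ℝ (Fin d) → EReal)
      (T : EuclideanSpace ℝ (Fin d) → EuclideanSpace ℝ (Fin d)),
      -- φ is convex, with values in ℝ ∪ {+∞}
      (∀ x, φ x ≠ ⊥) ∧ IsConvexEReal φ ∧ Measurable T ∧
      -- φ is differentiable P-a.e., with gradient T = ∇φ
      (∀ᵐ x ∂P, φ x ≠ ⊤ ∧ HasGradientAt (fun z => (φ z).toReal) (T x) x) ∧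
      -- Y = ∇φ(X) holds π-almost surely
      (∀ᵐ z ∂π, z.2 = T z.1) ∧
      -- equivalently, π is the image of P under x ↦ (x, ∇φ(x))
      π = P.map (fun x => (x, T x)) ∧
      -- and in particular ∇φ pushes P forward to Q
      P.map T = Q := by
  have hcm : IsCyclicallyMonotone (fun z => ⟪z.1, z.2⟫) π.support := by
    refine isCyclicallyMonotone_support (continuous_fst.inner continuous_snd)
      (integrable_inner_of_integrable_sq (hπ₁ ▸ hP2) (hπ₂ ▸ hQ2)) fun π' h₁ h₂ => ?_
    have : IsProbabilityMeasure (π'.map Prod.fst) := by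
      rw [h₁]
      exact Measure.isProbabilityMeasure_map measurable_fst.aemeasurable
    exact hopt π' (Measure.isProbabilityMeasure_of_map Prod.fst) (h₁.trans hπ₁) (h₂.trans hπ₂)
  obtain ⟨z₀, hz₀⟩ := Measure.nonempty_support (IsProbabilityMeasure.ne_zero π)
  set φ := rockafellarPotential π.support z₀
  obtain ⟨hdiff, hT⟩ := ae_eq_gradient_of_subgradient isConvexEReal_rockafellarPotential
    (rockafellarPotential_ne_bot hz₀) (hπ₁ ▸ hPac)
    fun z hz => ⟨rockafellarPotential_ne_top hcm hz, rockafellarPotential_add_inner_le hz⟩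
  have hTm := measurable_gradient fun x => (φ x).toReal
  refine ⟨φ, _, rockafellarPotential_ne_bot hz₀, isConvexEReal_rockafellarPotential, hTm, ?_, hT,
    ?_, ?_⟩
  · rw [← hπ₁]
    exact hdiff.mono fun x hx => ⟨interior_subset hx.1, hx.2.hasGradientAt⟩
  · rw [← hπ₁]
    exact eq_map_graph_of_ae_eq hTm hT
  · rw [← hπ₂, ← hπ₁, map_snd_eq_of_ae_eq hTm hT]

/-- Brenier representation of optimal couplings for the scalar product surplus: if `P`, `Q`
have finite second moments, `P` is absolutely continuous w.r.t. Lebesgue measure, and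
`π ∈ M(P,Q)` is an optimal coupling for `Φ(x,y) = ⟪x,y⟫`, then there is a convex function
`φ : ℝ^d → ℝ ∪ {+∞}`, differentiable `P`-a.e. with gradient map `T = ∇φ`, such that
`Y = ∇φ(X)` holds `π`-a.s.; equivalently `π` is the image of `P` under `x ↦ (x, ∇φ(x))`,
and in particular `∇φ` pushes `P` forward to `Q`. -/
theorem mk_brenier_representation
    {d : ℕ} (P Q : Measure (EuclideanSpace ℝ (Fin d)))
    [IsProbabilityMeasure P] [IsProbabilityMeasure Q]
    (hP2 : Integrable (fun x => ‖x‖ ^ 2) P) (hQ2 : Integrable (fun y => ‖y‖ ^ 2) Q)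
    (hPac : P ≪ (volume : Measure (EuclideanSpace ℝ (Fin d))))
    (π : Measure (EuclideanSpace ℝ (Fin d) × EuclideanSpace ℝ (Fin d)))
    [IsProbabilityMeasure π]
    (hπ₁ : π.map Prod.fst = P) (hπ₂ : π.map Prod.snd = Q)
    -- π is an optimal coupling for the scalar product surplus
    (hopt : ∀ π' : Measure (EuclideanSpace ℝ (Fin d) × EuclideanSpace ℝ (Fin d)),
      IsProbabilityMeasure π' → π'.map Prod.fst = P → π'.map Prod.snd = Q →
      ∫ z, ⟪z.1, z.2⟫ ∂π' ≤ ∫ z, ⟪z.1, z.2⟫ ∂π) :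
    ∃ (φ : EuclideanSpace ℝ (Fin d) → EReal)
      (T : EuclideanSpace ℝ (Fin d) → EuclideanSpace ℝ (Fin d)),
      -- φ is convex, with values in ℝ ∪ {+∞}
      (∀ x, φ x ≠ ⊥) ∧ IsConvexEReal φ ∧ Measurable T ∧
      -- φ is differentiable P-a.e., with gradient T = ∇φ
      (∀ᵐ x ∂P, φ x ≠ ⊤ ∧ HasGradientAt (fun z => (φ z).toReal) (T x) x) ∧
      -- Y = ∇φ(X) holds π-almost surely
      (∀ᵐ z ∂π, z.2 = T z.1) ∧
      -- equivalently, π is the image of P under x ↦ (x, ∇φ(x))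
      π = P.map (fun x => (x, T x)) ∧
      -- and in particular ∇φ pushes P forward to Q
      P.map T = Q :=
  mk_brenier_representation_general P Q hP2 hQ2 hPac π hπ₁ hπ₂ hopt
end

section
/- Demand inversion as a subgradient relation: let 𝒴 be a finite set, let ε be a random vector in ℝ^𝒴 with distribution P such that E[max_{y ∈ 𝒴} |ε_y|] < ∞, and define G(δ) = E[max_{y ∈ 𝒴} {δ_y + ε_y}] for δ ∈ ℝ^𝒴. Then G is convex, and for any probability vector q on 𝒴 and any δ ∈ ℝ^𝒴, the following are equivalent: (i) there exists a random variable Y defined jointly with ε, with distribution q, such that Y ∈ argmax_{y ∈ 𝒴} {δ_y + ε_y} almost surely; (ii) q is a subgradient of G at δ, i.e. G(δ') ≥ G(δ) + Σ_{y ∈ 𝒴} q_y (δ'_y − δ_y) for all δ' ∈ ℝ^𝒴. -/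
open MeasureTheory

/-!
`G` is an expectation of maxima of affine functions of `δ`, hence convex. If `Y` is an almost
sure maximizer with law `q`, then `G δ' ≥ E[δ'_Y + ε_Y] = G δ + ∑ q_y (δ'_y - δ_y)`.

Conversely, by dominated convergence the one-sided derivative of `G` at `δ` in a direction `β`
is `E[max of β over argmax (δ + ε)]`, that is `E[β_Y]` for `Y = s (argmax (δ + ε))`, where the
tie-breaker `s` picks a `β`-best element of each finite set. Hence for every `β` a subgradient `q`
satisfies `⟪q, β⟫ ≤ ⟪q_s, β⟫`, where `q_s` is the law of `Y` for some tie-breaker `s`. There are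
finitely many tie-breakers, so by Hahn–Banach `q` is a convex combination of the `q_s`, and the
same mixture of the joint laws of `(ε, s (argmax (δ + ε)))` is the required coupling.
-/

open Filter Topology Set

namespace DiscreteChoice

variable {ι : Type*}

section Supremum

variable [Finite ι] [Nonempty ι]

lemma ciSup_le_ciSup_add_ciSup_abs_sub (f g : ι → ℝ) :
    ⨆ i, f i ≤ (⨆ i, g i) + ⨆ i, |f i - g i| :=
  ciSup_le fun i => by
    linarith [Finite.le_ciSup g i, Finite.le_ciSup (fun i => |f i - g i|) i,
      le_abs_self (f i - g i)]

lemma abs_ciSup_sub_ciSup_le (f g : ι → ℝ) :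
    |(⨆ i, f i) - ⨆ i, g i| ≤ ⨆ i, |f i - g i| := by
  have hgf := ciSup_le_ciSup_add_ciSup_abs_sub g f
  simp_rw [abs_sub_comm (g _)] at hgf
  rw [abs_sub_le_iff]
  constructor <;> linarith [ciSup_le_ciSup_add_ciSup_abs_sub f g]

lemma abs_ciSup_le (f : ι → ℝ) : |⨆ i, f i| ≤ ⨆ i, |f i| := by
  obtain ⟨i, hi⟩ := exists_eq_ciSup_of_finite (f := f)
  exact hi ▸ Finite.le_ciSup (fun i => |f i|) i

lemma ciSup_eq_of_forall_le {f : ι → ℝ} {i : ι} (h : ∀ j, f j ≤ f i) : ⨆ j, f j = f i :=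
  le_antisymm (ciSup_le h) (Finite.le_ciSup f i)

end Supremum

lemma convexOn_integral {E Ω : Type*} [AddCommGroup E] [Module ℝ E] [MeasurableSpace Ω]
    {μ : Measure Ω} {s : Set E} {F : E → Ω → ℝ} (hs : Convex ℝ s)
    (hF : ∀ ω, ConvexOn ℝ s (F · ω)) (hint : ∀ x ∈ s, Integrable (F x) μ) :
    ConvexOn ℝ s (fun x => ∫ ω, F x ω ∂μ) := by
  refine ⟨hs, fun x hx y hy a b ha hb hab => ?_⟩
  calc ∫ ω, F (a • x + b • y) ω ∂μ ≤ ∫ ω, (a * F x ω + b * F y ω) ∂μ :=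
        integral_mono (hint _ (hs hx hy ha hb hab))
          (((hint x hx).const_mul a).add ((hint y hy).const_mul b))
          fun ω => (hF ω).2 hx hy ha hb hab
    _ = a • ∫ ω, F x ω ∂μ + b • ∫ ω, F y ω ∂μ := by
        rw [integral_add ((hint x hx).const_mul a) ((hint y hy).const_mul b),
          integral_const_mul, integral_const_mul, smul_eq_mul, smul_eq_mul]

lemma integral_comp_eq_sum {Ω α : Type*} [MeasurableSpace Ω] [Fintype α] [MeasurableSpace α]
    [MeasurableSingletonClass α] {μ : Measure Ω} [IsFiniteMeasure μ] {g : Ω → α}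
    (hg : Measurable g) (β : α → ℝ) :
    ∫ ω, β (g ω) ∂μ = ∑ y, μ.real (g ⁻¹' {y}) * β y := by
  rw [← integral_map hg.aemeasurable (measurable_of_finite β).aestronglyMeasurable,
    integral_fintype .of_finite]
  simp_rw [map_measureReal_apply hg (measurableSet_singleton _), smul_eq_mul]

lemma mem_convexHull_of_forall_exists_le {E : Type*} [TopologicalSpace E] [AddCommGroup E]
    [Module ℝ E] [IsTopologicalAddGroup E] [ContinuousSMul ℝ E] [LocallyConvexSpace ℝ E]
    [T2Space E] {S : Set E} (hS : S.Finite) {x : E}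
    (h : ∀ f : StrongDual ℝ E, ∃ z ∈ S, f x ≤ f z) : x ∈ convexHull ℝ S := by
  by_contra hx
  obtain ⟨f, u, hfx, hfS⟩ := geometric_hahn_banach_point_closed (convex_convexHull ℝ S)
    (hS.isCompact_convexHull ℝ).isClosed hx
  obtain ⟨z, hz, hle⟩ := h (-f)
  simp only [neg_apply, neg_le_neg_iff] at hle
  linarith [hfS z (subset_convexHull ℝ S hz)]

lemma mem_convexHull_of_forall_exists_sum_mul_le {κ : Type*} [Fintype κ] {S : Set (κ → ℝ)}
    (hS : S.Finite) {x : κ → ℝ} (h : ∀ β : κ → ℝ, ∃ z ∈ S, ∑ i, x i * β i ≤ ∑ i, z i * β i) :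
    x ∈ convexHull ℝ S := by
  classical
  refine mem_convexHull_of_forall_exists_le hS fun f => ?_
  obtain ⟨z, hz, hle⟩ := h fun i => f fun j => if i = j then 1 else 0
  have hf : ∀ v : κ → ℝ, f v = ∑ i, v i * f fun j => if i = j then 1 else 0 := fun v => by
    simpa only [smul_eq_mul, ContinuousLinearMap.coe_coe] using f.toLinearMap.pi_apply_eq_sum_univ v
  exact ⟨z, hz, by rwa [hf x, hf z]⟩

noncomputable def mixtureGraph {Ω κ α : Type*} [MeasurableSpace Ω] [MeasurableSpace α]
    [Fintype κ] (μ : Measure Ω) (w : κ → ℝ) (g : κ → Ω → α) : Measure (Ω × α) :=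
  ∑ i, ENNReal.ofReal (w i) • μ.map fun ω => (ω, g i ω)

section Mixture

variable {Ω κ α : Type*} [MeasurableSpace Ω] [MeasurableSpace α] [Fintype κ] {μ : Measure Ω}
  {w : κ → ℝ} {g : κ → Ω → α}

lemma mixtureGraph_apply (hg : ∀ i, Measurable (g i)) {S : Set (Ω × α)} (hS : MeasurableSet S) :
    mixtureGraph μ w g S = ∑ i, ENNReal.ofReal (w i) * μ ((fun ω => (ω, g i ω)) ⁻¹' S) := by
  simp only [mixtureGraph, Measure.coe_finsetSum, Finset.sum_apply, Measure.smul_apply,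
    smul_eq_mul]
  refine Finset.sum_congr rfl fun i _ => ?_
  rw [Measure.map_apply (measurable_id'.prodMk (hg i)) hS]

lemma map_fst_mixtureGraph (hg : ∀ i, Measurable (g i)) (hw₀ : ∀ i, 0 ≤ w i)
    (hw₁ : ∑ i, w i = 1) : (mixtureGraph μ w g).map Prod.fst = μ := by
  ext S hS
  rw [Measure.map_apply measurable_fst hS, mixtureGraph_apply hg (measurable_fst hS)]
  change ∑ i, ENNReal.ofReal (w i) * μ S = μ S
  rw [← Finset.sum_mul, ← ENNReal.ofReal_sum_of_nonneg fun i _ => hw₀ i, hw₁, ENNReal.ofReal_one,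
    one_mul]

lemma map_snd_mixtureGraph_singleton [MeasurableSingletonClass α] [IsFiniteMeasure μ]
    (hg : ∀ i, Measurable (g i)) (hw₀ : ∀ i, 0 ≤ w i) (y : α) :
    (mixtureGraph μ w g).map Prod.snd {y} =
      ENNReal.ofReal (∑ i, w i * μ.real (g i ⁻¹' {y})) := by
  rw [Measure.map_apply measurable_snd (measurableSet_singleton y),
    mixtureGraph_apply hg (measurable_snd (measurableSet_singleton y)),
    ENNReal.ofReal_sum_of_nonneg fun i _ => mul_nonneg (hw₀ i) measureReal_nonneg]
  refine Finset.sum_congr rfl fun i _ => ?_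
  rw [ENNReal.ofReal_mul (hw₀ i), ofReal_measureReal]
  rfl

lemma ae_mixtureGraph (hg : ∀ i, Measurable (g i)) {S : Set (Ω × α)} (hS : MeasurableSet S)
    (hgS : ∀ i ω, (ω, g i ω) ∈ S) : ∀ᵐ z ∂mixtureGraph μ w g, z ∈ S := by
  rw [ae_iff, ← Set.compl_def, mixtureGraph_apply hg hS.compl]
  refine Finset.sum_eq_zero fun i _ => ?_
  have hnull : (fun ω => (ω, g i ω)) ⁻¹' Sᶜ = ∅ :=
    Set.eq_empty_of_forall_notMem fun ω hω => hω (hgS i ω)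
  rw [hnull, measure_empty, mul_zero]

end Mixture

def IsTieBreaker (s : Finset ι → ι) : Prop := ∀ T : Finset ι, T.Nonempty → s T ∈ T

lemma exists_isTieBreaker_forall_le [Nonempty ι] (β : ι → ℝ) :
    ∃ s, IsTieBreaker s ∧ ∀ T : Finset ι, ∀ y ∈ T, β y ≤ β (s T) := by
  have hbest : ∀ T : Finset ι, ∃ y, T.Nonempty → y ∈ T ∧ ∀ y' ∈ T, β y' ≤ β y := fun T => by
    rcases T.eq_empty_or_nonempty with rfl | hT
    · exact ⟨Classical.arbitrary ι, fun h => absurd h Finset.not_nonempty_empty⟩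
    · obtain ⟨y, hy, hmax⟩ := T.exists_max_image β hT
      exact ⟨y, fun _ => ⟨hy, hmax⟩⟩
  choose s hs using hbest
  exact ⟨s, fun T hT => (hs T hT).1, fun T y hy => (hs T ⟨y, hy⟩).2 y hy⟩

section Choice

variable [Fintype ι]

noncomputable def argmaxSet (f : ι → ℝ) : Finset ι := {y | ∀ y', f y' ≤ f y}

lemma mem_argmaxSet {f : ι → ℝ} {y : ι} : y ∈ argmaxSet f ↔ ∀ y', f y' ≤ f y := by
  simp [argmaxSet]

lemma measurable_argmaxSet : Measurable (argmaxSet : (ι → ℝ) → Finset ι) := by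
  refine measurable_finset_iff.2 fun y => measurableSet_setOfPred.1 ?_
  simp_rw [mem_argmaxSet, Set.ofPred_forall]
  exact .iInter fun y' => measurableSet_le (measurable_pi_apply y') (measurable_pi_apply y)

noncomputable def tieBreakChoice (δ : ι → ℝ) (s : Finset ι → ι) (e : ι → ℝ) : ι :=
  s (argmaxSet (δ + e))

noncomputable def tieBreakShares (P : Measure (ι → ℝ)) (δ : ι → ℝ) (s : Finset ι → ι) :
    ι → ℝ :=
  fun y => P.real (tieBreakChoice δ s ⁻¹' {y})

lemma measurable_tieBreakChoice [MeasurableSpace ι] (δ : ι → ℝ) (s : Finset ι → ι) :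
    Measurable (tieBreakChoice δ s) :=
  (measurable_of_finite s).comp (measurable_argmaxSet.comp (measurable_const_add δ))

lemma measurableSet_argmaxGraph [MeasurableSpace ι] [MeasurableSingletonClass ι]
    (δ : ι → ℝ) :
    MeasurableSet {z : (ι → ℝ) × ι | z.2 ∈ argmaxSet (δ + z.1)} :=
  (MeasurableSet.of_discrete : MeasurableSet {p : Finset ι × ι | p.2 ∈ p.1}).preimage
    ((measurable_argmaxSet.comp ((measurable_const_add δ).comp measurable_fst)).prodMk
      measurable_snd)

noncomputable def surplus (P : Measure (ι → ℝ)) (δ : ι → ℝ) : ℝ := ∫ e, ⨆ y, (δ y + e y) ∂P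

lemma measurable_ciSup_add (c : ι → ℝ) : Measurable fun e : ι → ℝ => ⨆ y, (c y + e y) :=
  .iSup fun y => measurable_const.add (measurable_pi_apply y)

variable [Nonempty ι]

lemma argmaxSet_nonempty (f : ι → ℝ) : (argmaxSet f).Nonempty := by
  obtain ⟨y, -, hy⟩ := Finset.univ.exists_max_image f Finset.univ_nonempty
  exact ⟨y, mem_argmaxSet.2 fun y' => hy y' (Finset.mem_univ y')⟩

/-- Danskin's formula for a finite maximum. -/
lemma eventually_ciSup_add_mul_eq {f β : ι → ℝ} {y₀ : ι}
    (hy₀ : y₀ ∈ argmaxSet f) (hβ : ∀ y ∈ argmaxSet f, β y ≤ β y₀) :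
    ∀ᶠ t in 𝓝[≥] (0 : ℝ), ⨆ y, (f y + t * β y) = f y₀ + t * β y₀ := by
  have hle : ∀ y, ∀ᶠ t in 𝓝[≥] (0 : ℝ), f y + t * β y ≤ f y₀ + t * β y₀ := by
    intro y
    by_cases hy : y ∈ argmaxSet f
    · have hfy : f y = f y₀ := le_antisymm (mem_argmaxSet.1 hy₀ y) (mem_argmaxSet.1 hy y₀)
      filter_upwards [self_mem_nhdsWithin] with t (ht : 0 ≤ t)
      rw [hfy]
      gcongr
      exact hβ y hy
    · obtain ⟨y', hy'⟩ : ∃ y', f y < f y' := by simpa [mem_argmaxSet] using hy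
      have hlt : f y + 0 * β y < f y₀ + 0 * β y₀ := by
        linarith [mem_argmaxSet.1 hy₀ y']
      have hev : ∀ᶠ t in 𝓝 (0 : ℝ), f y + t * β y < f y₀ + t * β y₀ :=
        ContinuousAt.eventually_lt (by fun_prop) (by fun_prop) hlt
      exact (hev.filter_mono nhdsWithin_le_nhds).mono fun t ht => ht.le
  filter_upwards [eventually_all.2 hle] with t ht
  exact ciSup_eq_of_forall_le ht

variable {P : Measure (ι → ℝ)} [IsProbabilityMeasure P]

lemma integrable_ciSup_add (hint : Integrable (fun e => ⨆ y, |e y|) P) (c : ι → ℝ) :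
    Integrable (fun e => ⨆ y, (c y + e y)) P := by
  refine .mono' ((integrable_const (⨆ y, |c y|)).add hint)
    (measurable_ciSup_add c).aestronglyMeasurable (.of_forall fun e => ?_)
  have hshift := abs_ciSup_sub_ciSup_le (fun y => c y + e y) e
  simp only [add_sub_cancel_right] at hshift
  show |_| ≤ (⨆ y, |c y|) + ⨆ y, |e y|
  linarith [abs_sub_abs_le_abs_sub (⨆ y, (c y + e y)) (⨆ y, e y), abs_ciSup_le e]

lemma convexOn_surplus (hint : Integrable (fun e => ⨆ y, |e y|) P) :
    ConvexOn ℝ univ (surplus P) := by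
  refine convexOn_integral convex_univ (fun e => ⟨convex_univ, ?_⟩)
    fun δ _ => integrable_ciSup_add hint δ
  intro δ₁ _ δ₂ _ a b ha hb hab
  refine ciSup_le fun y => ?_
  have hy : (a • δ₁ + b • δ₂) y + e y = a * (δ₁ y + e y) + b * (δ₂ y + e y) := by
    simp only [Pi.add_apply, Pi.smul_apply, smul_eq_mul]
    linear_combination (-e y) * hab
  rw [hy, smul_eq_mul, smul_eq_mul]
  gcongr <;> exact Finite.le_ciSup (fun y => _ + e y) y

lemma tendsto_slope_surplus (hint : Integrable (fun e => ⨆ y, |e y|) P) (δ β : ι → ℝ)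
    {s : Finset ι → ι} (hs : IsTieBreaker s)
    (hmax : ∀ T : Finset ι, ∀ y ∈ T, β y ≤ β (s T)) :
    Tendsto (fun t => (surplus P (δ + t • β) - surplus P δ) / t) (𝓝[>] 0)
      (𝓝 (∫ e, β (s (argmaxSet (δ + e))) ∂P)) := by
  set F : ℝ → (ι → ℝ) → ℝ := fun t e => ((⨆ y, ((δ + t • β) y + e y)) - ⨆ y, (δ y + e y)) / t
  have hslope : ∀ t, (surplus P (δ + t • β) - surplus P δ) / t = ∫ e, F t e ∂P := fun t => by
    rw [integral_div, integral_sub (integrable_ciSup_add hint _) (integrable_ciSup_add hint _)]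
    rfl
  simp_rw [hslope]
  refine tendsto_integral_filter_of_dominated_convergence (fun _ => ⨆ y, |β y|)
    (.of_forall fun t =>
      (((measurable_ciSup_add _).sub (measurable_ciSup_add δ)).div_const t).aestronglyMeasurable)
    ?_ (integrable_const _) (.of_forall fun e => ?_)
  · filter_upwards [self_mem_nhdsWithin] with t (ht : 0 < t)
    refine .of_forall fun e => ?_
    rw [Real.norm_eq_abs, abs_div, abs_of_pos ht, div_le_iff₀ ht]
    refine (abs_ciSup_sub_ciSup_le _ _).trans (ciSup_le fun y => ?_)
    simp only [Pi.add_apply, Pi.smul_apply, smul_eq_mul, add_sub_add_right_eq_sub,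
      add_sub_cancel_left, abs_mul, abs_of_pos ht, mul_comm t]
    gcongr
    exact Finite.le_ciSup (fun y => |β y|) y
  · have hsel : s (argmaxSet (δ + e)) ∈ argmaxSet (δ + e) := hs _ (argmaxSet_nonempty _)
    have hev := eventually_ciSup_add_mul_eq hsel fun y hy => hmax _ y hy
    refine tendsto_const_nhds.congr' ?_
    filter_upwards [nhdsWithin_mono _ Ioi_subset_Ici_self hev, self_mem_nhdsWithin]
      with t ht (htpos : 0 < t)
    have hsup : ⨆ y, (δ y + e y) = (δ + e) (s (argmaxSet (δ + e))) :=
      ciSup_eq_of_forall_le (mem_argmaxSet.1 hsel)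
    simp only [Pi.add_apply] at ht hsup
    simp only [F, Pi.add_apply, Pi.smul_apply, smul_eq_mul, add_right_comm _ _ (e _), ht, hsup,
      add_sub_cancel_left, mul_div_cancel_left₀ _ htpos.ne']

variable [MeasurableSpace ι] [MeasurableSingletonClass ι]

lemma exists_tieBreaker_le_of_subgradient (hint : Integrable (fun e => ⨆ y, |e y|) P)
    {q δ : ι → ℝ}
    (hsub : ∀ δ', surplus P δ + ∑ y, q y * (δ' y - δ y) ≤ surplus P δ') (β : ι → ℝ) :
    ∃ s, IsTieBreaker s ∧ ∑ y, q y * β y ≤ ∑ y, tieBreakShares P δ s y * β y := by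
  obtain ⟨s, hs, hmax⟩ := exists_isTieBreaker_forall_le β
  refine ⟨s, hs, le_of_le_of_eq ?_ (integral_comp_eq_sum (measurable_tieBreakChoice δ s) β)⟩
  refine ge_of_tendsto (tendsto_slope_surplus hint δ β hs hmax) ?_
  filter_upwards [self_mem_nhdsWithin] with t (ht : 0 < t)
  have hstep := hsub (δ + t • β)
  simp only [Pi.add_apply, Pi.smul_apply, smul_eq_mul, add_sub_cancel_left, mul_left_comm _ t,
    ← Finset.mul_sum] at hstep
  rw [le_div_iff₀ ht]
  linarith

lemma exists_coupling_of_mem_convexHull {q δ : ι → ℝ}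
    (hq : q ∈ convexHull ℝ (range fun s : {s // IsTieBreaker s} => tieBreakShares P δ s.1)) :
    ∃ π : Measure ((ι → ℝ) × ι), IsProbabilityMeasure π ∧ π.map Prod.fst = P ∧
      (∀ y, π.map Prod.snd {y} = ENNReal.ofReal (q y)) ∧
      ∀ᵐ z ∂π, ∀ y', δ y' + z.1 y' ≤ δ z.2 + z.1 z.2 := by
  obtain ⟨κ, _, w, z, hw₀, hw₁, hz, rfl⟩ := mem_convexHull_iff_exists_fintype.1 hq
  choose s hs using hz
  have hg : ∀ i, Measurable (tieBreakChoice δ (s i).1) := fun i => measurable_tieBreakChoice δ _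
  have hfst := map_fst_mixtureGraph (μ := P) hg hw₀ hw₁
  refine ⟨mixtureGraph P w fun i => tieBreakChoice δ (s i).1, ⟨?_⟩, hfst, fun y => ?_, ?_⟩
  · rw [← Set.preimage_univ (f := Prod.fst), ← Measure.map_apply measurable_fst .univ, hfst,
      measure_univ]
  · simp_rw [map_snd_mixtureGraph_singleton hg hw₀, ← hs, Finset.sum_apply, Pi.smul_apply,
      smul_eq_mul, tieBreakShares]
  · filter_upwards [ae_mixtureGraph hg (measurableSet_argmaxGraph δ)
      fun i e => (s i).2 _ (argmaxSet_nonempty _)] with z hz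
    exact mem_argmaxSet.1 hz

lemma surplus_add_le_of_coupling (hint : Integrable (fun e => ⨆ y, |e y|) P) {q δ : ι → ℝ}
    (hq₀ : ∀ y, 0 ≤ q y) {π : Measure ((ι → ℝ) × ι)} [IsFiniteMeasure π] (hfst : π.map Prod.fst = P)
    (hsnd : ∀ y, π.map Prod.snd {y} = ENNReal.ofReal (q y))
    (hargmax : ∀ᵐ z ∂π, ∀ y', δ y' + z.1 y' ≤ δ z.2 + z.1 z.2) (δ' : ι → ℝ) :
    surplus P δ + ∑ y, q y * (δ' y - δ y) ≤ surplus P δ' := by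
  have hsurplus : ∀ c, surplus P c = ∫ z, ⨆ y, (c y + z.1 y) ∂π := fun c => by
    rw [surplus, ← hfst,
      integral_map measurable_fst.aemeasurable (measurable_ciSup_add c).aestronglyMeasurable]
  have hintπ : ∀ c : ι → ℝ, Integrable (fun z : (ι → ℝ) × ι => ⨆ y, (c y + z.1 y)) π := fun c =>
    show Integrable ((fun e => ⨆ y, (c y + e y)) ∘ Prod.fst) π from
      (hfst ▸ integrable_ciSup_add hint c).comp_measurable measurable_fst
  have hchosen : (fun z : (ι → ℝ) × ι => ⨆ y, (δ y + z.1 y)) =ᵐ[π] fun z => δ z.2 + z.1 z.2 :=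
    hargmax.mono fun z hz => ciSup_eq_of_forall_le hz
  have hshares : ∫ z, (δ' z.2 - δ z.2) ∂π = ∑ y, q y * (δ' y - δ y) := by
    rw [integral_comp_eq_sum measurable_snd fun y => δ' y - δ y]
    refine Finset.sum_congr rfl fun y _ => ?_
    rw [← map_measureReal_apply measurable_snd (measurableSet_singleton y), Measure.real, hsnd,
      ENNReal.toReal_ofReal (hq₀ y)]
  have hdiff : Integrable (fun z : (ι → ℝ) × ι => δ' z.2 - δ z.2) π :=
    show Integrable ((fun y => δ' y - δ y) ∘ Prod.snd) π from
      Integrable.of_finite.comp_measurable measurable_snd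
  have hchosenInt := (hintπ δ).congr hchosen
  rw [hsurplus δ, hsurplus δ', integral_congr_ae hchosen, ← hshares,
    ← integral_add hchosenInt hdiff]
  exact integral_mono (hchosenInt.add hdiff) (hintπ δ') fun z => by
    linarith [Finite.le_ciSup (fun y => δ' y + z.1 y) z.2]

end Choice

end DiscreteChoice

open DiscreteChoice

theorem demand_inversion_subgradient_general
    (m : ℕ) [NeZero m]
    (P : Measure (Fin m → ℝ)) [IsProbabilityMeasure P]
    (hint : Integrable (fun e => ⨆ y, |e y|) P)
    (G : (Fin m → ℝ) → ℝ)
    (hG : G = fun δ => ∫ e, (⨆ y, (δ y + e y)) ∂P)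
    (q : Fin m → ℝ) (hq0 : ∀ y, 0 ≤ q y)
    (δ : Fin m → ℝ) :
    ConvexOn ℝ Set.univ G ∧
    ((∃ π : Measure ((Fin m → ℝ) × Fin m),
        IsProbabilityMeasure π ∧
        -- the first margin of the joint law of (ε, Y) is the law P of ε ...
        π.map Prod.fst = P ∧
        -- ... the law of Y is q ...
        (∀ y, π.map Prod.snd {y} = ENNReal.ofReal (q y)) ∧
        -- ... and Y ∈ argmax_y {δ_y + ε_y} almost surely
        (∀ᵐ z ∂π, ∀ y' : Fin m, δ y' + z.1 y' ≤ δ z.2 + z.1 z.2)) ↔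
      -- q is a subgradient of G at δ
      (∀ δ' : Fin m → ℝ, G δ + ∑ y, q y * (δ' y - δ y) ≤ G δ')) := by
  obtain rfl : G = surplus P := hG
  refine ⟨convexOn_surplus hint, fun ⟨π, _, hfst, hsnd, hargmax⟩ δ' =>
    surplus_add_le_of_coupling hint hq0 hfst hsnd hargmax δ', fun hsub => ?_⟩
  refine exists_coupling_of_mem_convexHull
    (mem_convexHull_of_forall_exists_sum_mul_le (finite_range _) fun β => ?_)
  obtain ⟨s, hs, hle⟩ := exists_tieBreaker_le_of_subgradient hint hsub β
  exact ⟨_, ⟨⟨s, hs⟩, rfl⟩, hle⟩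

/-- Demand inversion as a subgradient relation: with `𝒴 = Fin m` a finite set of
alternatives, `ε ∼ P` a random vector in `ℝ^𝒴` with `E[max_y |ε_y|] < ∞`, and
`G(δ) = E[max_y {δ_y + ε_y}]`, the map `G` is convex, and a probability vector `q` is a
vector of market shares induced by `δ` (i.e. some `Y ∼ q`, defined jointly with `ε`,
satisfies `Y ∈ argmax_y {δ_y + ε_y}` a.s.) if and only if `q` is a subgradient of `G`
at `δ`. -/
theorem demand_inversion_subgradient
    (m : ℕ) [NeZero m]
    (P : Measure (Fin m → ℝ)) [IsProbabilityMeasure P]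
    (hint : Integrable (fun e => ⨆ y, |e y|) P)
    (G : (Fin m → ℝ) → ℝ)
    (hG : G = fun δ => ∫ e, (⨆ y, (δ y + e y)) ∂P)
    (q : Fin m → ℝ) (hq0 : ∀ y, 0 ≤ q y) (hq1 : ∑ y, q y = 1)
    (δ : Fin m → ℝ) :
    ConvexOn ℝ Set.univ G ∧
    ((∃ π : Measure ((Fin m → ℝ) × Fin m),
        IsProbabilityMeasure π ∧
        -- the first margin of the joint law of (ε, Y) is the law P of ε ...
        π.map Prod.fst = P ∧
        -- ... the law of Y is q ...
        (∀ y, π.map Prod.snd {y} = ENNReal.ofReal (q y)) ∧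
        -- ... and Y ∈ argmax_y {δ_y + ε_y} almost surely
        (∀ᵐ z ∂π, ∀ y' : Fin m, δ y' + z.1 y' ≤ δ z.2 + z.1 z.2)) ↔
      -- q is a subgradient of G at δ
      (∀ δ' : Fin m → ℝ, G δ + ∑ y, q y * (δ' y - δ y) ≤ G δ')) :=
  demand_inversion_subgradient_general m P hint G hG q hq0 δ
end

section
/- Demand inversion as an optimal transport dual problem: let 𝒴 be a finite set, ε a random vector in ℝ^𝒴 with E[max_{y} |ε_y|] < ∞, G(δ) = E[max_{y ∈ 𝒴} {δ_y + ε_y}], and q a probability vector on 𝒴. Then δ ∈ ℝ^𝒴 belongs to D(q) if and only if ψ := −δ minimizes the function ψ ↦ E[max_{y ∈ 𝒴} {ε_y − ψ_y}] + Σ_{y ∈ 𝒴} q_y ψ_y over ℝ^𝒴; equivalently, D(q) is the set of minimizers of δ ↦ G(δ) − Σ_{y ∈ 𝒴} q_y δ_y over ℝ^𝒴. -/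
/-!
If `δ ∈ D(q)`, integrating `δ' Y + ε_Y ≤ max_y (δ' y + ε_y)` against the joint law of `(ε, Y)`
gives `G δ - ⟪q, δ⟫ = E[ε_Y] ≤ G δ' - ⟪q, δ'⟫`, with equality at `δ' = δ`.

Conversely, let `δ` minimize `G - ⟪q, ·⟫`. Since `max_y (a_y + t h_y) = max a + t h_{y₀}` for small
`t > 0`, where `y₀` maximizes `h` among the maximizers of `a`, dominated convergence identifies
the one-sided derivative of `G` at `δ` in the direction `h` with `E[h_{σ(A(ε))}]`, where `A(ε)` is
the set of optimal alternatives and `σ` is a tie-breaking rule preferring large `h`; minimality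
makes it at least `⟪q, h⟫`. As there are finitely many tie-breaking rules, separation in `ℝ^𝒴`
writes `q` as a convex combination of the market shares they induce, and the same mixture of the
couplings `(ε, σ(A(ε)))` witnesses `δ ∈ D(q)`. The `ψ` form is the substitution `ψ = -δ`.
-/

open MeasureTheory Filter Topology

lemma ciSup_eq_of_forall_le {ι α : Type*} [ConditionallyCompleteLattice α] {f : ι → α} {i₀ : ι}
    (h : ∀ i, f i ≤ f i₀) : ⨆ i, f i = f i₀ :=
  have : Nonempty ι := ⟨i₀⟩
  le_antisymm (ciSup_le h) (le_ciSup ⟨f i₀, Set.forall_mem_range.2 h⟩ i₀)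

section FiniteSupremum

variable {ι : Type*} [Finite ι]

lemma abs_ciSup_sub_ciSup_le [Nonempty ι] {f g : ι → ℝ} {C : ℝ} (h : ∀ i, |f i - g i| ≤ C) :
    |(⨆ i, f i) - ⨆ i, g i| ≤ C := by
  have key : ∀ f g : ι → ℝ, (∀ i, |f i - g i| ≤ C) → (⨆ i, f i) ≤ (⨆ i, g i) + C :=
    fun f g h => ciSup_le fun i => by
      linarith [le_ciSup (Finite.bddAbove_range g) i, (abs_le.1 (h i)).2]
  rw [abs_sub_le_iff]
  exact ⟨by linarith [key f g h], by linarith [key g f fun i => abs_sub_comm (g i) (f i) ▸ h i]⟩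

lemma eventually_ciSup_add_mul_eq (a b : ι → ℝ) {i₀ : ι} (ha : ∀ i, a i ≤ a i₀)
    (hb : ∀ i, a i = a i₀ → b i ≤ b i₀) :
    ∀ᶠ t in 𝓝[≥] (0 : ℝ), ⨆ i, (a i + t * b i) = a i₀ + t * b i₀ := by
  have hle (i : ι) : ∀ᶠ t in 𝓝[≥] (0 : ℝ), a i + t * b i ≤ a i₀ + t * b i₀ := by
    rcases (ha i).eq_or_lt with hi | hi
    · filter_upwards [self_mem_nhdsWithin] with t (ht : 0 ≤ t)
      rw [hi]
      gcongr
      exact hb i hi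
    · refine nhdsWithin_le_nhds ((ContinuousAt.eventually_lt (by fun_prop) (by fun_prop) ?_).mono
        fun t => le_of_lt)
      simpa using hi
  filter_upwards [eventually_all.2 hle] with t ht
  exact ciSup_eq_of_forall_le ht

lemma tendsto_ciSup_add_mul_sub_div (a b : ι → ℝ) {i₀ : ι} (ha : ∀ i, a i ≤ a i₀)
    (hb : ∀ i, a i = a i₀ → b i ≤ b i₀) :
    Tendsto (fun t => ((⨆ i, (a i + t * b i)) - ⨆ i, a i) / t) (𝓝[>] 0) (𝓝 (b i₀)) := by
  refine tendsto_const_nhds.congr' ?_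
  filter_upwards [nhdsWithin_mono _ Set.Ioi_subset_Ici_self (eventually_ciSup_add_mul_eq a b ha hb),
    self_mem_nhdsWithin] with t ht (htpos : 0 < t)
  rw [ht, ciSup_eq_of_forall_le ha, add_sub_cancel_left, mul_div_cancel_left₀ _ htpos.ne']

end FiniteSupremum

lemma exists_mem_stdSimplex_sum_smul_eq {κ ι : Type*} [Fintype κ] [Fintype ι]
    (x : κ → ι → ℝ) (q : ι → ℝ) (h : ∀ c : ι → ℝ, ∃ k, ∑ i, q i * c i ≤ ∑ i, x k i * c i) :
    ∃ w ∈ stdSimplex ℝ κ, ∑ k, w k • x k = q := by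
  classical
  let Φ := Fintype.linearCombination ℝ x
  have hΦ : ∀ w, Φ w = ∑ k, w k • x k := Fintype.linearCombination_apply ℝ x
  by_contra! hq
  have hqS : q ∉ Φ '' stdSimplex ℝ κ := by
    rintro ⟨w, hw, rfl⟩
    exact hq w hw (hΦ w).symm
  obtain ⟨f, u, hfS, hfq⟩ := geometric_hahn_banach_closed_point
    ((convex_stdSimplex ℝ κ).linear_image Φ)
    ((isCompact_stdSimplex ℝ κ).image Φ.continuous_of_finiteDimensional).isClosed hqS
  have hxk : ∀ k, f (x k) < u := fun k =>
    hfS _ ⟨Pi.single k 1, single_mem_stdSimplex ℝ k, by simp [hΦ]⟩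
  have hf (v : ι → ℝ) : f v = ∑ i, v i * f fun j => if i = j then 1 else 0 :=
    LinearMap.pi_apply_eq_sum_univ f.toLinearMap v
  obtain ⟨k, hk⟩ := h fun i => f fun j => if i = j then 1 else 0
  linarith [hf q, hf (x k), hxk k]

abbrev TieBreak (ι : Type*) [DecidableEq ι] :=
  {σ : Finset ι → ι // ∀ T : Finset ι, T.Nonempty → σ T ∈ T}

lemma exists_tieBreak_forall_le {ι : Type*} [DecidableEq ι] [Nonempty ι] (h : ι → ℝ) :
    ∃ σ : TieBreak ι, ∀ T : Finset ι, ∀ i ∈ T, h i ≤ h (σ.1 T) := by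
  have (T : Finset ι) : ∃ y, (T.Nonempty → y ∈ T) ∧ ∀ i ∈ T, h i ≤ h y := by
    rcases T.eq_empty_or_nonempty with rfl | hT
    · exact ⟨Classical.arbitrary ι, by simp⟩
    · obtain ⟨y, hyT, hy⟩ := T.exists_max_image h hT
      exact ⟨y, fun _ => hyT, hy⟩
  choose σ hσ using this
  exact ⟨⟨σ, fun T => (hσ T).1⟩, fun T => (hσ T).2⟩

lemma integral_comp_eq_sum {Ω ι : Type*} [MeasurableSpace Ω] [Fintype ι] [MeasurableSpace ι]
    [MeasurableSingletonClass ι] {P : Measure Ω} [IsFiniteMeasure P] {s : Ω → ι}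
    (hs : Measurable s) (h : ι → ℝ) :
    ∫ ω, h (s ω) ∂P = ∑ i, (P.map s).real {i} * h i := by
  rw [← integral_map hs.aemeasurable (measurable_of_countable h).aestronglyMeasurable,
    integral_fintype Integrable.of_finite]
  rfl

section DiscreteChoice

variable {ι : Type*} [Fintype ι]

noncomputable def socialSurplus (P : Measure (ι → ℝ)) (δ : ι → ℝ) : ℝ :=
  ∫ e, ⨆ i, (δ i + e i) ∂P

lemma integral_ciSup_sub_add_sum_mul (P : Measure (ι → ℝ)) (q ψ : ι → ℝ) :
    ∫ e, (⨆ i, (e i - ψ i)) ∂P + ∑ i, q i * ψ i =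
      socialSurplus P (-ψ) - ∑ i, q i * (-ψ) i := by
  simp [socialSurplus, neg_add_eq_sub]

/-- The set `D(q)`; `π` is the joint law of `(ε, Y)`. -/
def demandInverse [MeasurableSpace ι] (P : Measure (ι → ℝ)) (q : ι → ℝ) : Set (ι → ℝ) :=
  {δ | ∃ π : Measure ((ι → ℝ) × ι),
    IsProbabilityMeasure π ∧
    π.map Prod.fst = P ∧
    (∀ y, π.map Prod.snd {y} = ENNReal.ofReal (q y)) ∧
    (∀ᵐ z ∂π, ∀ y', δ y' + z.1 y' ≤ δ z.2 + z.1 z.2)}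

noncomputable def optimalChoices (δ e : ι → ℝ) : Finset ι :=
  {i | ∀ j, δ j + e j ≤ δ i + e i}

lemma mem_optimalChoices {δ e : ι → ℝ} {i : ι} :
    i ∈ optimalChoices δ e ↔ ∀ j, δ j + e j ≤ δ i + e i := by
  simp [optimalChoices]

lemma optimalChoices_nonempty [Nonempty ι] (δ e : ι → ℝ) : (optimalChoices δ e).Nonempty :=
  (Finite.exists_max fun i => δ i + e i).imp fun _ => mem_optimalChoices.2

lemma measurable_optimalChoices (δ : ι → ℝ) : Measurable (optimalChoices δ) :=
  measurable_finset_iff.2 fun i => by simp only [mem_optimalChoices]; fun_prop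

lemma measurable_ciSup_add (δ : ι → ℝ) : Measurable fun e : ι → ℝ => ⨆ i, (δ i + e i) :=
  Measurable.iSup fun i => by fun_prop

variable {P : Measure (ι → ℝ)}

lemma integrable_ciSup_add [Nonempty ι] [IsFiniteMeasure P]
    (hint : Integrable (fun e => ⨆ i, |e i|) P) (δ : ι → ℝ) :
    Integrable (fun e => ⨆ i, (δ i + e i)) P := by
  refine ((integrable_const (∑ i, |δ i|)).add hint).mono'
    (measurable_ciSup_add δ).aestronglyMeasurable (ae_of_all _ fun e => ?_)
  have hbound (i : ι) : |δ i + e i - 0| ≤ ∑ i, |δ i| + ⨆ i, |e i| := by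
    rw [sub_zero]
    exact (abs_add_le _ _).trans (add_le_add (Finset.single_le_sum (fun j _ => abs_nonneg (δ j))
      (Finset.mem_univ i)) (le_ciSup (Finite.bddAbove_range fun i => |e i|) i))
  simpa using abs_ciSup_sub_ciSup_le hbound

/-- `∫ h (s e) ∂P` is the one-sided derivative of `socialSurplus P` at `δ` in the direction `h`. -/
lemma sum_mul_le_integral_of_forall_le [Nonempty ι] [IsFiniteMeasure P]
    (hint : Integrable (fun e => ⨆ i, |e i|) P) {q δ : ι → ℝ}
    (hmin : ∀ δ', socialSurplus P δ - ∑ i, q i * δ i ≤ socialSurplus P δ' - ∑ i, q i * δ' i)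
    (h : ι → ℝ) {s : (ι → ℝ) → ι} (hs : ∀ e j, δ j + e j ≤ δ (s e) + e (s e))
    (hsh : ∀ e j, δ j + e j = δ (s e) + e (s e) → h j ≤ h (s e)) :
    ∑ i, q i * h i ≤ ∫ e, h (s e) ∂P := by
  let D (t : ℝ) (e : ι → ℝ) : ℝ := ((⨆ i, ((δ + t • h) i + e i)) - ⨆ i, (δ i + e i)) / t
  have hD (t : ℝ) (e : ι → ℝ) :
      D t e = ((⨆ i, ((δ i + e i) + t * h i)) - ⨆ i, (δ i + e i)) / t := by
    simp only [D, Pi.add_apply, Pi.smul_apply, smul_eq_mul, add_right_comm]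
  have hbound : ∀ t > 0, ∀ e, ‖D t e‖ ≤ ∑ i, |h i| := fun t ht e => by
    rw [hD, Real.norm_eq_abs, abs_div, abs_of_pos ht, div_le_iff₀ ht, mul_comm]
    refine abs_ciSup_sub_ciSup_le fun i => ?_
    rw [add_sub_cancel_left, abs_mul, abs_of_pos ht]
    gcongr
    exact Finset.single_le_sum (fun j _ => abs_nonneg (h j)) (Finset.mem_univ i)
  have hlim : Tendsto (fun t => ∫ e, D t e ∂P) (𝓝[>] 0) (𝓝 (∫ e, h (s e) ∂P)) := by
    refine tendsto_integral_filter_of_dominated_convergence (fun _ => ∑ i, |h i|)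
      (Eventually.of_forall fun t => ?_) ?_ (integrable_const _) (ae_of_all _ fun e => ?_)
    · exact ((measurable_ciSup_add _).sub (measurable_ciSup_add δ)).div_const t
        |>.aestronglyMeasurable
    · filter_upwards [self_mem_nhdsWithin] with t ht
      exact ae_of_all _ (hbound t ht)
    · simp only [hD]
      exact tendsto_ciSup_add_mul_sub_div _ h (hs e) (hsh e)
  have hlow : ∀ t > 0, ∑ i, q i * h i ≤ ∫ e, D t e ∂P := fun t ht => by
    rw [integral_div, integral_sub (integrable_ciSup_add hint _) (integrable_ciSup_add hint δ),
      le_div_iff₀ ht]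
    have hq : ∑ i, q i * (δ + t • h) i = ∑ i, q i * δ i + t * ∑ i, q i * h i := by
      simp only [Pi.add_apply, Pi.smul_apply, smul_eq_mul, mul_add, Finset.sum_add_distrib,
        Finset.mul_sum, mul_left_comm]
    have := hmin (δ + t • h)
    unfold socialSurplus at this
    linarith
  exact ge_of_tendsto hlim (eventually_mem_nhdsWithin.mono hlow)

variable [MeasurableSpace ι] [MeasurableSingletonClass ι]

lemma socialSurplus_sub_le_of_mem_demandInverse [Nonempty ι] [IsFiniteMeasure P]
    (hint : Integrable (fun e => ⨆ i, |e i|) P)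
    {q δ : ι → ℝ} (hq0 : ∀ i, 0 ≤ q i) (hδ : δ ∈ demandInverse P q) (δ' : ι → ℝ) :
    socialSurplus P δ - ∑ i, q i * δ i ≤ socialSurplus P δ' - ∑ i, q i * δ' i := by
  obtain ⟨π, hπ, hfst, hsnd, hopt⟩ := hδ
  have hG (a : ι → ℝ) : ∫ z, ⨆ i, (a i + z.1 i) ∂π = socialSurplus P a := by
    rw [socialSurplus, ← hfst,
      integral_map measurable_fst.aemeasurable (measurable_ciSup_add a).aestronglyMeasurable]
  have hGint (a : ι → ℝ) : Integrable (fun z => ⨆ i, (a i + z.1 i)) π := by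
    have := integrable_ciSup_add hint a
    rw [← hfst] at this
    exact this.comp_measurable measurable_fst
  have hlin (a : ι → ℝ) : ∫ z, a z.2 ∂π = ∑ i, q i * a i := by
    rw [integral_comp_eq_sum measurable_snd]
    refine Finset.sum_congr rfl fun i _ => ?_
    rw [measureReal_def, hsnd, ENNReal.toReal_ofReal (hq0 i)]
  have hlinint (a : ι → ℝ) : Integrable (fun z => a z.2) π :=
    (Integrable.of_finite (μ := π.map Prod.snd) (f := a)).comp_measurable measurable_snd
  have hobj (a : ι → ℝ) :
      socialSurplus P a - ∑ i, q i * a i = ∫ z, ((⨆ i, (a i + z.1 i)) - a z.2) ∂π := by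
    rw [integral_sub (hGint a) (hlinint a), hG, hlin]
  rw [hobj, hobj]
  refine integral_mono_ae ((hGint δ).sub (hlinint δ)) ((hGint δ').sub (hlinint δ')) ?_
  filter_upwards [hopt] with z hz
  rw [ciSup_eq_of_forall_le hz]
  linarith [le_ciSup (Finite.bddAbove_range fun i => δ' i + z.1 i) z.2]

lemma mem_demandInverse_of_sum_smul_eq [IsProbabilityMeasure P] {κ : Type*} [Fintype κ]
    {δ q : ι → ℝ} {s : κ → (ι → ℝ) → ι} (hs_meas : ∀ k, Measurable (s k))
    (hs : ∀ k e j, δ j + e j ≤ δ (s k e) + e (s k e)) {w : κ → ℝ} (hw : w ∈ stdSimplex ℝ κ)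
    (hq : ∑ k, w k • (fun i => (P.map (s k)).real {i}) = q) :
    δ ∈ demandInverse P q := by
  have hgraph (k : κ) : Measurable fun e => (e, s k e) := measurable_id.prodMk (hs_meas k)
  let π := Measure.sum fun k => ENNReal.ofReal (w k) • P.map fun e => (e, s k e)
  have hπ {t : Set ((ι → ℝ) × ι)} (ht : MeasurableSet t) :
      π t = ∑ k, ENNReal.ofReal (w k) * P ((fun e => (e, s k e)) ⁻¹' t) := by
    simp [π, Measure.map_apply (hgraph _) ht]
  have hfst : π.map Prod.fst = P := by
    ext t ht
    rw [Measure.map_apply measurable_fst ht, hπ (measurable_fst ht)]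
    simp only [Set.preimage_preimage, Set.preimage_id', ← Finset.sum_mul]
    rw [← ENNReal.ofReal_sum_of_nonneg fun k _ => hw.1 k, hw.2, ENNReal.ofReal_one, one_mul]
  refine ⟨π, ⟨?_⟩, hfst, fun y => ?_, ?_⟩
  · simpa [Measure.map_apply measurable_fst MeasurableSet.univ] using
      congrArg (fun μ => μ Set.univ) hfst
  · rw [Measure.map_apply measurable_snd (measurableSet_singleton y),
      hπ (measurable_snd (measurableSet_singleton y)), ← hq]
    simp only [Finset.sum_apply, Pi.smul_apply, smul_eq_mul, measureReal_def]
    rw [ENNReal.ofReal_sum_of_nonneg fun k _ => mul_nonneg (hw.1 k) ENNReal.toReal_nonneg]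
    refine Finset.sum_congr rfl fun k _ => ?_
    rw [ENNReal.ofReal_mul (hw.1 k), ENNReal.ofReal_toReal (measure_ne_top _ _),
      Measure.map_apply (hs_meas k) (measurableSet_singleton y)]
    rfl
  · have hgood : MeasurableSet {z : (ι → ℝ) × ι | ∀ j, δ j + z.1 j ≤ δ z.2 + z.1 z.2} :=
      measurableSet_setOfPred.2 <| Measurable.forall fun j => measurableSet_setOfPred.1 <|
        measurableSet_le (by fun_prop) (measurable_from_prod_countable_left fun i => by fun_prop)
    refine Measure.ae_sum_iff.2 fun k => Measure.ae_smul_measure ?_ _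
    exact (ae_map_iff (hgraph k).aemeasurable hgood).2 (ae_of_all _ (hs k))

lemma mem_demandInverse_of_forall_le [Nonempty ι] [IsProbabilityMeasure P]
    (hint : Integrable (fun e => ⨆ i, |e i|) P) {q δ : ι → ℝ}
    (hmin : ∀ δ', socialSurplus P δ - ∑ i, q i * δ i ≤ socialSurplus P δ' - ∑ i, q i * δ' i) :
    δ ∈ demandInverse P q := by
  classical
  let s (σ : TieBreak ι) (e : ι → ℝ) : ι := σ.1 (optimalChoices δ e)
  have hs_meas (σ : TieBreak ι) : Measurable (s σ) :=
    (measurable_of_countable σ.1).comp (measurable_optimalChoices δ)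
  have hs (σ : TieBreak ι) (e : ι → ℝ) : ∀ j, δ j + e j ≤ δ (s σ e) + e (s σ e) :=
    mem_optimalChoices.1 (σ.2 _ (optimalChoices_nonempty δ e))
  obtain ⟨w, hw, hwq⟩ :=
    exists_mem_stdSimplex_sum_smul_eq (fun σ i => (P.map (s σ)).real {i}) q fun h => by
      obtain ⟨σ, hσ⟩ := exists_tieBreak_forall_le h
      refine ⟨σ, ?_⟩
      rw [← integral_comp_eq_sum (hs_meas σ)]
      refine sum_mul_le_integral_of_forall_le hint hmin h (hs σ) fun e j hj => hσ _ _ ?_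
      exact mem_optimalChoices.2 fun k => hj ▸ hs σ e k
  exact mem_demandInverse_of_sum_smul_eq hs_meas (hs ·) hw hwq

end DiscreteChoice

theorem demand_inversion_dual_general
    (m : ℕ) [NeZero m]
    (P : Measure (Fin m → ℝ)) [IsProbabilityMeasure P]
    (hint : Integrable (fun e => ⨆ y, |e y|) P)
    (G : (Fin m → ℝ) → ℝ)
    (hG : G = fun δ => ∫ e, (⨆ y, (δ y + e y)) ∂P)
    (q : Fin m → ℝ) (hq0 : ∀ y, 0 ≤ q y)
    (δ : Fin m → ℝ) :
    -- δ ∈ D(q) ...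
    ((∃ π : Measure ((Fin m → ℝ) × Fin m),
        IsProbabilityMeasure π ∧
        π.map Prod.fst = P ∧
        (∀ y, π.map Prod.snd {y} = ENNReal.ofReal (q y)) ∧
        (∀ᵐ z ∂π, ∀ y' : Fin m, δ y' + z.1 y' ≤ δ z.2 + z.1 z.2)) ↔
      -- ... iff ψ := −δ minimizes ψ ↦ E[max_y {ε_y − ψ_y}] + Σ_y q_y ψ_y
      (∀ ψ' : Fin m → ℝ,
        ∫ e, (⨆ y, (e y - (-δ) y)) ∂P + ∑ y, q y * (-δ) y ≤
          ∫ e, (⨆ y, (e y - ψ' y)) ∂P + ∑ y, q y * ψ' y)) ∧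
    -- equivalently, δ ∈ D(q) iff δ minimizes δ' ↦ G(δ') − Σ_y q_y δ'_y
    ((∃ π : Measure ((Fin m → ℝ) × Fin m),
        IsProbabilityMeasure π ∧
        π.map Prod.fst = P ∧
        (∀ y, π.map Prod.snd {y} = ENNReal.ofReal (q y)) ∧
        (∀ᵐ z ∂π, ∀ y' : Fin m, δ y' + z.1 y' ≤ δ z.2 + z.1 z.2)) ↔
      (∀ δ' : Fin m → ℝ, G δ - ∑ y, q y * δ y ≤ G δ' - ∑ y, q y * δ' y)) := by
  subst hG
  have hD : δ ∈ demandInverse P q ↔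
      ∀ δ', socialSurplus P δ - ∑ i, q i * δ i ≤ socialSurplus P δ' - ∑ i, q i * δ' i :=
    ⟨socialSurplus_sub_le_of_mem_demandInverse hint hq0, mem_demandInverse_of_forall_le hint⟩
  refine ⟨hD.trans ?_, hD⟩
  simp only [integral_ciSup_sub_add_sum_mul, neg_neg]
  exact ⟨fun H ψ' => H (-ψ'), fun H δ' => by simpa using H (-δ')⟩

/-- Demand inversion as an optimal transport dual problem: with `𝒴 = Fin m`, `ε ∼ P`,
`E[max_y |ε_y|] < ∞` and `G(δ) = E[max_y {δ_y + ε_y}]`, a systematic utility vector `δ`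
induces the market shares `q` (i.e. `δ ∈ D(q)`) if and only if `ψ := −δ` minimizes
`ψ ↦ E[max_y {ε_y − ψ_y}] + Σ_y q_y ψ_y`; equivalently, if and only if `δ` minimizes
`δ ↦ G(δ) − Σ_y q_y δ_y`. -/
theorem demand_inversion_dual
    (m : ℕ) [NeZero m]
    (P : Measure (Fin m → ℝ)) [IsProbabilityMeasure P]
    (hint : Integrable (fun e => ⨆ y, |e y|) P)
    (G : (Fin m → ℝ) → ℝ)
    (hG : G = fun δ => ∫ e, (⨆ y, (δ y + e y)) ∂P)
    (q : Fin m → ℝ) (hq0 : ∀ y, 0 ≤ q y) (hq1 : ∑ y, q y = 1)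
    (δ : Fin m → ℝ) :
    -- δ ∈ D(q) ...
    ((∃ π : Measure ((Fin m → ℝ) × Fin m),
        IsProbabilityMeasure π ∧
        π.map Prod.fst = P ∧
        (∀ y, π.map Prod.snd {y} = ENNReal.ofReal (q y)) ∧
        (∀ᵐ z ∂π, ∀ y' : Fin m, δ y' + z.1 y' ≤ δ z.2 + z.1 z.2)) ↔
      -- ... iff ψ := −δ minimizes ψ ↦ E[max_y {ε_y − ψ_y}] + Σ_y q_y ψ_y
      (∀ ψ' : Fin m → ℝ,
        ∫ e, (⨆ y, (e y - (-δ) y)) ∂P + ∑ y, q y * (-δ) y ≤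
          ∫ e, (⨆ y, (e y - ψ' y)) ∂P + ∑ y, q y * ψ' y)) ∧
    -- equivalently, δ ∈ D(q) iff δ minimizes δ' ↦ G(δ') − Σ_y q_y δ'_y
    ((∃ π : Measure ((Fin m → ℝ) × Fin m),
        IsProbabilityMeasure π ∧
        π.map Prod.fst = P ∧
        (∀ y, π.map Prod.snd {y} = ENNReal.ofReal (q y)) ∧
        (∀ᵐ z ∂π, ∀ y' : Fin m, δ y' + z.1 y' ≤ δ z.2 + z.1 z.2)) ↔
      (∀ δ' : Fin m → ℝ, G δ - ∑ y, q y * δ y ≤ G δ' - ∑ y, q y * δ' y)) :=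
  demand_inversion_dual_general m P hint G hG q hq0 δ
end

section
/- Characterization of the zero Afriat transport value: let x_1,…,x_n ∈ ℝ^d, p_1,…,p_n ∈ ℝ^d, and λ ∈ ℝ^n with λ_i ≥ 0 and Σ_i λ_i = 1. Define Φ^λ_{ij} = λ_i · p_i⊤(x_i − x_j) and W(λ) as the maximum of Σ_{i,j} π_{ij} Φ^λ_{ij} over n×n matrices π with π_{ij} ≥ 0 and all row sums and column sums equal to 1/n. Then W(λ) = 0 if and only if there exists u ∈ ℝ^n satisfying Afriat's inequalities u_i − u_j ≥ λ_i p_i⊤(x_i − x_j) for all i, j ∈ {1,…,n}. -/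
/-!
If `u` solves Afriat's inequalities, then every coupling `π` has value
`∑ π i j * Φ i j ≤ ∑ π i j * (u i - u j) = 0` because its two marginals agree, and the diagonal
coupling attains `0`.

Conversely, if every coupling has value `≤ 0`, then so has every closed walk: its matrix of edge
counts, padded on the diagonal (where `Φ` vanishes), has constant row and column sums and so
rescales to a coupling. Nonpositive cycle costs are Rockafellar's cyclical monotonicity, and
`u j = -sup {cost of a walk from a fixed vertex to j}` is then finite and solves the inequalities.
-/

namespace Afriat

section Walks

variable {α : Type*} (Φ : α → α → ℝ)

def walkCost {m : ℕ} (w : Fin (m + 1) → α) : ℝ :=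
  ∑ k : Fin m, Φ (w k.castSucc) (w k.succ)

lemma walkCost_snoc {m : ℕ} (w : Fin (m + 1) → α) (a : α) :
    walkCost Φ (Fin.snoc w a : Fin (m + 2) → α) = walkCost Φ w + Φ (w (Fin.last m)) a := by
  rw [walkCost, Fin.sum_univ_castSucc]
  simp only [Fin.succ_castSucc, Fin.snoc_castSucc, Fin.succ_last, Fin.snoc_last, walkCost]

lemma sum_finRotate_eq_walkCost_add {m : ℕ} (w : Fin (m + 1) → α) :
    ∑ k, Φ (w k) (w (finRotate _ k)) = walkCost Φ w + Φ (w (Fin.last m)) (w 0) := by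
  rw [Fin.sum_univ_castSucc, walkCost, finRotate_last]
  simp

def walkCosts (a b : α) : Set ℝ :=
  {s | ∃ (m : ℕ) (w : Fin (m + 1) → α), w 0 = a ∧ w (Fin.last m) = b ∧ walkCost Φ w = s}

lemma walkCosts_nonempty (a b : α) : (walkCosts Φ a b).Nonempty :=
  ⟨_, 1, ![a, b], rfl, rfl, rfl⟩

lemma add_mem_walkCosts {a b c : α} {s : ℝ} (hs : s ∈ walkCosts Φ a b) :
    s + Φ b c ∈ walkCosts Φ a c := by
  obtain ⟨m, w, h0, hm, rfl⟩ := hs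
  exact ⟨m + 1, Fin.snoc w c, by simp [h0], by simp, by rw [walkCost_snoc, hm]⟩

variable {Φ}

lemma le_of_mem_walkCosts
    (hcyc : ∀ (m : ℕ) (w : Fin (m + 1) → α), ∑ k, Φ (w k) (w (finRotate _ k)) ≤ 0)
    {a b : α} {s : ℝ} (hs : s ∈ walkCosts Φ a b) : s ≤ -Φ b a := by
  obtain ⟨m, w, h0, hm, rfl⟩ := hs
  have := hcyc m w
  rw [sum_finRotate_eq_walkCost_add, h0, hm] at this
  linarith

lemma exists_potential_of_sum_finRotate_nonpos
    (hcyc : ∀ (m : ℕ) (w : Fin (m + 1) → α), ∑ k, Φ (w k) (w (finRotate _ k)) ≤ 0) :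
    ∃ u : α → ℝ, ∀ i j, Φ i j ≤ u i - u j := by
  cases isEmpty_or_nonempty α with
  | inl _ => exact ⟨isEmptyElim, fun i ↦ isEmptyElim i⟩
  | inr hα =>
    obtain ⟨a⟩ := hα
    have hbdd (j : α) : BddAbove (walkCosts Φ a j) :=
      ⟨-Φ j a, fun _ hs ↦ le_of_mem_walkCosts hcyc hs⟩
    refine ⟨fun j ↦ -sSup (walkCosts Φ a j), fun i j ↦ ?_⟩
    have hsup : sSup (walkCosts Φ a i) ≤ sSup (walkCosts Φ a j) - Φ i j :=
      csSup_le (walkCosts_nonempty Φ a i) fun s hs ↦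
        le_sub_iff_add_le.2 (le_csSup (hbdd j) (add_mem_walkCosts Φ hs))
    linarith

end Walks

section Coupling
variable {ι : Type*} [Fintype ι]

def IsUniformCoupling (π : ι → ι → ℝ) : Prop :=
  (∀ i j, 0 ≤ π i j) ∧ (∀ i, ∑ j, π i j = 1 / Fintype.card ι) ∧
    ∀ j, ∑ i, π i j = 1 / Fintype.card ι

def transportValues (Φ : ι → ι → ℝ) : Set ℝ :=
  {v | ∃ π, IsUniformCoupling π ∧ v = ∑ i, ∑ j, π i j * Φ i j}

lemma IsUniformCoupling.sum_mul_sub_eq_zero {π : ι → ι → ℝ} (hπ : IsUniformCoupling π)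
    (u : ι → ℝ) : ∑ i, ∑ j, π i j * (u i - u j) = 0 := by
  have hrow : ∑ i, ∑ j, π i j * u i = ∑ i, 1 / Fintype.card ι * u i := by
    simp only [← Finset.sum_mul, hπ.2.1]
  have hcol : ∑ i, ∑ j, π i j * u j = ∑ j, 1 / Fintype.card ι * u j := by
    rw [Finset.sum_comm]
    simp only [← Finset.sum_mul, hπ.2.2]
  simp only [mul_sub, Finset.sum_sub_distrib, hrow, hcol, sub_self]

lemma IsUniformCoupling.le_one_div_card {π : ι → ι → ℝ} (hπ : IsUniformCoupling π) (i j : ι) :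
    π i j ≤ 1 / Fintype.card ι :=
  hπ.2.1 i ▸ Finset.single_le_sum (fun j _ ↦ hπ.1 i j) (Finset.mem_univ j)

lemma isUniformCoupling_div_of_sum_eq {B : ι → ι → ℝ} {c : ℝ} (hB : ∀ i j, 0 ≤ B i j)
    (hc : 0 < c) (hrow : ∀ i, ∑ j, B i j = c) (hcol : ∀ j, ∑ i, B i j = c) :
    IsUniformCoupling fun i j ↦ B i j / (c * Fintype.card ι) := by
  refine ⟨fun i j ↦ by have := hB i j; positivity, fun i ↦ ?_, fun j ↦ ?_⟩
  · rw [← Finset.sum_div, hrow, div_mul_cancel_left₀ hc.ne', one_div]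
  · rw [← Finset.sum_div, hcol, div_mul_cancel_left₀ hc.ne', one_div]

variable (Φ : ι → ι → ℝ)

lemma bddAbove_transportValues : BddAbove (transportValues Φ) := by
  refine ⟨∑ i, ∑ j, 1 / Fintype.card ι * |Φ i j|, ?_⟩
  rintro v ⟨π, hπ, rfl⟩
  refine Finset.sum_le_sum fun i _ ↦ Finset.sum_le_sum fun j _ ↦ ?_
  calc π i j * Φ i j ≤ π i j * |Φ i j| := by gcongr; exacts [hπ.1 i j, le_abs_self _]
    _ ≤ 1 / Fintype.card ι * |Φ i j| := by gcongr; exact hπ.le_one_div_card i j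

lemma zero_mem_transportValues [DecidableEq ι] (hΦ : ∀ i, Φ i i = 0) :
    0 ∈ transportValues Φ := by
  refine ⟨fun i j ↦ if i = j then 1 / Fintype.card ι else 0, ⟨fun i j ↦ by positivity,
    fun i ↦ by simp, fun j ↦ by simp⟩, ?_⟩
  simp [hΦ]

lemma transportValues_nonpos_of_potential {u : ι → ℝ} (hu : ∀ i j, Φ i j ≤ u i - u j) :
    ∀ v ∈ transportValues Φ, v ≤ 0 := by
  rintro v ⟨π, hπ, rfl⟩
  calc ∑ i, ∑ j, π i j * Φ i j ≤ ∑ i, ∑ j, π i j * (u i - u j) := by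
        gcongr with i _ j _
        exacts [hπ.1 i j, hu i j]
    _ = 0 := hπ.sum_mul_sub_eq_zero u

end Coupling

section CycleMatrix

variable {ι κ : Type*} [Fintype ι] [DecidableEq ι] [Fintype κ]

/-- Edge counts of the closed walk `k ↦ w k ↦ w (σ k)`, plus `#{k | w k ≠ i}` at `(i, i)` so that
every row and column sums to `card κ`. -/
def cycleMatrix (σ : Equiv.Perm κ) (w : κ → ι) (i j : ι) : ℝ :=
  ∑ k, ((if w k = i ∧ w (σ k) = j then 1 else 0) + if i = j ∧ w k ≠ i then 1 else 0)

variable (σ : Equiv.Perm κ) (w : κ → ι)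

omit [Fintype ι] in
lemma cycleMatrix_nonneg (i j : ι) : 0 ≤ cycleMatrix σ w i j := by
  unfold cycleMatrix
  positivity

lemma sum_cycleMatrix_row (i : ι) : ∑ j, cycleMatrix σ w i j = Fintype.card κ := by
  unfold cycleMatrix
  rw [Finset.sum_comm, Finset.card_univ.symm, Finset.cast_card]
  refine Finset.sum_congr rfl fun k _ ↦ ?_
  by_cases h : w k = i <;> simp [h]

lemma sum_cycleMatrix_col (j : ι) : ∑ i, cycleMatrix σ w i j = Fintype.card κ := by
  unfold cycleMatrix
  rw [Finset.sum_comm]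
  have hk : ∀ k, ∑ i, ((if w k = i ∧ w (σ k) = j then (1 : ℝ) else 0) +
      if i = j ∧ w k ≠ i then 1 else 0) =
      (if w (σ k) = j then 1 else 0) + if w k = j then 0 else 1 := fun k ↦ by
    by_cases h : w k = j <;> simp [h, eq_comm (a := j), Finset.sum_add_distrib, ite_and]
  simp only [hk, Finset.sum_add_distrib]
  rw [Equiv.sum_comp σ (fun k ↦ if w k = j then (1 : ℝ) else 0), ← Finset.sum_add_distrib,
    Finset.card_univ.symm, Finset.cast_card]
  refine Finset.sum_congr rfl fun k _ ↦ ?_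
  split_ifs <;> norm_num

lemma sum_cycleMatrix_mul {Φ : ι → ι → ℝ} (hΦ : ∀ i, Φ i i = 0) :
    ∑ i, ∑ j, cycleMatrix σ w i j * Φ i j = ∑ k, Φ (w k) (w (σ k)) := by
  unfold cycleMatrix
  simp only [Finset.sum_mul]
  rw [Finset.sum_congr rfl fun i _ ↦ Finset.sum_comm, Finset.sum_comm]
  refine Finset.sum_congr rfl fun k _ ↦ ?_
  simp [add_mul, ite_and, Finset.sum_add_distrib, hΦ]

end CycleMatrix

variable {ι : Type*} [Fintype ι] [DecidableEq ι] {Φ : ι → ι → ℝ}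

lemma sum_comp_perm_nonpos {κ : Type*} [Fintype κ] (hΦ : ∀ i, Φ i i = 0)
    (hW : ∀ v ∈ transportValues Φ, v ≤ 0) (σ : Equiv.Perm κ) (w : κ → ι) :
    ∑ k, Φ (w k) (w (σ k)) ≤ 0 := by
  cases isEmpty_or_nonempty κ with
  | inl _ => simp
  | inr _ =>
    have hκ : (0 : ℝ) < Fintype.card κ := by exact_mod_cast Fintype.card_pos
    have hι : (0 : ℝ) < Fintype.card ι :=
      Nat.cast_pos.2 (Fintype.card_pos_iff.2 ⟨w (Classical.arbitrary κ)⟩)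
    have hmem : (∑ k, Φ (w k) (w (σ k))) / (Fintype.card κ * Fintype.card ι) ∈
        transportValues Φ := by
      refine ⟨_, isUniformCoupling_div_of_sum_eq (cycleMatrix_nonneg σ w) hκ
        (sum_cycleMatrix_row σ w) (sum_cycleMatrix_col σ w), ?_⟩
      simp only [← sum_cycleMatrix_mul σ w hΦ, Finset.sum_div, div_mul_eq_mul_div]
    have := hW _ hmem
    rwa [div_le_iff₀ (by positivity), zero_mul] at this

theorem sSup_transportValues_eq_zero_iff (hΦ : ∀ i, Φ i i = 0) :
    sSup (transportValues Φ) = 0 ↔ ∃ u : ι → ℝ, ∀ i j, Φ i j ≤ u i - u j := by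
  have h0 := zero_mem_transportValues Φ hΦ
  constructor
  · intro hsup
    have hW : ∀ v ∈ transportValues Φ, v ≤ 0 :=
      fun v hv ↦ hsup ▸ le_csSup (bddAbove_transportValues Φ) hv
    exact exists_potential_of_sum_finRotate_nonpos fun m w ↦
      sum_comp_perm_nonpos hΦ hW (finRotate _) w
  · rintro ⟨u, hu⟩
    exact IsGreatest.csSup_eq ⟨h0, transportValues_nonpos_of_potential Φ hu⟩

end Afriat

theorem afriat_transport_value_zero_iff_general
    (n d : ℕ) (x p : Fin n → Fin d → ℝ)
    (lam : Fin n → ℝ) :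
    sSup {v : ℝ | ∃ π : Fin n → Fin n → ℝ,
        (∀ i j, 0 ≤ π i j) ∧
        (∀ i, ∑ j, π i j = 1 / n) ∧
        (∀ j, ∑ i, π i j = 1 / n) ∧
        v = ∑ i, ∑ j, π i j * (lam i * ∑ k, p i k * (x i k - x j k))} = 0 ↔
      ∃ u : Fin n → ℝ, ∀ i j, lam i * ∑ k, p i k * (x i k - x j k) ≤ u i - u j := by
  have key := Afriat.sSup_transportValues_eq_zero_iff
    (Φ := fun i j ↦ lam i * ∑ k, p i k * (x i k - x j k)) fun i ↦ by simp
  simpa only [Afriat.transportValues, Afriat.IsUniformCoupling, Fintype.card_fin, and_assoc] using key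

/-- Characterization of the zero Afriat transport value: with
`Φ^λ_{ij} = λ_i ⟨p_i, x_i − x_j⟩` and `W(λ)` the maximum of `Σ_{ij} π_{ij} Φ^λ_{ij}` over
nonnegative matrices `π` with all row and column sums equal to `1/n`, one has `W(λ) = 0`
if and only if Afriat's inequalities `u_i − u_j ≥ λ_i ⟨p_i, x_i − x_j⟩` admit a solution
`u ∈ ℝ^n`. -/
theorem afriat_transport_value_zero_iff
    (n d : ℕ) (x p : Fin n → Fin d → ℝ)
    (lam : Fin n → ℝ) (hlam0 : ∀ i, 0 ≤ lam i) (hlam1 : ∑ i, lam i = 1) :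
    sSup {v : ℝ | ∃ π : Fin n → Fin n → ℝ,
        (∀ i j, 0 ≤ π i j) ∧
        (∀ i, ∑ j, π i j = 1 / n) ∧
        (∀ j, ∑ i, π i j = 1 / n) ∧
        v = ∑ i, ∑ j, π i j * (lam i * ∑ k, p i k * (x i k - x j k))} = 0 ↔
      ∃ u : Fin n → ℝ, ∀ i j, lam i * ∑ k, p i k * (x i k - x j k) ≤ u i - u j :=
  afriat_transport_value_zero_iff_general n d x p lam
end
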